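/- arXiv:2503.01826 — 7 statements merged into one kernel-verified Lean document; each statement's English description precedes it below -/
import Mathlib

section
/- Let G be a graph on n vertices with minimum degree at least n/2 + 1. Then G is Hamilton-connected: for any two distinct vertices a and b of G, there exists a Hamiltonian path in G from a to b. -/
open List Finset

/-- Build a walk from a chain list. -/
lemma walk_of_chain {V : Type*} (G : SimpleGraph V) :
    ∀ (l : List V) (hne : l ≠ []) (_ : l.IsChain G.Adj),
    ∃ p : G.Walk (l.head hne) (l.getLast hne), p.support = l
  | [], hne, _ => absurd rfl hne
  | [x], _, _ => ⟨SimpleGraph.Walk.nil, rfl⟩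
  | x :: y :: t, _, hc => by
      obtain ⟨hxy, hc'⟩ := List.isChain_cons_cons.1 hc
      obtain ⟨p, hp⟩ := walk_of_chain G (y :: t) (by simp) hc'
      refine ⟨(SimpleGraph.Walk.cons hxy (p.copy rfl (List.getLast_cons_cons ..).symm)), ?_⟩
      exact congrArg (List.cons x) ((SimpleGraph.Walk.support_copy ..).trans hp)

lemma exists_map_some {V : Type*} :
    ∀ (t : List (Option V)), (∀ x ∈ t, x ≠ none) → ∃ s : List V, t = s.map some
  | [], _ => ⟨[], rfl⟩
  | x :: t, h => by
      obtain ⟨s, hs⟩ := exists_map_some t (fun y hy => h y (List.mem_cons_of_mem _ hy))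
      match x, h x (List.mem_cons_self ..) with
      | some v, _ => exact ⟨v :: s, by simp [hs]⟩

lemma head_ne_getLast {α : Type*} {l : List α} (h : l.Nodup) (h2 : 2 ≤ l.length)
    (hne : l ≠ []) : l.head hne ≠ l.getLast hne := by
  match l, h2 with
  | x :: y :: t, _ =>
    simp only [List.head_cons, List.getLast_cons_cons]
    intro hx
    have hm : x ∈ y :: t := hx ▸ List.getLast_mem (by simp)
    simp only [List.nodup_cons] at h
    exact h.1 hm

lemma rotate_cyclic {α : Type*} {R : α → α → Prop} {l : List α}
    (hc : l.IsChain R) (hcyc : ∀ x ∈ l.getLast?, ∀ y ∈ l.head?, R x y) {z : α} (hz : z ∈ l) :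
    ∃ l' : List α, l' ~ l ∧ l'.IsChain R ∧
      (∀ x ∈ l'.getLast?, ∀ y ∈ l'.head?, R x y) ∧ l'.head? = some z := by
  obtain ⟨l1, l2, rfl⟩ := List.append_of_mem hz
  rcases eq_or_ne l1 [] with rfl | hl1
  · exact ⟨z :: l2, by simp, hc, hcyc, rfl⟩
  refine ⟨z :: l2 ++ l1, List.perm_append_comm, ?_, ?_, by simp⟩
  · rw [List.isChain_append] at hc ⊢
    refine ⟨hc.2.1, hc.1, ?_⟩
    intro x hx y hy
    refine hcyc x ?_ y ?_
    · rwa [List.getLast?_append_of_ne_nil l1 (by simp)]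
    · rwa [List.head?_append_of_ne_nil _ hl1]
  · intro x hx y hy
    rw [List.getLast?_append_of_ne_nil _ hl1] at hx
    simp only [List.head?_append_of_ne_nil _ (List.cons_ne_nil z l2), List.head?_cons,
      Option.mem_def, Option.some.injEq] at hy
    subst hy
    rw [List.isChain_append] at hc
    exact hc.2.2 x hx z (by simp)

lemma fix_w_head {α : Type*} [DecidableEq α] {R : α → α → Prop} (hR : Symmetric R) {w a b : α}
    {rest : List α}
    (hab : a ≠ b) (haw : a ≠ w) (hbw : b ≠ w) (hwb : R w b) (hwa : R w a)
    (hnd : (w :: rest).Nodup) (hc : (w :: rest).IsChain R)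
    (ha : a ∈ w :: rest) (hb : b ∈ w :: rest) (hrest : rest ≠ []) :
    ∃ l' : List α, l' ~ w :: rest ∧ l'.IsChain R ∧
      (∀ x ∈ l'.head?, x ≠ w) ∧ (∀ x ∈ l'.getLast?, x ≠ w) := by
  have hwrest : w ∉ rest := (List.nodup_cons.1 hnd).1
  have hcrest : rest.IsChain R := hc.tail
  obtain ⟨hwhd, -⟩ := List.isChain_cons.1 hc
  set c := rest.head hrest with hcdef
  have hwc : R w c := hwhd c (by rw [List.head?_eq_head hrest]; rfl)
  have ha' : a ∈ rest := by
    rcases List.mem_cons.1 ha with h | h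
    · exact absurd h haw
    · exact h
  have hb' : b ∈ rest := by
    rcases List.mem_cons.1 hb with h | h
    · exact absurd h hbw
    · exact h
  set d := if c = a then b else a with hddef
  have hd : d ∈ rest := by rw [hddef]; split <;> assumption
  have hdw : d ≠ w := by rw [hddef]; split <;> assumption
  have hdc : d ≠ c := by
    rw [hddef]; split
    · rename_i h; rw [h]; exact hab.symm
    · rename_i h; exact fun hh => h hh.symm
  have hwd : R w d := by rw [hddef]; split <;> assumption
  obtain ⟨r1, r2, hr⟩ := List.append_of_mem hd
  have hr1 : r1 ≠ [] := by
    rintro rfl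
    simp only [List.nil_append] at hr
    apply hdc
    have h1 : rest.head? = some d := by rw [hr]; rfl
    rw [List.head?_eq_head hrest] at h1
    exact (Option.some_inj.1 h1).symm
  have hchain1 : r1.IsChain R ∧ (d :: r2).IsChain R ∧ ∀ x ∈ r1.getLast?, ∀ y ∈ (d :: r2 : List α).head?, R x y := by
    rw [← List.isChain_append, ← hr]; exact hcrest
  refine ⟨r1.reverse ++ (w :: d :: r2), ?_, ?_, ?_, ?_⟩
  · calc r1.reverse ++ (w :: d :: r2) ~ r1 ++ (w :: d :: r2) := (List.reverse_perm r1).append_right _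
    _ ~ w :: (r1 ++ d :: r2) := List.perm_middle
    _ = w :: rest := by rw [← hr]
  · rw [List.isChain_append]
    refine ⟨?_, ?_, ?_⟩
    · rw [List.isChain_reverse]; exact hchain1.1.imp fun x y h => hR h
    · exact List.isChain_cons_cons.2 ⟨hwd, hchain1.2.1⟩
    · intro x hx y hy
      rw [List.getLast?_reverse] at hx
      simp only [List.head?_cons, Option.mem_def, Option.some.injEq] at hy
      subst hy
      have hrh : r1.head? = some c := by
        rw [← List.head?_append_of_ne_nil (l₂ := d :: r2) r1 hr1, ← hr,
          List.head?_eq_head hrest]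
      rw [hrh] at hx
      have : x = c := Option.some_inj.1 hx.symm
      subst this; exact hR hwc
  · intro x hx
    rw [List.head?_append_of_ne_nil _ (by simp [hr1]), List.head?_reverse] at hx
    have : x ∈ r1 := List.mem_of_mem_getLast? hx
    intro hxw
    exact hwrest (by rw [hr]; exact List.mem_append_left _ (hxw ▸ this))
  · intro x hx
    rw [List.getLast?_append_of_ne_nil _ (by simp), List.getLast?_cons_cons] at hx
    have : x ∈ d :: r2 := List.mem_of_mem_getLast? hx
    intro hxw
    exact hwrest (by rw [hr]; exact List.mem_append_right _ (hxw ▸ this))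

lemma cardA {α : Type*} [Fintype α] [DecidableEq α] {R : α → α → Prop} [DecidableRel R]
    (hirr : Irreflexive R) {l : List α} (hnd : l.Nodup) (hne : l ≠ [])
    (hnb : ∀ y, R (l.head hne) y → y ∈ l) :
    ((Finset.range (l.length - 1)).filter
        (fun i => R (l.head hne) (l.getD (i+1) (l.head hne)))).card
      = (Finset.univ.filter (fun x => R (l.head hne) x)).card := by
  set p := l.head hne with hp
  have hL : 0 < l.length := List.length_pos_iff.2 hne
  refine Finset.card_bij (fun i _ => l.getD (i+1) p) ?_ ?_ ?_
  · intro i hi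
    simp only [Finset.mem_filter, Finset.mem_range] at hi ⊢
    exact ⟨Finset.mem_univ _, hi.2⟩
  · intro i1 h1 i2 h2 heq
    simp only [Finset.mem_filter, Finset.mem_range] at h1 h2
    have b1 : i1 + 1 < l.length := by omega
    have b2 : i2 + 1 < l.length := by omega
    have heq' : l.getD (i1+1) p = l.getD (i2+1) p := heq
    rw [List.getD_eq_getElem l p b1, List.getD_eq_getElem l p b2] at heq'
    have := (hnd.getElem_inj_iff).1 heq'
    omega
  · intro x hx
    simp only [Finset.mem_filter, Finset.mem_univ, true_and] at hx
    obtain ⟨j, hj, hjx⟩ := List.getElem_of_mem (hnb x hx)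
    have hj0 : j ≠ 0 := by
      rintro rfl
      rw [← List.head_eq_getElem hne, ← hp] at hjx
      exact hirr p (hjx ▸ hx)
    refine ⟨j - 1, ?_, ?_⟩
    · simp only [Finset.mem_filter, Finset.mem_range]
      constructor
      · omega
      · have hj1 : j - 1 + 1 = j := by omega
        rw [hj1, List.getD_eq_getElem l p hj]
        exact hjx ▸ hx
    · show l.getD (j - 1 + 1) p = x
      have hj1 : j - 1 + 1 = j := by omega
      rw [hj1, List.getD_eq_getElem l p hj]
      exact hjx

lemma cardB {α : Type*} [Fintype α] [DecidableEq α] {R : α → α → Prop} [DecidableRel R]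
    (hirr : Irreflexive R) {l : List α} (hnd : l.Nodup) (hne : l ≠ [])
    (hnb : ∀ y, R (l.getLast hne) y → y ∈ l) :
    ((Finset.range (l.length - 1)).filter
        (fun i => R (l.getLast hne) (l.getD i (l.getLast hne)))).card
      = (Finset.univ.filter (fun x => R (l.getLast hne) x)).card := by
  set q := l.getLast hne with hq
  have hL : 0 < l.length := List.length_pos_iff.2 hne
  refine Finset.card_bij (fun i _ => l.getD i q) ?_ ?_ ?_
  · intro i hi
    simp only [Finset.mem_filter, Finset.mem_range] at hi ⊢
    exact ⟨Finset.mem_univ _, hi.2⟩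
  · intro i1 h1 i2 h2 heq
    simp only [Finset.mem_filter, Finset.mem_range] at h1 h2
    have b1 : i1 < l.length := by omega
    have b2 : i2 < l.length := by omega
    have heq' : l.getD i1 q = l.getD i2 q := heq
    rw [List.getD_eq_getElem l q b1, List.getD_eq_getElem l q b2] at heq'
    exact (hnd.getElem_inj_iff).1 heq'
  · intro x hx
    simp only [Finset.mem_filter, Finset.mem_univ, true_and] at hx
    obtain ⟨j, hj, hjx⟩ := List.getElem_of_mem (hnb x hx)
    have hjL : j ≠ l.length - 1 := by
      rintro rfl
      rw [← List.getLast_eq_getElem hne, ← hq] at hjx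
      exact hirr q (hjx ▸ hx)
    refine ⟨j, ?_, ?_⟩
    · simp only [Finset.mem_filter, Finset.mem_range]
      exact ⟨by omega, by rw [List.getD_eq_getElem l q hj]; exact hjx ▸ hx⟩
    · show l.getD j q = x
      rw [List.getD_eq_getElem l q hj]; exact hjx

theorem cyclic_ham {α : Type*} [Fintype α] [DecidableEq α] {R : α → α → Prop} [DecidableRel R]
    (hR : Symmetric R) (hirr : Irreflexive R) {w a b : α} (hab : a ≠ b)
    (hwa : R w a) (hwb : R w b)
    (hdeg : ∀ u : α, u ≠ w →
      Fintype.card α + 1 ≤ 2 * (Finset.univ.filter (fun x => R u x)).card) :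
    ∃ l : List α, l.Nodup ∧ l.IsChain R ∧
      (∀ x ∈ l.getLast?, ∀ y ∈ l.head?, R x y) ∧ ∀ v : α, v ∈ l := by
  classical
  set m := Fintype.card α with hm
  have haw : a ≠ w := fun h => hirr w (h ▸ hwa)
  have hbw : b ≠ w := fun h => hirr w (h ▸ hwb)
  set S : Set (List α) := {l | l ≠ [] ∧ l.Nodup ∧ l.IsChain R} with hSdef
  have hSfin : S.Finite :=
    Set.Finite.subset (List.finite_length_le α m) (fun l hl => hl.2.1.length_le_card)
  have hSne : S.Nonempty := ⟨[w], by simp, by simp, by simp⟩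
  obtain ⟨l0, hl0S, hmax⟩ := Set.exists_max_image S List.length hSfin hSne
  have ext_head : ∀ l, l ∈ S → l0.length ≤ l.length → ∀ x ∈ l.head?, ∀ y, R y x → y ∈ l := by
    intro l hlS hlen x hx y hy
    by_contra hyl
    have hmem : (y :: l) ∈ S := by
      refine ⟨List.cons_ne_nil _ _, List.nodup_cons.2 ⟨hyl, hlS.2.1⟩, List.isChain_cons.2 ⟨?_, hlS.2.2⟩⟩
      intro z hz
      rw [Option.mem_def, hx] at hz
      obtain rfl := Option.some_inj.1 hz
      exact hy
    have := hmax _ hmem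
    simp only [List.length_cons] at this
    omega
  have ext_last : ∀ l, l ∈ S → l0.length ≤ l.length → ∀ x ∈ l.getLast?, ∀ y, R y x → y ∈ l := by
    intro l hlS hlen x hx y hy
    by_contra hyl
    have hmem : (l ++ [y]) ∈ S := by
      refine ⟨by simp, ?_, ?_⟩
      · rw [List.nodup_append]
        exact ⟨hlS.2.1, List.nodup_singleton y, by simpa using fun a ha (h : a = y) => hyl (h ▸ ha)⟩
      · rw [List.isChain_append]
        refine ⟨hlS.2.2, List.isChain_singleton y, ?_⟩
        intro x' hx' y' hy'
        rw [Option.mem_def, hx] at hx'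
        obtain rfl := Option.some_inj.1 hx'
        simp only [List.head?_cons, Option.mem_def, Option.some.injEq] at hy'
        subst hy'
        exact hR hy
    have := hmax _ hmem
    simp only [List.length_append, List.length_singleton] at this
    omega
  have hmne : l0 ≠ [] := hl0S.1
  have hL2 : 2 ≤ l0.length := by
    by_contra h
    have h1 : l0.length = 1 := by
      have := List.length_pos_iff.2 hmne; omega
    obtain ⟨x, rfl⟩ := List.length_eq_one_iff.1 h1
    obtain ⟨y, hyx, hyne⟩ : ∃ y, R y x ∧ y ≠ x := by
      rcases eq_or_ne x w with rfl | hxw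
      · exact ⟨a, hR hwa, haw⟩
      · have := hdeg x hxw
        have hpos : 0 < (Finset.univ.filter (fun z => R x z)).card := by omega
        obtain ⟨y, hy⟩ := Finset.card_pos.1 hpos
        simp only [Finset.mem_filter] at hy
        exact ⟨y, hR hy.2, fun h' => hirr x (h' ▸ hy.2)⟩
    have hmem : ([y, x] : List α) ∈ S := ⟨by simp, by simp [hyne], by simp [hyx]⟩
    have := hmax _ hmem
    simp only [List.length_cons, List.length_singleton] at this
    omega
  have fixhead : ∀ l, l ∈ S → l0.length ≤ l.length → l.head? = some w →
      ∃ l', l' ∈ S ∧ l'.length = l.length ∧ (∀ x ∈ l'.head?, x ≠ w) ∧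
        (∀ x ∈ l'.getLast?, x ≠ w) := by
    intro l hlS hlen hhd
    have hne : l ≠ [] := hlS.1
    have hw0 : l.head hne = w := by
      rw [List.head?_eq_head hne] at hhd; exact Option.some_inj.1 hhd
    have hdecomp : l = w :: l.tail := by
      rw [← hw0]; exact (List.cons_head_tail hne).symm
    have htail_ne : l.tail ≠ [] := by
      intro h
      have h2 := congrArg List.length hdecomp
      rw [h] at h2
      simp only [List.length_cons, List.length_nil] at h2
      omega
    have ha_mem : a ∈ l := ext_head l hlS hlen w hhd a (hR hwa)
    have hb_mem : b ∈ l := ext_head l hlS hlen w hhd b (hR hwb)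
    obtain ⟨l', hperm, hchain, hhh, hll⟩ :=
      fix_w_head hR hab haw hbw hwb hwa (hdecomp ▸ hlS.2.1) (hdecomp ▸ hlS.2.2)
        (hdecomp ▸ ha_mem) (hdecomp ▸ hb_mem) htail_ne
    have hperm' : l' ~ l := hperm.trans (by rw [← hdecomp])
    refine ⟨l', ⟨?_, hperm'.nodup_iff.2 hlS.2.1, hchain⟩, hperm'.length_eq, hhh, hll⟩
    intro h
    rw [h] at hperm'
    exact hne (hperm'.symm.eq_nil)
  obtain ⟨l, hlS, hlen, hh, hl⟩ :
      ∃ l, l ∈ S ∧ l.length = l0.length ∧ (∀ x ∈ l.head?, x ≠ w) ∧ (∀ x ∈ l.getLast?, x ≠ w) := by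
    by_cases h1 : l0.head? = some w
    · obtain ⟨l', h⟩ := fixhead l0 hl0S le_rfl h1
      exact ⟨l', h.1, h.2.1, h.2.2⟩
    · by_cases h2 : l0.getLast? = some w
      · have hrev : l0.reverse ∈ S := by
          refine ⟨by simp [hmne], by simp [hl0S.2.1], ?_⟩
          rw [List.isChain_reverse]
          exact hl0S.2.2.imp fun x y h => hR h
        have hrevhd : l0.reverse.head? = some w := by rw [List.head?_reverse]; exact h2
        obtain ⟨l', hS', hlen', hh', hl'⟩ := fixhead l0.reverse hrev (by simp) hrevhd
        exact ⟨l', hS', by simpa using hlen', hh', hl'⟩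
      · refine ⟨l0, hl0S, rfl, ?_, ?_⟩
        · intro x hx hxw
          rw [hxw] at hx
          exact h1 hx
        · intro x hx hxw
          rw [hxw] at hx
          exact h2 hx
  clear fixhead
  have hne : l ≠ [] := hlS.1
  have hnd : l.Nodup := hlS.2.1
  have hch : l.IsChain R := hlS.2.2
  have hL2' : 2 ≤ l.length := by omega
  have hpw' : l.head hne ≠ w := hh _ (List.head?_eq_head hne)
  have hqw' : l.getLast hne ≠ w := hl _ (List.getLast?_eq_getLast hne)
  have hmaxlen : ∀ l', l' ∈ S → l'.length ≤ l.length := by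
    intro l' h'; rw [hlen]; exact hmax l' h'
  have hnbp : ∀ y, R (l.head hne) y → y ∈ l :=
    fun y hy => ext_head l hlS hlen.ge _ (List.head?_eq_head hne) y (hR hy)
  have hnbq : ∀ y, R (l.getLast hne) y → y ∈ l :=
    fun y hy => ext_last l hlS hlen.ge _ (List.getLast?_eq_getLast hne) y (hR hy)
  have hA := cardA hirr hnd hne hnbp
  have hB := cardB hirr hnd hne hnbq
  have hdp : m + 1 ≤ 2 * ((Finset.range (l.length - 1)).filter
      (fun i => R (l.head hne) (l.getD (i+1) (l.head hne)))).card := by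
    rw [hA]; exact hdeg _ hpw'
  have hdq : m + 1 ≤ 2 * ((Finset.range (l.length - 1)).filter
      (fun i => R (l.getLast hne) (l.getD i (l.getLast hne)))).card := by
    rw [hB]; exact hdeg _ hqw'
  have hLm : l.length ≤ m := hnd.length_le_card
  have hABcard : 0 < (((Finset.range (l.length - 1)).filter
        (fun i => R (l.head hne) (l.getD (i+1) (l.head hne)))) ∩
      ((Finset.range (l.length - 1)).filter
        (fun i => R (l.getLast hne) (l.getD i (l.getLast hne))))).card := by
    have h1 : (((Finset.range (l.length - 1)).filter
        (fun i => R (l.head hne) (l.getD (i+1) (l.head hne)))) ∪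
      ((Finset.range (l.length - 1)).filter
        (fun i => R (l.getLast hne) (l.getD i (l.getLast hne))))).card ≤ l.length - 1 := by
      have hsub := Finset.union_subset (Finset.filter_subset
        (fun i => R (l.head hne) (l.getD (i+1) (l.head hne))) (Finset.range (l.length - 1)))
        (Finset.filter_subset
          (fun i => R (l.getLast hne) (l.getD i (l.getLast hne))) (Finset.range (l.length - 1)))
      simpa using Finset.card_le_card hsub
    have h2 := Finset.card_union_add_card_inter
      ((Finset.range (l.length - 1)).filter
        (fun i => R (l.head hne) (l.getD (i+1) (l.head hne))))
      ((Finset.range (l.length - 1)).filter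
        (fun i => R (l.getLast hne) (l.getD i (l.getLast hne))))
    omega
  obtain ⟨i, hi⟩ := Finset.card_pos.1 hABcard
  rw [Finset.mem_inter, Finset.mem_filter, Finset.mem_filter, Finset.mem_range] at hi
  obtain ⟨⟨hiL, hiA2⟩, -, hiB2⟩ := hi
  have hi1 : i + 1 < l.length := by omega
  have hi0 : i < l.length := by omega
  have hRp : R (l.head hne) (l[i+1]'hi1) := by
    rw [← List.getD_eq_getElem l (l.head hne) hi1]; exact hiA2
  have hRq : R (l.getLast hne) (l[i]'hi0) := by
    rw [← List.getD_eq_getElem l (l.getLast hne) hi0]; exact hiB2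
  set c := l.take (i+1) ++ (l.drop (i+1)).reverse with hcdef
  have hcperm : c ~ l := by
    calc c ~ l.take (i+1) ++ l.drop (i+1) := List.Perm.append_left _ (List.reverse_perm _)
    _ = l := List.take_append_drop _ _
  have hcnd : c.Nodup := hcperm.nodup_iff.2 hnd
  have hclen : c.length = l.length := hcperm.length_eq
  have htne : l.take (i+1) ≠ [] := List.ne_nil_of_length_pos (by rw [List.length_take]; omega)
  have hdne : l.drop (i+1) ≠ [] := List.ne_nil_of_length_pos (by rw [List.length_drop]; omega)
  have hheadc : c.head? = some (l.head hne) := by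
    rw [hcdef, List.head?_append_of_ne_nil _ htne, List.head?_eq_getElem?, List.getElem?_take,
      if_pos (by omega : 0 < i + 1), List.getElem?_eq_getElem (by omega : 0 < l.length),
      List.head_eq_getElem]
  have hlastc : c.getLast? = some (l[i+1]'hi1) := by
    rw [hcdef, List.getLast?_append_of_ne_nil _ (by simp [hdne]), List.getLast?_reverse,
      List.head?_drop, List.getElem?_eq_getElem hi1]
  have hlast_take : (l.take (i+1)).getLast? = some (l[i]'hi0) := by
    rw [List.getLast?_eq_getElem?, List.length_take]
    have hmin : min (i+1) l.length - 1 = i := by omega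
    rw [hmin, List.getElem?_take, if_pos (by omega : i < i + 1), List.getElem?_eq_getElem hi0]
  have hhead_dropr : ((l.drop (i+1)).reverse).head? = some (l.getLast hne) := by
    rw [List.head?_reverse, List.getLast?_eq_getElem?, List.length_drop, List.getElem?_drop]
    have harith : i + 1 + (l.length - (i+1) - 1) = l.length - 1 := by omega
    rw [harith, List.getElem?_eq_getElem (by omega : l.length - 1 < l.length),
      List.getLast_eq_getElem]
  have hchc : c.IsChain R := by
    rw [hcdef, List.isChain_append]
    refine ⟨hch.take _, ?_, ?_⟩
    · rw [List.isChain_reverse]; exact (hch.drop _).imp fun x y h => hR h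
    · intro x hx y hy
      rw [Option.mem_def, hlast_take] at hx
      rw [Option.mem_def, hhead_dropr] at hy
      obtain rfl := Option.some_inj.1 hx
      obtain rfl := Option.some_inj.1 hy
      exact hR hRq
  have hcyc : ∀ x ∈ c.getLast?, ∀ y ∈ c.head?, R x y := by
    intro x hx y hy
    rw [Option.mem_def, hlastc] at hx
    rw [Option.mem_def, hheadc] at hy
    obtain rfl := Option.some_inj.1 hx
    obtain rfl := Option.some_inj.1 hy
    exact hR hRp
  have hpc : l.head hne ∈ c := hcperm.mem_iff.2 (List.head_mem hne)
  have hcov : ∀ v : α, v ∈ c := by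
    by_contra hcontra
    push_neg at hcontra
    obtain ⟨y0, hy0⟩ := hcontra
    have comm : ∀ u v : α, u ≠ w → v ≠ w → ∃ t, R u t ∧ R v t := by
      intro u v hu hv
      have h1 := hdeg u hu
      have h2 := hdeg v hv
      have hcup : ((Finset.univ.filter (fun x => R u x)) ∪
          (Finset.univ.filter (fun x => R v x))).card ≤ m := Finset.card_le_univ _
      have h3 := Finset.card_union_add_card_inter
        (Finset.univ.filter (fun x => R u x)) (Finset.univ.filter (fun x => R v x))
      obtain ⟨t, ht⟩ := Finset.card_pos.1 (by omega : 0 < ((Finset.univ.filter (fun x => R u x)) ∩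
          (Finset.univ.filter (fun x => R v x))).card)
      simp only [Finset.mem_inter, Finset.mem_filter] at ht
      exact ⟨t, ht.1.2, ht.2.2⟩
    have hfind : ∃ y z, y ∉ c ∧ z ∈ c ∧ R y z := by
      rcases eq_or_ne y0 w with rfl | hy0w
      · by_cases hac : a ∈ c
        · exact ⟨y0, a, hy0, hac, hwa⟩
        · obtain ⟨t, hta, htp⟩ := comm a (l.head hne) haw hpw'
          by_cases htc : t ∈ c
          · exact ⟨a, t, hac, htc, hta⟩
          · exact ⟨t, _, htc, hpc, hR htp⟩
      · obtain ⟨t, ht0, htp⟩ := comm y0 (l.head hne) hy0w hpw'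
        by_cases htc : t ∈ c
        · exact ⟨y0, t, hy0, htc, ht0⟩
        · exact ⟨t, _, htc, hpc, hR htp⟩
    obtain ⟨y, z, hyc, hzc, hyz⟩ := hfind
    obtain ⟨c', hc'perm, hc'chain, hc'cyc, hc'head⟩ := rotate_cyclic hchc hcyc hzc
    have hmem : (y :: c') ∈ S := by
      refine ⟨List.cons_ne_nil _ _, List.nodup_cons.2 ⟨?_, hc'perm.nodup_iff.2 hcnd⟩,
        List.isChain_cons.2 ⟨?_, hc'chain⟩⟩
      · intro h'
        exact hyc (hc'perm.mem_iff.1 h')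
      · intro z' hz'
        rw [Option.mem_def, hc'head] at hz'
        obtain rfl := Option.some_inj.1 hz'
        exact hyz
    have hle := hmaxlen _ hmem
    have hlc' : c'.length = l.length := by rw [hc'perm.length_eq, hclen]
    simp only [List.length_cons] at hle
    omega
  exact ⟨c, hcnd, hchc, hcyc, hcov⟩

def OptRel {V : Type*} (G : SimpleGraph V) (a b : V) : Option V → Option V → Prop
  | some x, some y => G.Adj x y
  | some x, none => x = a ∨ x = b
  | none, some y => y = a ∨ y = b
  | none, none => False

instance {V : Type*} [DecidableEq V] (G : SimpleGraph V) [DecidableRel G.Adj] (a b : V) :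
    DecidableRel (OptRel G a b) := fun u v =>
  match u, v with
  | some x, some y => (inferInstance : Decidable (G.Adj x y))
  | some x, none => (inferInstance : Decidable (x = a ∨ x = b))
  | none, some y => (inferInstance : Decidable (y = a ∨ y = b))
  | none, none => (inferInstance : Decidable False)

lemma optRel_symm {V : Type*} (G : SimpleGraph V) (a b : V) : Symmetric (OptRel G a b) := by
  intro u v h
  match u, v with
  | some x, some y => exact (h : G.Adj x y).symm
  | some x, none => exact h
  | none, some y => exact h
  | none, none => exact h

lemma optRel_irrefl {V : Type*} (G : SimpleGraph V) (a b : V) : Irreflexive (OptRel G a b) := by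
  intro u h
  match u with
  | some x => exact G.loopless.irrefl x h
  | none => exact h

lemma optRel_none_left {V : Type*} (G : SimpleGraph V) (a b : V) (u : Option V)
    (h : OptRel G a b u none) : u = some a ∨ u = some b := by
  match u with
  | some x => rcases (h : x = a ∨ x = b) with h' | h' <;> [left; right] <;> rw [h']
  | none => exact absurd h (by intro h'; exact h')

/-- **Hamilton-connectivity of Dirac-plus-one graphs.**
If `G` is a graph on `n` vertices with minimum degree at least `n/2 + 1`,
then for any two distinct vertices `a, b` there is a Hamiltonian path from `a` to `b`. -/
theorem hamilton_connected_of_min_degree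
    {V : Type*} [Fintype V] [DecidableEq V] (G : SimpleGraph V) [DecidableRel G.Adj]
    (hdeg : (Fintype.card V : ℝ) / 2 + 1 ≤ G.minDegree)
    (a b : V) (hab : a ≠ b) :
    ∃ p : G.Walk a b, p.IsHamiltonian := by
  classical
  have hdeg' : ∀ v : V, Fintype.card V + 2 ≤ 2 * G.degree v := by
    intro v
    have h1 : (Fintype.card V : ℝ) + 2 ≤ 2 * G.minDegree := by linarith
    have h2 : Fintype.card V + 2 ≤ 2 * G.minDegree := by exact_mod_cast h1
    have := G.minDegree_le_degree v
    omega
  have hdegopt : ∀ u : Option V, u ≠ none →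
      Fintype.card (Option V) + 1 ≤ 2 * (Finset.univ.filter (fun x => OptRel G a b u x)).card := by
    intro u hu
    obtain ⟨x, rfl⟩ := Option.ne_none_iff_exists'.1 hu
    have hsub : (G.neighborFinset x).image some ⊆
        Finset.univ.filter (fun y => OptRel G a b (some x) y) := by
      intro y hy
      simp only [Finset.mem_image, SimpleGraph.mem_neighborFinset] at hy
      obtain ⟨z, hz, rfl⟩ := hy
      exact Finset.mem_filter.2 ⟨Finset.mem_univ _, hz⟩
    have hcard := Finset.card_le_card hsub
    have hdx := hdeg' x
    have hd2 : G.degree x ≤ (Finset.univ.filter (fun y => OptRel G a b (some x) y)).card := by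
      rw [← SimpleGraph.card_neighborFinset_eq_degree,
        ← Finset.card_image_of_injective (G.neighborFinset x) (Option.some_injective V)]
      exact hcard
    rw [Fintype.card_option]
    omega
  obtain ⟨l, hnd, hch, hcyc, hcov⟩ := cyclic_ham (optRel_symm G a b) (optRel_irrefl G a b)
    (w := (none : Option V)) (a := some a) (b := some b) (by simpa using hab)
    (Or.inl rfl) (Or.inr rfl) hdegopt
  have hnone_mem : (none : Option V) ∈ l := hcov none
  obtain ⟨l', hperm, hch', hcyc', hhead⟩ := rotate_cyclic hch hcyc hnone_mem
  obtain ⟨t, rfl⟩ : ∃ t, l' = none :: t := by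
    cases l' with
    | nil => simp at hhead
    | cons u t =>
      simp only [List.head?_cons, Option.some.injEq] at hhead
      exact ⟨t, by rw [hhead]⟩
  have hnd' : (none :: t).Nodup := hperm.nodup_iff.2 hnd
  have hnone_t : (none : Option V) ∉ t := (List.nodup_cons.1 hnd').1
  have hcov' : ∀ x : V, some x ∈ t := by
    intro x
    have hx := hperm.mem_iff.2 (hcov (some x))
    rcases List.mem_cons.1 hx with h | h
    · exact absurd h (by simp)
    · exact h
  have ht_ne : t ≠ [] := by rintro rfl; simpa using hcov' a
  have hch_t : t.IsChain (OptRel G a b) := hch'.tail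
  have hnd_t : t.Nodup := (List.nodup_cons.1 hnd').2
  have hn2 : 2 ≤ Fintype.card V := Fintype.one_lt_card_iff_nontrivial.2 ⟨a, b, hab⟩
  have hlen_t : 2 ≤ t.length := by
    have h1 : (Finset.univ.image (some : V → Option V)) ⊆ t.toFinset := by
      intro y hy
      simp only [Finset.mem_image, Finset.mem_univ, true_and] at hy
      obtain ⟨x, rfl⟩ := hy
      simpa using hcov' x
    have h2 := Finset.card_le_card h1
    rw [Finset.card_image_of_injective _ (Option.some_injective V), Finset.card_univ] at h2
    have h3 := List.toFinset_card_le t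
    omega
  have hhd_t : t.head ht_ne = some a ∨ t.head ht_ne = some b := by
    obtain ⟨hwhd, -⟩ := List.isChain_cons.1 hch'
    have h := hwhd (t.head ht_ne) (List.head?_eq_head ht_ne)
    rcases optRel_none_left G a b (t.head ht_ne) (optRel_symm G a b h) with h' | h'
    · exact Or.inl h'
    · exact Or.inr h'
  have hlast_t : t.getLast ht_ne = some a ∨ t.getLast ht_ne = some b := by
    have hgl : (none :: t).getLast? = some (t.getLast ht_ne) := by
      rw [show ((none : Option V) :: t) = [none] ++ t from rfl,
        List.getLast?_append_of_ne_nil _ ht_ne, List.getLast?_eq_getLast ht_ne]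
    have h := hcyc' _ hgl none (by simp)
    exact optRel_none_left G a b _ h
  have hne_hd_last : t.head ht_ne ≠ t.getLast ht_ne := head_ne_getLast hnd_t hlen_t ht_ne
  -- normalize direction
  have hfinal : ∃ t1 : List (Option V), t1.IsChain (OptRel G a b) ∧ t1.Nodup ∧
      (∀ x : V, some x ∈ t1) ∧ (none : Option V) ∉ t1 ∧
      t1.head? = some (some a) ∧ t1.getLast? = some (some b) := by
    rcases hhd_t with h | h
    · have hlast : t.getLast ht_ne = some b := by
        rcases hlast_t with h' | h'
        · exact absurd (h.trans h'.symm) hne_hd_last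
        · exact h'
      exact ⟨t, hch_t, hnd_t, hcov', hnone_t,
        by rw [List.head?_eq_head ht_ne, h], by rw [List.getLast?_eq_getLast ht_ne, hlast]⟩
    · have hlast : t.getLast ht_ne = some a := by
        rcases hlast_t with h' | h'
        · exact h'
        · exact absurd (h.trans h'.symm) hne_hd_last
      refine ⟨t.reverse, ?_, by simpa using hnd_t, fun x => by simpa using hcov' x,
        by simpa using hnone_t, ?_, ?_⟩
      · rw [List.isChain_reverse]
        exact hch_t.imp fun x y hxy => optRel_symm G a b hxy
      · rw [List.head?_reverse, List.getLast?_eq_getLast ht_ne, hlast]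
      · rw [List.getLast?_reverse, List.head?_eq_head ht_ne, h]
  obtain ⟨t1, ht1ch, ht1nd, ht1cov, ht1none, ht1hd, ht1last⟩ := hfinal
  obtain ⟨s, rfl⟩ := exists_map_some t1 (fun x hx => by rintro rfl; exact ht1none hx)
  have hs_ne : s ≠ [] := by rintro rfl; simp at ht1hd
  have hs_chain : s.IsChain G.Adj := by
    rw [List.isChain_map] at ht1ch
    exact ht1ch.imp fun x y h => h
  have hs_nd : s.Nodup := List.Nodup.of_map some ht1nd
  have hs_cov : ∀ x : V, x ∈ s := by
    intro x
    obtain ⟨y, hy, hyx⟩ := List.mem_map.1 (ht1cov x)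
    rwa [show y = x from Option.some_inj.1 hyx] at hy
  have hs_hd : s.head hs_ne = a := by
    rw [List.head?_map, List.head?_eq_head hs_ne] at ht1hd
    simpa using ht1hd
  have hs_last : s.getLast hs_ne = b := by
    rw [List.getLast?_map, List.getLast?_eq_getLast hs_ne] at ht1last
    simpa using ht1last
  obtain ⟨p, hp⟩ := walk_of_chain G s hs_ne hs_chain
  refine ⟨p.copy hs_hd hs_last, ?_⟩
  apply SimpleGraph.Walk.IsPath.isHamiltonian_of_mem
  · exact SimpleGraph.Walk.IsPath.mk' (by rw [SimpleGraph.Walk.support_copy, hp]; exact hs_nd)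
  · intro v
    rw [SimpleGraph.Walk.support_copy, hp]
    exact hs_cov v
end

section
/- Let G be a bipartite graph with parts A and B satisfying |A| = |B| = n/2, and suppose every vertex has degree at least n/4 + 1. Then for any a in A and b in B there is a Hamiltonian path in G from a to b. -/
open List

set_option linter.unusedSectionVars false
set_option linter.unusedVariables false
set_option linter.unnecessarySimpa false
set_option maxHeartbeats 1600000

namespace BHC

section NoFintype
variable {V : Type*} [DecidableEq V]



/-- Add a single edge `u v` to a graph. -/
def addEdge (G : SimpleGraph V) (u v : V) (huv : u ≠ v) : SimpleGraph V where
  Adj x y := G.Adj x y ∨ (x = u ∧ y = v) ∨ (x = v ∧ y = u)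
  symm := ⟨fun x y h => by
    rcases h with h | ⟨rfl, rfl⟩ | ⟨rfl, rfl⟩
    · exact Or.inl h.symm
    · exact Or.inr (Or.inr ⟨rfl, rfl⟩)
    · exact Or.inr (Or.inl ⟨rfl, rfl⟩)⟩
  loopless := ⟨fun x h => by
    rcases h with h | ⟨rfl, rfl⟩ | ⟨rfl, rfl⟩
    · exact G.loopless.irrefl x h
    · exact huv rfl
    · exact huv rfl⟩

lemma addEdge_adj (G : SimpleGraph V) (u v : V) (huv : u ≠ v) (x y : V) :
    (addEdge G u v huv).Adj x y ↔ G.Adj x y ∨ (x = u ∧ y = v) ∨ (x = v ∧ y = u) := Iff.rfl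

lemma le_addEdge (G : SimpleGraph V) (u v : V) (huv : u ≠ v) :
    G ≤ addEdge G u v huv := fun x y h => Or.inl h

/-- Build a walk from a chain. -/
lemma exists_walk_of_chain (G : SimpleGraph V) :
    ∀ (l : List V) (a : V), List.Chain G.Adj a l →
    ∀ b, (a :: l).getLast (by simp) = b → ∃ p : G.Walk a b, p.support = a :: l := by
  intro l
  induction l with
  | nil =>
    intro a _ b hb
    simp at hb; subst hb
    exact ⟨SimpleGraph.Walk.nil, rfl⟩
  | cons x xs ih =>
    intro a hc b hb
    have hc : G.Adj a x ∧ List.Chain G.Adj x xs := List.isChain_cons_cons.mp hc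
    obtain ⟨q, hq⟩ := ih x hc.2 b (by simpa [List.getLast_cons] using hb)
    exact ⟨SimpleGraph.Walk.cons hc.1 q, by simp [hq]⟩




/-- interleave two lists -/
def mix : List V → List V → List V
  | [], _ => []
  | _ :: _, [] => []
  | y :: ys, x :: xs => y :: x :: mix ys xs

lemma mix_perm : ∀ (ys xs : List V), ys.length = xs.length → (mix ys xs).Perm (ys ++ xs)
  | [], [], _ => by simp [mix]
  | [], x :: xs, h => by simp at h
  | y :: ys, [], h => by simp at h
  | y :: ys, x :: xs, h => by
    have ih := mix_perm ys xs (by simpa using h)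
    simp only [mix, cons_append]
    refine Perm.cons y ?_
    calc x :: mix ys xs ~ x :: (ys ++ xs) := ih.cons x
      _ ~ ys ++ x :: xs := (List.perm_middle).symm

lemma mix_chain (G : SimpleGraph V) (A B : Finset V)
    (hadj : ∀ x ∈ A, ∀ y ∈ B, G.Adj x y) (b : V) (hb : b ∈ B) :
    ∀ (ys xs : List V), ys.length = xs.length → (∀ y ∈ ys, y ∈ B) → (∀ x ∈ xs, x ∈ A) →
    ∀ a ∈ A, List.Chain G.Adj a (mix ys xs ++ [b])
  | [], [], _, _, _ => fun a haA => by
    simpa [mix, List.Chain] using hadj a haA b hb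
  | [], x :: xs, h, _, _ => fun a haA => by simp at h
  | y :: ys, [], h, _, _ => fun a haA => by simp at h
  | y :: ys, x :: xs, h, hys, hxs => fun a haA => by
    have ih := mix_chain G A B hadj b hb ys xs (by simpa using h)
      (fun z hz => hys z (mem_cons_of_mem _ hz)) (fun z hz => hxs z (mem_cons_of_mem _ hz))
      x (hxs x mem_cons_self)
    simp only [mix, cons_append, List.Chain, List.isChain_cons_cons]
    exact ⟨hadj a haA y (hys y mem_cons_self),
      (hadj x (hxs x mem_cons_self) y (hys y mem_cons_self)).symm, ih⟩



/-- Hamiltonian path as a list. -/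
def IsHamList (G : SimpleGraph V) (a b : V) (l : List V) : Prop :=
  l.head? = some a ∧ l.getLast? = some b ∧ l.Nodup ∧ l.Chain' G.Adj ∧ ∀ v : V, v ∈ l

lemma base_case (G : SimpleGraph V) (A B : Finset V)
    (hpart : ∀ v, v ∈ A ↔ v ∉ B) (hAB : A.card = B.card)
    (hadj : ∀ x ∈ A, ∀ y ∈ B, G.Adj x y)
    (a : V) (ha : a ∈ A) (b : V) (hb : b ∈ B) :
    ∃ l, IsHamList G a b l := by
  classical
  set ea := (A.erase a).toList with hea
  set eb := (B.erase b).toList with heb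
  have hlen : eb.length = ea.length := by
    simp [hea, heb, Finset.length_toList, Finset.card_erase_of_mem, ha, hb, hAB]
  have hysB : ∀ y ∈ eb, y ∈ B := fun y hy => Finset.mem_of_mem_erase (by simpa [heb] using hy)
  have hxsA : ∀ x ∈ ea, x ∈ A := fun x hx => Finset.mem_of_mem_erase (by simpa [hea] using hx)
  refine ⟨a :: (mix eb ea ++ [b]), rfl, ?_, ?_, ?_, ?_⟩
  · rw [show a :: (mix eb ea ++ [b]) = (a :: mix eb ea) ++ [b] by simp]
    exact List.getLast?_concat
  · -- Nodup
    have hperm : (a :: (mix eb ea ++ [b])).Perm (a :: b :: (eb ++ ea)) := by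
      refine Perm.cons a ?_
      calc mix eb ea ++ [b] ~ (eb ++ ea) ++ [b] := (mix_perm eb ea hlen).append_right _
        _ ~ b :: (eb ++ ea) := List.perm_append_singleton _ _
    refine hperm.nodup_iff.mpr ?_
    have hAnotB : ∀ x, x ∈ A → x ∉ B := fun x hx => (hpart x).mp hx
    have hBnotA : ∀ x, x ∈ B → x ∉ A := fun x hx hx' => (hpart x).mp hx' hx
    refine List.nodup_cons.mpr ⟨?_, List.nodup_cons.mpr ⟨?_, ?_⟩⟩
    · simp only [List.mem_cons, List.mem_append]
      rintro (rfl | h | h)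
      · exact hAnotB a ha hb
      · exact hAnotB a ha (hysB a h)
      · exact (Finset.notMem_erase a A) (by simpa [hea] using h)
    · simp only [List.mem_append]
      rintro (h | h)
      · exact (Finset.notMem_erase b B) (by simpa [heb] using h)
      · exact hBnotA b hb (hxsA b h)
    · refine List.Nodup.append (Finset.nodup_toList _) (Finset.nodup_toList _) ?_
      intro x hx hx'
      exact hBnotA x (hysB x hx) (hxsA x hx')
  · -- Chain'
    exact mix_chain G A B hadj b hb eb ea hlen hysB hxsA a ha
  · -- coverage
    intro v
    have hperm : (a :: (mix eb ea ++ [b])).Perm (a :: b :: (eb ++ ea)) := by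
      refine Perm.cons a ?_
      calc mix eb ea ++ [b] ~ (eb ++ ea) ++ [b] := (mix_perm eb ea hlen).append_right _
        _ ~ b :: (eb ++ ea) := List.perm_append_singleton _ _
    rw [hperm.mem_iff]
    simp only [List.mem_cons, List.mem_append]
    by_cases hv : v ∈ B
    · by_cases hvb : v = b
      · exact Or.inr (Or.inl hvb)
      · exact Or.inr (Or.inr (Or.inl (by simp [heb, Finset.mem_erase, hvb, hv])))
    · have hvA : v ∈ A := (hpart v).mpr hv
      by_cases hva : v = a
      · exact Or.inl hva
      · exact Or.inr (Or.inr (Or.inr (by simp [hea, Finset.mem_erase, hva, hvA])))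




lemma getD_take' (l : List V) (d : V) {n i : ℕ} (h : i < n) :
    (l.take n).getD i d = l.getD i d := by
  by_cases h' : i < l.length
  · rw [List.getD_eq_getElem _ _ (by simp; omega), List.getD_eq_getElem _ _ h']
    exact List.getElem_take
  · rw [List.getD_eq_default _ _ (by simp; omega), List.getD_eq_default _ _ (by omega)]

lemma getD_drop' (l : List V) (d : V) {n i : ℕ} (h : n + i < l.length) :
    (l.drop n).getD i d = l.getD (n + i) d := by
  rw [List.getD_eq_getElem _ _ (by simp; omega), List.getD_eq_getElem _ _ h]
  exact List.getElem_drop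

lemma getD_reverse' (l : List V) (d : V) {i : ℕ} (h : i < l.length) :
    l.reverse.getD i d = l.getD (l.length - 1 - i) d := by
  rw [List.getD_eq_getElem _ _ (by simpa using h), List.getD_eq_getElem _ _ (by omega)]
  exact List.getElem_reverse _

lemma chain'_iff_getD (G : SimpleGraph V) (d : V) (l : List V) :
    l.Chain' G.Adj ↔ ∀ i, i + 1 < l.length → G.Adj (l.getD i d) (l.getD (i+1) d) := by
  rw [show l.Chain' G.Adj ↔ l.IsChain G.Adj from Iff.rfl, List.isChain_iff_getElem]
  constructor
  · intro h i hi
    rw [List.getD_eq_getElem _ _ (by omega), List.getD_eq_getElem _ _ (by omega)]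
    simpa using h i (by omega)
  · intro h i hi
    have := h i (by omega)
    rw [List.getD_eq_getElem _ _ (by omega), List.getD_eq_getElem _ _ (by omega)] at this
    simpa using this

lemma head?_eq_getD (l : List V) (d : V) (h : l ≠ []) : l.head? = some (l.getD 0 d) := by
  rw [List.head?_eq_head h, List.head_eq_getElem, List.getD_eq_getElem _ _ (by
    exact List.length_pos_iff.mpr h)]

lemma getLast?_eq_getD (l : List V) (d : V) (h : l ≠ []) :
    l.getLast? = some (l.getD (l.length - 1) d) := by
  rw [List.getLast?_eq_getLast h, List.getLast_eq_getElem,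
    List.getD_eq_getElem _ _ (by have := List.length_pos_iff.mpr h; omega)]

lemma reverse_segment (G : SimpleGraph V) (l : List V) (d : V) (p q : ℕ) (hpq : p < q)
    (hq : q + 1 < l.length)
    (hgood : ∀ k, k + 1 < l.length → k ≠ p → k ≠ q →
      G.Adj (l.getD k d) (l.getD (k+1) d))
    (hc1 : G.Adj (l.getD p d) (l.getD q d))
    (hc2 : G.Adj (l.getD (p+1) d) (l.getD (q+1) d)) :
    ∃ l' : List V, l'.Perm l ∧ l'.head? = l.head? ∧ l'.getLast? = l.getLast? ∧
      l'.Chain' G.Adj := by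
  have hX : (l.take (p+1)).length = p + 1 := by rw [List.length_take]; omega
  have hS : ((l.drop (p+1)).take (q-p)).length = q - p := by
    rw [List.length_take, List.length_drop]; omega
  have hY : ((l.drop (p+1)).take (q-p)).reverse.length = q - p := by
    rw [List.length_reverse, hS]
  have hZ : (l.drop (q+1)).length = l.length - (q+1) := List.length_drop
  have hXne : l.take (p+1) ≠ [] := by
    intro h; rw [h] at hX; simp at hX
  have hYne : ((l.drop (p+1)).take (q-p)).reverse ≠ [] := by
    intro h; rw [h] at hY; simp at hY; omega
  have hZne : l.drop (q+1) ≠ [] := by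
    intro h; rw [h] at hZ; simp at hZ; omega
  have hgX : ∀ i, i < p + 1 → (l.take (p+1)).getD i d = l.getD i d :=
    fun i h => getD_take' l d h
  have hgS : ∀ i, i < q - p → ((l.drop (p+1)).take (q-p)).getD i d = l.getD (p+1+i) d :=
    fun i h => by rw [getD_take' _ d h, getD_drop' l d (by omega)]
  have hgY : ∀ i, i < q - p →
      ((l.drop (p+1)).take (q-p)).reverse.getD i d = l.getD (q - i) d := fun i h => by
    rw [getD_reverse' _ d (by rw [hS]; omega), hS, hgS _ (by omega)]
    congr 1; omega
  have hgZ : ∀ i, q + 1 + i < l.length → (l.drop (q+1)).getD i d = l.getD (q+1+i) d :=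
    fun i h => getD_drop' l d h
  have hdecomp : l = l.take (p+1) ++ ((l.drop (p+1)).take (q-p) ++ l.drop (q+1)) := by
    rw [← List.append_assoc, ← List.take_add]
    have h1 : p + 1 + (q - p) = q + 1 := by omega
    rw [h1, List.take_append_drop]
  refine ⟨l.take (p+1) ++ (((l.drop (p+1)).take (q-p)).reverse ++ l.drop (q+1)),
    ?_, ?_, ?_, ?_⟩
  · calc l.take (p+1) ++ (((l.drop (p+1)).take (q-p)).reverse ++ l.drop (q+1))
        ~ l.take (p+1) ++ ((l.drop (p+1)).take (q-p) ++ l.drop (q+1)) :=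
          Perm.append_left _ ((List.reverse_perm _).append_right _)
      _ = l := hdecomp.symm
  · rw [List.head?_append_of_ne_nil _ hXne]
    conv_rhs => rw [hdecomp]
    rw [List.head?_append_of_ne_nil _ hXne]
  · rw [List.getLast?_append_of_ne_nil _ (by simp [hZne])]
    rw [List.getLast?_append_of_ne_nil _ hZne]
    conv_rhs => rw [hdecomp]
    rw [List.getLast?_append_of_ne_nil _ (by simp [hZne])]
    rw [List.getLast?_append_of_ne_nil _ hZne]
  · -- Chain'
    have hchX : (l.take (p+1)).Chain' G.Adj := by
      rw [chain'_iff_getD G d]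
      intro i hi
      rw [hX] at hi
      rw [hgX i (by omega), hgX (i+1) (by omega)]
      exact hgood i (by omega) (by omega) (by omega)
    have hchY : ((l.drop (p+1)).take (q-p)).reverse.Chain' G.Adj := by
      rw [chain'_iff_getD G d]
      intro i hi
      rw [hY] at hi
      rw [hgY i (by omega), hgY (i+1) (by omega)]
      have e1 : q - i = (q - (i+1)) + 1 := by omega
      rw [e1]
      exact (hgood (q - (i+1)) (by omega) (by omega) (by omega)).symm
    have hchZ : (l.drop (q+1)).Chain' G.Adj := by
      rw [chain'_iff_getD G d]
      intro i hi
      rw [hZ] at hi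
      rw [hgZ i (by omega), hgZ (i+1) (by omega)]
      have e1 : q + 1 + (i+1) = (q+1+i) + 1 := by omega
      rw [e1]
      exact hgood (q+1+i) (by omega) (by omega) (by omega)
    have hlastX : (l.take (p+1)).getLast? = some (l.getD p d) := by
      rw [getLast?_eq_getD _ d hXne, hX]
      have e : p + 1 - 1 = p := by omega
      rw [e, hgX p (by omega)]
    have hheadY : (((l.drop (p+1)).take (q-p)).reverse).head? = some (l.getD q d) := by
      rw [head?_eq_getD _ d hYne, hgY 0 (by omega)]
      simp
    have hlastY : (((l.drop (p+1)).take (q-p)).reverse).getLast? = some (l.getD (p+1) d) := by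
      rw [getLast?_eq_getD _ d hYne, hY, hgY _ (by omega)]
      have : q - (q - p - 1) = p + 1 := by omega
      rw [this]
    have hheadZ : (l.drop (q+1)).head? = some (l.getD (q+1) d) := by
      rw [head?_eq_getD _ d hZne, hgZ 0 (by omega)]
    refine List.IsChain.append hchX (List.IsChain.append hchY hchZ ?_) ?_
    · intro x hx y hy
      rw [hlastY] at hx; rw [hheadZ] at hy
      simp only [Option.mem_def, Option.some_inj] at hx hy
      rw [← hx, ← hy]; exact hc2
    · intro x hx y hy
      rw [hlastX] at hx
      rw [List.head?_append_of_ne_nil _ hYne, hheadY] at hy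
      simp only [Option.mem_def, Option.some_inj] at hx hy
      rw [← hx, ← hy]; exact hc1


end NoFintype

section WithFintype
variable {V : Type*} [Fintype V] [DecidableEq V]



lemma getD_inj (l : List V) (d : V) (hnd : l.Nodup) {i j : ℕ}
    (hi : i < l.length) (hj : j < l.length) (h : l.getD i d = l.getD j d) : i = j := by
  rw [List.getD_eq_getElem _ _ hi, List.getD_eq_getElem _ _ hj] at h
  exact (List.Nodup.getElem_inj_iff hnd).mp h

lemma getD_indexOf (l : List V) (d : V) {z : V} (hz : z ∈ l) :
    l.getD (l.idxOf z) d = z := by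
  rw [List.getD_eq_getElem _ _ (List.idxOf_lt_length_iff.mpr hz)]
  exact List.getElem_idxOf _

lemma exists_crossing (G : SimpleGraph V) (A B : Finset V)
    (hpart : ∀ v, v ∈ A ↔ v ∉ B) (hAB : A.card = B.card)
    (hbip : ∀ u v, G.Adj u v → (u ∈ A ∧ v ∈ B) ∨ (u ∈ B ∧ v ∈ A))
    (l : List V) (d : V) (hnd : l.Nodup) (hspan : ∀ v : V, v ∈ l)
    (hheadA : l.getD 0 d ∈ A) (hlastB : l.getD (l.length - 1) d ∈ B)
    (hpairs : ∀ k, k + 1 < l.length →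
      (l.getD k d ∈ A ∧ l.getD (k+1) d ∈ B) ∨ (l.getD k d ∈ B ∧ l.getD (k+1) d ∈ A))
    (w w' : V) (hor : (w ∈ A ∧ w' ∈ B) ∨ (w ∈ B ∧ w' ∈ A))
    (hsum : A.card + 2 ≤ {x | G.Adj w x}.ncard + {x | G.Adj w' x}.ncard) :
    ∃ j, j + 1 < l.length ∧ G.Adj w (l.getD j d) ∧ G.Adj w' (l.getD (j+1) d) := by
  classical
  set n := l.length with hn
  set g : ℕ → V := fun i => l.getD i d with hg
  have hAnotB : ∀ x, x ∈ A → x ∉ B := fun x hx => (hpart x).mp hx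
  have hBnotA : ∀ x, x ∈ B → x ∉ A := fun x hx hx' => (hpart x).mp hx' hx
  have hglt : ∀ z : V, l.idxOf z < n := fun z => List.idxOf_lt_length_iff.mpr (hspan z)
  have hgidx : ∀ z : V, g (l.idxOf z) = z := fun z => getD_indexOf l d (hspan z)
  have hninj : ∀ i j, i < n → j < n → g i = g j → i = j :=
    fun i j hi hj h => getD_inj l d hnd hi hj h
  set J := Finset.range (n-1) with hJ
  set X := J.filter (fun j => G.Adj w (g j)) with hX
  set Y := J.filter (fun j => G.Adj w' (g (j+1))) with hY
  have hnbw : {x | G.Adj w x}.ncard = ({x | G.Adj w x}.toFinset).card :=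
    Set.ncard_eq_toFinset_card' _
  have hnbw' : {x | G.Adj w' x}.ncard = ({x | G.Adj w' x}.toFinset).card :=
    Set.ncard_eq_toFinset_card' _
  -- lower bound for X from a finset of neighbors of w avoiding the last vertex
  have cardX : ∀ E : Finset V, (∀ z ∈ E, G.Adj w z) → (∀ z ∈ E, z ≠ g (n-1)) →
      E.card ≤ X.card := by
    intro E hE1 hE2
    apply Finset.card_le_card_of_injOn (fun z => l.idxOf z)
    · intro z hz
      rw [hX, Finset.mem_coe, Finset.mem_filter]
      have hidx : l.idxOf z < n := hglt z
      have hne : l.idxOf z ≠ n - 1 := by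
        intro h
        exact hE2 z hz (by rw [← h, hgidx])
      beta_reduce
      refine ⟨Finset.mem_range.mpr (by omega), ?_⟩
      rw [hgidx]
      exact hE1 z hz
    · intro z1 h1 z2 h2 h
      simp only at h
      rw [← hgidx z1, ← hgidx z2]
      exact congrArg g h
  -- lower bound for Y from a finset of neighbors of w' avoiding the head
  have cardY : ∀ E : Finset V, (∀ z ∈ E, G.Adj w' z) → (∀ z ∈ E, z ≠ g 0) →
      E.card ≤ Y.card := by
    intro E hE1 hE2
    apply Finset.card_le_card_of_injOn (fun z => l.idxOf z - 1)
    · intro z hz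
      rw [hY, Finset.mem_coe, Finset.mem_filter]
      have hidx : l.idxOf z < n := hglt z
      have hne : l.idxOf z ≠ 0 := by
        intro h
        exact hE2 z hz (by rw [← h, hgidx])
      have he : l.idxOf z - 1 + 1 = l.idxOf z := by omega
      beta_reduce
      refine ⟨Finset.mem_range.mpr (by omega), ?_⟩
      rw [he, hgidx]
      exact hE1 z hz
    · intro z1 h1 z2 h2 h
      simp only at h
      rw [Finset.mem_coe] at h1 h2
      have h1' : l.idxOf z1 ≠ 0 := fun h0 => hE2 z1 h1 (by rw [← h0, hgidx])
      have h2' : l.idxOf z2 ≠ 0 := fun h0 => hE2 z2 h2 (by rw [← h0, hgidx])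
      have heq : l.idxOf z1 = l.idxOf z2 := by omega
      rw [← hgidx z1, ← hgidx z2]
      exact congrArg g heq
  have key : 1 ≤ (X ∩ Y).card := by
    rcases hor with ⟨hwA, hw'B⟩ | ⟨hwB, hw'A⟩
    · -- w ∈ A, w' ∈ B : work inside B minus last vertex
      set Z := J.filter (fun j => g j ∈ B) with hZ
      have hXZ : X ⊆ Z := by
        intro j hj
        rw [hX, Finset.mem_filter] at hj
        rw [hZ, Finset.mem_filter]
        refine ⟨hj.1, ?_⟩
        rcases hbip w (g j) hj.2 with ⟨_, h⟩ | ⟨h, _⟩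
        · exact h
        · exact (hAnotB w hwA h).elim
      have hYZ : Y ⊆ Z := by
        intro j hj
        rw [hY, Finset.mem_filter] at hj
        rw [hZ, Finset.mem_filter]
        refine ⟨hj.1, ?_⟩
        have hjn : j + 1 < n := by
          have := Finset.mem_range.mp hj.1; omega
        have hgB : g (j+1) ∈ A := by
          rcases hbip w' (g (j+1)) hj.2 with ⟨h, _⟩ | ⟨_, h⟩
          · exact (hAnotB w' h hw'B).elim
          · exact h
        rcases hpairs j hjn with ⟨h1, h2⟩ | ⟨h1, h2⟩
        · exact (hAnotB (g (j+1)) hgB h2).elim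
        · exact h1
      have hZcard : Z.card ≤ B.card - 1 := by
        have : Z.card ≤ (B.erase (g (n-1))).card := by
          apply Finset.card_le_card_of_injOn g
          · intro j hj
            rw [hZ, Finset.mem_coe, Finset.mem_filter] at hj
            have hjn : j < n - 1 := Finset.mem_range.mp hj.1
            refine Finset.mem_erase.mpr ⟨?_, hj.2⟩
            intro h
            have := hninj j (n-1) (by omega) (by omega) h
            omega
          · intro j1 h1 j2 h2 h
            rw [Finset.mem_coe, Finset.mem_filter] at h1 h2
            have hj1 := Finset.mem_range.mp h1.1
            have hj2 := Finset.mem_range.mp h2.1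
            exact hninj j1 j2 (by omega) (by omega) h
        have hbcard : 1 ≤ B.card := Finset.card_pos.mpr ⟨g (n-1), hlastB⟩
        rw [Finset.card_erase_of_mem hlastB] at this
        omega
      have hXcard : {x | G.Adj w x}.ncard ≤ X.card + 1 := by
        have h1 := cardX (({x | G.Adj w x}.toFinset).erase (g (n-1)))
          (fun z hz => by simpa using (Finset.mem_of_mem_erase hz))
          (fun z hz => (Finset.mem_erase.mp hz).1)
        have h2 : ({x | G.Adj w x}.toFinset).card - 1 ≤
            (({x | G.Adj w x}.toFinset).erase (g (n-1))).card :=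
          Finset.pred_card_le_card_erase
        rw [hnbw]
        omega
      have hYcard : {x | G.Adj w' x}.ncard ≤ Y.card + 1 := by
        have h1 := cardY (({x | G.Adj w' x}.toFinset).erase (g 0))
          (fun z hz => by simpa using (Finset.mem_of_mem_erase hz))
          (fun z hz => (Finset.mem_erase.mp hz).1)
        have h2 : ({x | G.Adj w' x}.toFinset).card - 1 ≤
            (({x | G.Adj w' x}.toFinset).erase (g 0)).card :=
          Finset.pred_card_le_card_erase
        rw [hnbw']
        omega
      have hXY : (X ∪ Y).card ≤ Z.card :=
        Finset.card_le_card (Finset.union_subset hXZ hYZ)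
      have hiu : (X ∩ Y).card + (X ∪ Y).card = X.card + Y.card :=
        Finset.card_inter_add_card_union X Y
      have hB1 : 1 ≤ B.card := Finset.card_pos.mpr ⟨g (n-1), hlastB⟩
      clear_value X Y Z
      omega
    · -- w ∈ B, w' ∈ A : work inside A
      set Z := J.filter (fun j => g j ∈ A) with hZ
      have hXZ : X ⊆ Z := by
        intro j hj
        rw [hX, Finset.mem_filter] at hj
        rw [hZ, Finset.mem_filter]
        refine ⟨hj.1, ?_⟩
        rcases hbip w (g j) hj.2 with ⟨h, _⟩ | ⟨_, h⟩
        · exact (hAnotB w h hwB).elim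
        · exact h
      have hYZ : Y ⊆ Z := by
        intro j hj
        rw [hY, Finset.mem_filter] at hj
        rw [hZ, Finset.mem_filter]
        refine ⟨hj.1, ?_⟩
        have hjn : j + 1 < n := by
          have := Finset.mem_range.mp hj.1; omega
        have hgB : g (j+1) ∈ B := by
          rcases hbip w' (g (j+1)) hj.2 with ⟨_, h⟩ | ⟨h, _⟩
          · exact h
          · exact (hAnotB w' hw'A h).elim
        rcases hpairs j hjn with ⟨h1, h2⟩ | ⟨h1, h2⟩
        · exact h1
        · exact (hAnotB (g (j+1)) h2 hgB).elim
      have hZcard : Z.card ≤ A.card := by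
        apply Finset.card_le_card_of_injOn g
        · intro j hj
          rw [hZ, Finset.mem_coe, Finset.mem_filter] at hj
          exact hj.2
        · intro j1 h1 j2 h2 h
          rw [Finset.mem_coe, Finset.mem_filter] at h1 h2
          have hj1 := Finset.mem_range.mp h1.1
          have hj2 := Finset.mem_range.mp h2.1
          exact hninj j1 j2 (by omega) (by omega) h
      have hXcard : {x | G.Adj w x}.ncard ≤ X.card := by
        refine hnbw ▸ cardX _ (fun z hz => by simpa using hz) ?_
        intro z hz h
        have hzA : z ∈ A := by
          rcases hbip w z (by simpa using hz) with ⟨h1, _⟩ | ⟨_, h1⟩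
          · exact (hAnotB w h1 hwB).elim
          · exact h1
        rw [h] at hzA
        exact hAnotB _ hzA hlastB
      have hYcard : {x | G.Adj w' x}.ncard ≤ Y.card := by
        refine hnbw' ▸ cardY _ (fun z hz => by simpa using hz) ?_
        intro z hz h
        have hzB : z ∈ B := by
          rcases hbip w' z (by simpa using hz) with ⟨_, h1⟩ | ⟨h1, _⟩
          · exact h1
          · exact (hAnotB w' hw'A h1).elim
        rw [h] at hzB
        exact hAnotB _ hheadA hzB
      have hXY : (X ∪ Y).card ≤ Z.card :=
        Finset.card_le_card (Finset.union_subset hXZ hYZ)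
      have hiu : (X ∩ Y).card + (X ∪ Y).card = X.card + Y.card :=
        Finset.card_inter_add_card_union X Y
      clear_value X Y Z
      omega
  obtain ⟨j, hj⟩ := Finset.card_pos.mp (by omega : 0 < (X ∩ Y).card)
  have hj1 := Finset.mem_inter.mp hj
  have hjX := hj1.1; have hjY := hj1.2
  rw [hX, Finset.mem_filter] at hjX
  rw [hY, Finset.mem_filter] at hjY
  have hjr := Finset.mem_range.mp hjX.1
  have hn1 : 1 ≤ n := by
    have := hspan w
    have : l ≠ [] := fun h => by simp [h] at this
    have := List.length_pos_iff.mpr this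
    omega
  exact ⟨j, by omega, hjX.2, hjY.2⟩

open scoped Classical in
lemma ham_list (A B : Finset V) (hpart : ∀ v, v ∈ A ↔ v ∉ B) (hAB : A.card = B.card) :
    ∀ N : ℕ, ∀ G : SimpleGraph V,
      (∀ u v, G.Adj u v → (u ∈ A ∧ v ∈ B) ∨ (u ∈ B ∧ v ∈ A)) →
      (∀ u ∈ A, ∀ v ∈ B, ¬ G.Adj u v →
        A.card + 2 ≤ {x | G.Adj u x}.ncard + {x | G.Adj v x}.ncard) →
      (Finset.univ.filter (fun p : V × V => p.1 ∈ A ∧ p.2 ∈ B ∧ ¬ G.Adj p.1 p.2)).card ≤ N →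
      ∀ a ∈ A, ∀ b ∈ B, ∃ l, IsHamList G a b l := by
  intro N
  induction N with
  | zero =>
    intro G hbip hdeg hcount a ha b hb
    refine base_case G A B hpart hAB ?_ a ha b hb
    intro x hx y hy
    by_contra hxy
    have : (x, y) ∈ Finset.univ.filter
        (fun p : V × V => p.1 ∈ A ∧ p.2 ∈ B ∧ ¬ G.Adj p.1 p.2) := by
      simp [hx, hy, hxy]
    have h0 := Finset.card_eq_zero.mp (Nat.le_zero.mp hcount)
    rw [h0] at this
    simp at this
  | succ N ih =>
    intro G hbip hdeg hcount a ha b hb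
    by_cases hcomp : ∀ x ∈ A, ∀ y ∈ B, G.Adj x y
    · exact base_case G A B hpart hAB hcomp a ha b hb
    push_neg at hcomp
    obtain ⟨u, hu, v, hv, huv⟩ := hcomp
    have hune : u ≠ v := by
      intro h; rw [h] at hu; exact (hpart v).mp hu hv
    set G' := addEdge G u v hune with hG'
    have hle : ∀ x y, G.Adj x y → G'.Adj x y := by
      intro x y h; rw [hG', addEdge_adj]; exact Or.inl h
    have hbip' : ∀ x y, G'.Adj x y → (x ∈ A ∧ y ∈ B) ∨ (x ∈ B ∧ y ∈ A) := by
      intro x y h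
      rw [hG', addEdge_adj] at h
      rcases h with h | ⟨rfl, rfl⟩ | ⟨rfl, rfl⟩
      · exact hbip x y h
      · exact Or.inl ⟨hu, hv⟩
      · exact Or.inr ⟨hv, hu⟩
    have hdeg' : ∀ x ∈ A, ∀ y ∈ B, ¬ G'.Adj x y →
        A.card + 2 ≤ {z | G'.Adj x z}.ncard + {z | G'.Adj y z}.ncard := by
      intro x hx y hy hxy
      have hnadj : ¬ G.Adj x y := fun h => hxy (hle x y h)
      have h1 : {z | G.Adj x z}.ncard ≤ {z | G'.Adj x z}.ncard :=
        Set.ncard_le_ncard (fun z hz => hle x z hz) (Set.toFinite _)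
      have h2 : {z | G.Adj y z}.ncard ≤ {z | G'.Adj y z}.ncard :=
        Set.ncard_le_ncard (fun z hz => hle y z hz) (Set.toFinite _)
      have := hdeg x hx y hy hnadj
      omega
    have hcount' : (Finset.univ.filter
        (fun p : V × V => p.1 ∈ A ∧ p.2 ∈ B ∧ ¬ G'.Adj p.1 p.2)).card ≤ N := by
      have hsub : (Finset.univ.filter
          (fun p : V × V => p.1 ∈ A ∧ p.2 ∈ B ∧ ¬ G'.Adj p.1 p.2)) ⊆
          (Finset.univ.filter
          (fun p : V × V => p.1 ∈ A ∧ p.2 ∈ B ∧ ¬ G.Adj p.1 p.2)).erase (u, v) := by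
        intro p hp
        rw [Finset.mem_filter] at hp
        refine Finset.mem_erase.mpr ⟨?_, ?_⟩
        · intro h
          rw [h] at hp
          exact hp.2.2.2 (by rw [hG', addEdge_adj]; exact Or.inr (Or.inl ⟨rfl, rfl⟩))
        · rw [Finset.mem_filter]
          exact ⟨hp.1, hp.2.1, hp.2.2.1, fun h => hp.2.2.2 (hle _ _ h)⟩
      have hmem : (u, v) ∈ (Finset.univ.filter
          (fun p : V × V => p.1 ∈ A ∧ p.2 ∈ B ∧ ¬ G.Adj p.1 p.2)) := by
        simp [hu, hv, huv]
      have := Finset.card_le_card hsub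
      rw [Finset.card_erase_of_mem hmem] at this
      omega
    obtain ⟨l, hlh, hll, hlnd, hlch, hlsp⟩ := ih G' hbip' hdeg' hcount' a ha b hb
    -- notation
    have hlne : l ≠ [] := by
      intro h; rw [h] at hlsp; simpa using hlsp a
    set n := l.length with hn
    have hn1 : 1 ≤ n := List.length_pos_iff.mpr hlne
    have hg0 : l.getD 0 a = a := by
      have := head?_eq_getD l a hlne
      rw [hlh] at this
      exact (Option.some_inj.mp this).symm
    have hglast : l.getD (n-1) a = b := by
      have := getLast?_eq_getD l a hlne
      rw [hll] at this
      exact (Option.some_inj.mp this).symm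
    by_cases hch : l.Chain' G.Adj
    · exact ⟨l, hlh, hll, hlnd, hch, hlsp⟩
    -- find the unique bad pair
    rw [chain'_iff_getD G a l] at hch
    push_neg at hch
    obtain ⟨i, hi, hbad⟩ := hch
    have hAdj' : ∀ k, k + 1 < n → G'.Adj (l.getD k a) (l.getD (k+1) a) :=
      (chain'_iff_getD G' a l).mp hlch
    have ident : (l.getD i a = u ∧ l.getD (i+1) a = v) ∨
        (l.getD i a = v ∧ l.getD (i+1) a = u) := by
      have := hAdj' i hi
      rw [hG', addEdge_adj] at this
      rcases this with h | h | h
      · exact absurd h hbad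
      · exact Or.inl h
      · exact Or.inr h
    have hgood : ∀ k, k + 1 < n → k ≠ i → G.Adj (l.getD k a) (l.getD (k+1) a) := by
      intro k hk hki
      have h := hAdj' k hk
      rw [hG', addEdge_adj] at h
      rcases h with h | ⟨h1, h2⟩ | ⟨h1, h2⟩
      · exact h
      · rcases ident with ⟨e1, e2⟩ | ⟨e1, e2⟩
        · exact absurd (getD_inj l a hlnd (by omega) (by omega) (h1.trans e1.symm)) hki
        · have k1 : k = i + 1 :=
            getD_inj l a hlnd (by omega) (by omega) (h1.trans e2.symm)
          have k2 : k + 1 = i :=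
            getD_inj l a hlnd (by omega) (by omega) (h2.trans e1.symm)
          omega
      · rcases ident with ⟨e1, e2⟩ | ⟨e1, e2⟩
        · have k1 : k = i + 1 :=
            getD_inj l a hlnd (by omega) (by omega) (h1.trans e2.symm)
          have k2 : k + 1 = i :=
            getD_inj l a hlnd (by omega) (by omega) (h2.trans e1.symm)
          omega
        · exact absurd (getD_inj l a hlnd (by omega) (by omega) (h1.trans e1.symm)) hki
    -- parts and degree sum for the bad pair
    have hor : (l.getD i a ∈ A ∧ l.getD (i+1) a ∈ B) ∨
        (l.getD i a ∈ B ∧ l.getD (i+1) a ∈ A) := by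
      rcases ident with ⟨e1, e2⟩ | ⟨e1, e2⟩
      · rw [e1, e2]; exact Or.inl ⟨hu, hv⟩
      · rw [e1, e2]; exact Or.inr ⟨hv, hu⟩
    have hsum : A.card + 2 ≤
        {x | G.Adj (l.getD i a) x}.ncard + {x | G.Adj (l.getD (i+1) a) x}.ncard := by
      have hd := hdeg u hu v hv huv
      rcases ident with ⟨e1, e2⟩ | ⟨e1, e2⟩
      · rw [e1, e2]; omega
      · rw [e1, e2]; omega
    have hpairs : ∀ k, k + 1 < n →
        (l.getD k a ∈ A ∧ l.getD (k+1) a ∈ B) ∨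
        (l.getD k a ∈ B ∧ l.getD (k+1) a ∈ A) :=
      fun k hk => hbip' _ _ (hAdj' k hk)
    obtain ⟨j, hj, hcj1, hcj2⟩ := exists_crossing G A B hpart hAB hbip l a hlnd hlsp
      (by rw [hg0]; exact ha) (by rw [hglast]; exact hb) hpairs
      (l.getD i a) (l.getD (i+1) a) hor hsum
    -- j is distinct from i-1, i, i+1
    have hji : j ≠ i := by
      intro h; rw [h] at hcj1; exact G.loopless.irrefl _ hcj1
    have hji1 : j ≠ i + 1 := by
      intro h; rw [h] at hcj1; exact hbad hcj1
    have hj1i : j + 1 ≠ i := by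
      intro h; rw [h] at hcj2; exact hbad hcj2.symm
    rcases lt_or_gt_of_ne hji with hlt | hgt
    · -- j < i : reverse the segment (j+1 .. i)
      obtain ⟨l', hperm, hh, hlst, hch'⟩ := reverse_segment G l a j i hlt (by omega)
        (fun k hk hkj hki => hgood k hk hki) hcj1.symm hcj2.symm
      exact ⟨l', by rw [hh, hlh], by rw [hlst, hll], (hperm.nodup_iff).mpr hlnd, hch',
        fun x => (hperm.mem_iff).mpr (hlsp x)⟩
    · -- i < j : reverse the segment (i+1 .. j)
      obtain ⟨l', hperm, hh, hlst, hch'⟩ := reverse_segment G l a i j hgt (by omega)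
        (fun k hk hki hkj => hgood k hk hki) hcj1 hcj2
      exact ⟨l', by rw [hh, hlh], by rw [hlst, hll], (hperm.nodup_iff).mpr hlnd, hch',
        fun x => (hperm.mem_iff).mpr (hlsp x)⟩


end WithFintype

end BHC

/-- **Hamilton-connectivity of dense balanced bipartite graphs.**
If `G` is bipartite with parts `A, B` of size `n/2` each (`n` the number of vertices),
every vertex has degree at least `n/4 + 1`, then for any `a ∈ A` and `b ∈ B`
there is a Hamiltonian path from `a` to `b`. -/
theorem bipartite_hamilton_connected
    {V : Type*} [Fintype V] [DecidableEq V] (G : SimpleGraph V) [DecidableRel G.Adj]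
    (A B : Finset V) (hpart : ∀ v, v ∈ A ↔ v ∉ B)
    (hbip : ∀ u v, G.Adj u v → ((u ∈ A ∧ v ∈ B) ∨ (u ∈ B ∧ v ∈ A)))
    (hA : (A.card : ℝ) = (Fintype.card V : ℝ) / 2)
    (hB : (B.card : ℝ) = (Fintype.card V : ℝ) / 2)
    (hdeg : ∀ v, (Fintype.card V : ℝ) / 4 + 1 ≤ G.degree v)
    (a : V) (ha : a ∈ A) (b : V) (hb : b ∈ B) :
    ∃ p : G.Walk a b, p.IsHamiltonian := by
  classical
  have hAB : A.card = B.card := by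
    have : (A.card : ℝ) = (B.card : ℝ) := hA.trans hB.symm
    exact_mod_cast this
  have hdegncard : ∀ v : V, {x | G.Adj v x}.ncard = G.degree v := by
    intro v
    have h1 : {x | G.Adj v x}.ncard = (G.neighborSet v).ncard := rfl
    rw [h1, Set.ncard_eq_toFinset_card', ← SimpleGraph.neighborFinset_def]
    rfl
  have hdeg2 : ∀ u ∈ A, ∀ v ∈ B, ¬ G.Adj u v →
      A.card + 2 ≤ {x | G.Adj u x}.ncard + {x | G.Adj v x}.ncard := by
    intro u hu v hv _
    rw [hdegncard u, hdegncard v]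
    have h1 := hdeg u
    have h2 := hdeg v
    have hr : (A.card : ℝ) + 2 ≤ (G.degree u : ℝ) + (G.degree v : ℝ) := by
      rw [hA]; linarith
    exact_mod_cast hr
  obtain ⟨l, hlh, hll, hlnd, hlch, hlsp⟩ :=
    BHC.ham_list A B hpart hAB _ G hbip hdeg2 le_rfl a ha b hb
  -- convert the list to a walk
  cases l with
  | nil => simp at hlh
  | cons x t =>
    have hx : x = a := by simpa using hlh
    subst hx
    have hchain : List.Chain G.Adj x t := hlch
    have hlast : (x :: t).getLast (by simp) = b := by
      have := List.getLast?_eq_getLast (l := x :: t) (by simp)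
      rw [hll] at this
      exact (Option.some_inj.mp this).symm
    obtain ⟨p, hp⟩ := BHC.exists_walk_of_chain G t x hchain b hlast
    refine ⟨p, ?_⟩
    intro v
    rw [hp]
    exact List.count_eq_one_of_mem hlnd (hlsp v)
end

section
/- Let G be an (n+1)-regular graph on 2n vertices and let (A, B) be a partition of the vertex set with |A| = |B| = n. Suppose A' is a vertex cover of the induced subgraph G[A] and B' is a vertex cover of G[B]. Then (|A'| + 1)(|B'| + 1) >= n + 1. -/
/-- **Vertex covers of the two sides of a balanced cut of a regular graph.**
If `G` is `(n+1)`-regular on `2n` vertices, `(A, Aᶜ)` is a balanced cut, and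
`A'`, `B'` are vertex covers of the induced subgraphs `G[A]`, `G[Aᶜ]`, then
`(|A'| + 1)(|B'| + 1) ≥ n + 1`. -/
theorem balanced_cut_cover_product
    {V : Type*} [Fintype V] [DecidableEq V] (G : SimpleGraph V) [DecidableRel G.Adj]
    (n : ℕ) (hcard : Fintype.card V = 2 * n)
    (hreg : ∀ v, G.degree v = n + 1)
    (A : Finset V) (hA : A.card = n)
    (A' B' : Finset V) (hA'sub : A' ⊆ A) (hB'sub : B' ⊆ Aᶜ)
    (hA'cov : ∀ u v, G.Adj u v → u ∈ A → v ∈ A → u ∈ A' ∨ v ∈ A')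
    (hB'cov : ∀ u v, G.Adj u v → u ∈ Aᶜ → v ∈ Aᶜ → u ∈ B' ∨ v ∈ B') :
    (A'.card + 1) * (B'.card + 1) ≥ n + 1 := by
  classical
  set S : Finset V := A \ A' with hSdef
  set T : Finset V := Aᶜ \ B' with hTdef
  set f : V → V → ℕ := fun x y => if G.Adj x y then 1 else 0 with hfdef
  -- row sums: each vertex has degree n+1 split over the four blocks
  have hrow : ∀ u : V,
      (∑ y ∈ A', f u y) + (∑ y ∈ S, f u y) + (∑ y ∈ B', f u y) + (∑ y ∈ T, f u y)
        = n + 1 := by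
    intro u
    have h2 : (∑ y ∈ S, f u y) + (∑ y ∈ A', f u y) = ∑ y ∈ A, f u y :=
      Finset.sum_sdiff hA'sub
    have h3 : (∑ y ∈ T, f u y) + (∑ y ∈ B', f u y) = ∑ y ∈ Aᶜ, f u y :=
      Finset.sum_sdiff hB'sub
    have h4 : (∑ y ∈ A, f u y) + (∑ y ∈ Aᶜ, f u y) = ∑ y, f u y :=
      Finset.sum_add_sum_compl A _
    have h5 : (∑ y, f u y) = n + 1 := by
      have : (∑ y, f u y) = (Finset.univ.filter (fun y => G.Adj u y)).card := by
        simp [hfdef]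
      rw [this, ← SimpleGraph.neighborFinset_eq_filter]
      exact hreg u
    omega
  have hsum : ∀ X : Finset V,
      (∑ u ∈ X, ∑ y ∈ A', f u y) + (∑ u ∈ X, ∑ y ∈ S, f u y)
        + (∑ u ∈ X, ∑ y ∈ B', f u y) + (∑ u ∈ X, ∑ y ∈ T, f u y)
        = X.card * (n + 1) := by
    intro X
    rw [← Finset.sum_add_distrib, ← Finset.sum_add_distrib, ← Finset.sum_add_distrib]
    rw [Finset.sum_congr rfl (fun u _ => hrow u), Finset.sum_const, smul_eq_mul]
  have hsymm : ∀ X Y : Finset V,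
      (∑ u ∈ X, ∑ y ∈ Y, f u y) = (∑ u ∈ Y, ∑ y ∈ X, f u y) := by
    intro X Y
    rw [Finset.sum_comm]
    exact Finset.sum_congr rfl fun y _ => Finset.sum_congr rfl fun x _ => by
      simp only [hfdef]; exact if_congr (G.adj_comm x y) rfl rfl
  have hSmem : ∀ u ∈ S, u ∈ A ∧ u ∉ A' := fun u hu => Finset.mem_sdiff.mp hu
  have hTmem : ∀ u ∈ T, u ∈ Aᶜ ∧ u ∉ B' := fun u hu => Finset.mem_sdiff.mp hu
  have hSS : (∑ u ∈ S, ∑ y ∈ S, f u y) = 0 := by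
    apply Finset.sum_eq_zero; intro u hu
    apply Finset.sum_eq_zero; intro v hv
    simp only [hfdef, ite_eq_right_iff]
    intro hadj
    rcases hA'cov u v hadj (hSmem u hu).1 (hSmem v hv).1 with h | h
    · exact absurd h (hSmem u hu).2
    · exact absurd h (hSmem v hv).2
  have hTT : (∑ u ∈ T, ∑ y ∈ T, f u y) = 0 := by
    apply Finset.sum_eq_zero; intro u hu
    apply Finset.sum_eq_zero; intro v hv
    simp only [hfdef, ite_eq_right_iff]
    intro hadj
    rcases hB'cov u v hadj (hTmem u hu).1 (hTmem v hv).1 with h | h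
    · exact absurd h (hTmem u hu).2
    · exact absurd h (hTmem v hv).2
  have hST : (∑ u ∈ S, ∑ y ∈ T, f u y) ≤ S.card * T.card := by
    calc (∑ u ∈ S, ∑ y ∈ T, f u y) ≤ ∑ _u ∈ S, T.card := by
          apply Finset.sum_le_sum; intro u _
          calc (∑ y ∈ T, f u y) ≤ ∑ _y ∈ T, 1 := by
                apply Finset.sum_le_sum; intro y _
                simp only [hfdef]; split <;> omega
            _ = T.card := by rw [Finset.sum_const, smul_eq_mul, mul_one]
      _ = S.card * T.card := by rw [Finset.sum_const, smul_eq_mul]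
  -- cardinalities
  have hAcompl : Aᶜ.card = n := by
    rw [Finset.card_compl, hA, hcard]; omega
  have haS : A'.card + S.card = n := by
    have h1 : A'.card ≤ A.card := Finset.card_le_card hA'sub
    rw [hSdef, Finset.card_sdiff_of_subset hA'sub, hA]; omega
  have hbT : B'.card + T.card = n := by
    have h1 : B'.card ≤ Aᶜ.card := Finset.card_le_card hB'sub
    rw [hTdef, Finset.card_sdiff_of_subset hB'sub, hAcompl]; omega
  -- main counting inequality
  have kS := hsum S
  have kT := hsum T
  have kA' := hsum A'
  have kB' := hsum B'
  have sTS : (∑ u ∈ T, ∑ y ∈ S, f u y) = (∑ u ∈ S, ∑ y ∈ T, f u y) := hsymm T S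
  have sA'S : (∑ u ∈ A', ∑ y ∈ S, f u y) = (∑ u ∈ S, ∑ y ∈ A', f u y) := hsymm A' S
  have sA'T : (∑ u ∈ A', ∑ y ∈ T, f u y) = (∑ u ∈ T, ∑ y ∈ A', f u y) := hsymm A' T
  have sB'S : (∑ u ∈ B', ∑ y ∈ S, f u y) = (∑ u ∈ S, ∑ y ∈ B', f u y) := hsymm B' S
  have sB'T : (∑ u ∈ B', ∑ y ∈ T, f u y) = (∑ u ∈ T, ∑ y ∈ B', f u y) := hsymm B' T
  have key : (S.card + T.card) * (n + 1)
      ≤ (A'.card + B'.card) * (n + 1) + 2 * (S.card * T.card) := by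
    have h1 : (∑ u ∈ S, ∑ y ∈ A', f u y) + (∑ u ∈ S, ∑ y ∈ B', f u y)
        + (∑ u ∈ T, ∑ y ∈ A', f u y) + (∑ u ∈ T, ∑ y ∈ B', f u y)
        + 2 * (∑ u ∈ S, ∑ y ∈ T, f u y)
        = (S.card + T.card) * (n + 1) := by
      rw [add_mul, ← kS, ← kT]
      omega
    have h2 : (∑ u ∈ S, ∑ y ∈ A', f u y) + (∑ u ∈ S, ∑ y ∈ B', f u y)
        + (∑ u ∈ T, ∑ y ∈ A', f u y) + (∑ u ∈ T, ∑ y ∈ B', f u y)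
        ≤ (A'.card + B'.card) * (n + 1) := by
      rw [add_mul, ← kA', ← kB']
      omega
    omega
  nlinarith [key, haS, hbT, Nat.mul_le_mul_left (n+1) (Nat.zero_le (S.card))]
end

section
/- Let G be a graph on n vertices, let A and B be disjoint vertex sets partitioning V(G) with |A|, |B| >= 0.49n. Suppose the bipartite graph G[A,B] between A and B contains two vertex-disjoint edges, and that both induced subgraphs G[A] and G[B] have minimum degree at least n/100 and each has at most 10^{-4} n^2 non-edges. Then, for n sufficiently large, G is Hamiltonian. -/
set_option linter.unusedSectionVars false
open List Finset
namespace TwoCliques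

section
variable {V : Type} [DecidableEq V] {G : SimpleGraph V}

def walkFromChain (G : SimpleGraph V) : ∀ (a : V) (l : List V),
    List.Chain G.Adj a l → G.Walk a ((a :: l).getLast (List.cons_ne_nil a l))
  | _, [], _ => SimpleGraph.Walk.nil.copy rfl (by simp)
  | a, b :: t, h =>
    (SimpleGraph.Walk.cons (List.chain_cons.mp h).1
      (walkFromChain G b t (List.chain_cons.mp h).2)).copy rfl
      (by rw [List.getLast_cons (List.cons_ne_nil b t)])

omit [DecidableEq V] in
@[simp] lemma support_walkFromChain (a : V) (l : List V) (h : List.Chain G.Adj a l) :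
    (walkFromChain G a l h).support = a :: l := by
  induction l generalizing a with
  | nil => simp [walkFromChain]
  | cons b t ih =>
    simp [walkFromChain, SimpleGraph.Walk.support_copy, SimpleGraph.Walk.support_cons, ih]
    exact ih _ _

omit [DecidableEq V] in
lemma edge_start (a x : V) (l : List V) (h : List.Chain G.Adj a l) (hnd : (a :: l).Nodup)
    (hx : s(a,x) ∈ (walkFromChain G a l h).edges) : l.head? = some x := by
  cases l with
  | nil => simp [walkFromChain, SimpleGraph.Walk.edges_copy] at hx
  | cons b t =>
    simp only [walkFromChain, SimpleGraph.Walk.edges_copy, SimpleGraph.Walk.edges_cons,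
      List.mem_cons] at hx
    rcases hx with hx | hx
    · rw [Sym2.eq_iff] at hx
      rcases hx with ⟨-, rfl⟩ | ⟨rfl, rfl⟩
      · rfl
      · simp at hnd
    · exfalso
      have := SimpleGraph.Walk.fst_mem_support_of_mem_edges _ hx
      erw [support_walkFromChain] at this
      simp only [List.nodup_cons] at hnd
      exact hnd.1 this

lemma isHamiltonian_of_list (L : List V) [Fintype V] (h3 : 3 ≤ L.length)
    (hc : L.Chain' G.Adj) (hnd : L.Nodup) (hall : ∀ v : V, v ∈ L)
    (hcl : G.Adj (L.getLast (by rintro rfl; simp at h3)) (L.head (by rintro rfl; simp at h3))) :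
    G.IsHamiltonian := by
  match L, h3 with
  | a :: b :: c :: t, _ =>
  intro _
  have hch : List.Chain G.Adj a (b :: c :: t) := hc
  set l : List V := b :: c :: t with hl
  have hLne : (l : List V) ≠ [] := by simp [hl]
  have hlast : (a :: l).getLast (List.cons_ne_nil a l) = l.getLast hLne :=
    List.getLast_cons hLne
  let w := walkFromChain G a l hch
  have hadj : G.Adj a ((a :: l).getLast (List.cons_ne_nil a l)) := by
    rw [hlast]; exact hcl.symm
  let cyc : G.Walk a a := SimpleGraph.Walk.cons hadj w.reverse
  refine ⟨a, cyc, ?_⟩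
  rw [SimpleGraph.Walk.isHamiltonianCycle_iff_isCycle_and_support_count_tail_eq_one]
  constructor
  · rw [SimpleGraph.Walk.cons_isCycle_iff]
    constructor
    · rw [SimpleGraph.Walk.isPath_def, SimpleGraph.Walk.support_reverse,
        support_walkFromChain]
      exact List.nodup_reverse.mpr hnd
    · rw [SimpleGraph.Walk.edges_reverse, List.mem_reverse]
      intro hmem
      have hhd := edge_start a _ l hch hnd hmem
      rw [hlast] at hhd
      simp only [hl, List.head?_cons, Option.some.injEq] at hhd
      have : (b :: c :: t).getLast hLne = (c :: t).getLast (List.cons_ne_nil c t) :=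
        List.getLast_cons _
      rw [this] at hhd
      have hmem' : (c :: t).getLast (List.cons_ne_nil c t) ∈ c :: t := List.getLast_mem _
      rw [← hhd] at hmem'
      simp only [hl, List.nodup_cons] at hnd
      exact hnd.2.1 hmem'
  · intro v
    have hsup : cyc.support = a :: w.reverse.support := SimpleGraph.Walk.support_cons _ _
    rw [hsup]
    simp only [List.tail_cons]
    rw [SimpleGraph.Walk.support_reverse, support_walkFromChain]
    have hmem : v ∈ (a :: l).reverse := by rw [List.mem_reverse]; exact hall v
    exact List.count_eq_one_of_mem (List.nodup_reverse.mpr hnd) hmem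


end
section
variable {V : Type} [DecidableEq V] {G : SimpleGraph V} [DecidableRel G.Adj]

omit [DecidableEq V] in
lemma exists_adj_pair (z : V) : ∀ (N : ℕ) (l : List V), l.length ≤ N →
    2 * (l.countP (fun v => decide (¬ G.Adj z v))) + 2 ≤ l.length →
    ∃ l₁ a b l₂, l = l₁ ++ a :: b :: l₂ ∧ G.Adj z a ∧ G.Adj z b := by
  intro N
  induction N with
  | zero => intro l hl hcount; omega
  | succ N ih =>
    intro l hl hcount
    match l with
    | [] => simp at hcount
    | [a] => simp at hcount
    | a :: b :: t =>
      by_cases ha : G.Adj z a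
      · by_cases hb : G.Adj z b
        · exact ⟨[], a, b, t, rfl, ha, hb⟩
        · obtain ⟨l₁, a', b', l₂, heq, h1, h2⟩ := ih t (by simp at hl ⊢; omega) (by
            have e1 : (a :: b :: t).countP (fun v => decide (¬ G.Adj z v))
                = (b :: t).countP (fun v => decide (¬ G.Adj z v)) := by
              rw [List.countP_cons]; simp [ha]
            have e2 : (b :: t).countP (fun v => decide (¬ G.Adj z v))
                = t.countP (fun v => decide (¬ G.Adj z v)) + 1 := by
              rw [List.countP_cons]; simp [hb]
            simp only [List.length_cons] at hcount
            omega)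
          exact ⟨a :: b :: l₁, a', b', l₂, by rw [heq]; rfl, h1, h2⟩
      · obtain ⟨l₁, a', b', l₂, heq, h1, h2⟩ := ih (b :: t) (by simp at hl ⊢; omega) (by
          have hbt : (a :: b :: t).countP (fun v => decide (¬ G.Adj z v))
              = (b :: t).countP (fun v => decide (¬ G.Adj z v)) + 1 := by
            rw [List.countP_cons]; simp [ha]
          simp only [List.length_cons] at hcount ⊢
          omega)
        exact ⟨a :: l₁, a', b', l₂, by rw [heq]; rfl, h1, h2⟩

omit [DecidableEq V] in
lemma chain'_insert_mid {l₁ l₂ : List V} {a b z : V}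
    (hc : List.Chain' G.Adj (l₁ ++ a :: b :: l₂)) (h1 : G.Adj z a) (h2 : G.Adj z b) :
    List.Chain' G.Adj (l₁ ++ a :: z :: b :: l₂) := by
  unfold List.Chain' at hc ⊢
  rw [List.isChain_append] at hc ⊢
  obtain ⟨hl₁, hab, hlink⟩ := hc
  refine ⟨hl₁, ?_, ?_⟩
  · rw [List.isChain_cons_cons, List.isChain_cons_cons]
    rw [List.isChain_cons_cons] at hab
    exact ⟨h1.symm, h2, hab.2⟩
  · intro x hx y hy
    apply hlink x hx
    simpa using hy

lemma insert_mid (l : List V) (z : V) (hc : l.Chain' G.Adj) (hnd : l.Nodup)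
    (hz : z ∉ l)
    (hpair : ∃ l₁ a b l₂, l = l₁ ++ a :: b :: l₂ ∧ G.Adj z a ∧ G.Adj z b) :
    ∃ l' : List V, l'.Chain' G.Adj ∧ l'.Nodup ∧ l'.length = l.length + 1 ∧
      l'.head? = l.head? ∧ l'.getLast? = l.getLast? ∧ l'.toFinset = insert z l.toFinset := by
  obtain ⟨l₁, a, b, l₂, rfl, h1, h2⟩ := hpair
  refine ⟨l₁ ++ a :: z :: b :: l₂, chain'_insert_mid hc h1 h2, ?_, ?_, ?_, ?_, ?_⟩
  · have hperm : (l₁ ++ a :: z :: b :: l₂) ~ z :: (l₁ ++ a :: b :: l₂) := by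
      have : l₁ ++ a :: z :: b :: l₂ = (l₁ ++ [a]) ++ z :: (b :: l₂) := by simp
      rw [this]
      have := List.perm_middle (a := z) (l₁ := l₁ ++ [a]) (l₂ := b :: l₂)
      refine this.trans (List.Perm.cons z ?_)
      simp
    rw [hperm.nodup_iff, List.nodup_cons]
    exact ⟨hz, hnd⟩
  · simp only [List.length_append, List.length_cons]; omega
  · rw [List.head?_append, List.head?_append]; rfl
  · have e1 : l₁ ++ a :: z :: b :: l₂ = (l₁ ++ [a, z]) ++ b :: l₂ := by simp
    have e2 : l₁ ++ a :: b :: l₂ = (l₁ ++ [a]) ++ b :: l₂ := by simp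
    rw [e1, e2, List.getLast?_append_of_ne_nil _ (List.cons_ne_nil b l₂),
      List.getLast?_append_of_ne_nil _ (List.cons_ne_nil b l₂)]
  · have hperm : (l₁ ++ a :: z :: b :: l₂) ~ z :: (l₁ ++ a :: b :: l₂) := by
      have : l₁ ++ a :: z :: b :: l₂ = (l₁ ++ [a]) ++ z :: (b :: l₂) := by simp
      rw [this]
      refine (List.perm_middle (a := z) (l₁ := l₁ ++ [a]) (l₂ := b :: l₂)).trans
        (List.Perm.cons z ?_)
      simp
    ext v
    simp only [List.mem_toFinset, Finset.mem_insert, hperm.mem_iff, List.mem_cons]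


end
section
variable {V : Type} [DecidableEq V] (G : SimpleGraph V) [DecidableRel G.Adj] (S : Finset V)

/-- Number of non-neighbours of `v` inside `S`. -/
def nonDeg (v : V) : ℕ := (S.filter (fun u => ¬ G.Adj v u ∧ u ≠ v)).card

lemma sum_nonDeg :
    ∑ v ∈ S, nonDeg G S v
      = ((S ×ˢ S).filter fun p => p.1 ≠ p.2 ∧ ¬ G.Adj p.1 p.2).card := by
  rw [Finset.card_filter, Finset.sum_product]
  refine Finset.sum_congr rfl fun v _ => ?_
  rw [nonDeg, Finset.card_filter]
  refine Finset.sum_congr rfl fun u _ => ?_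
  by_cases h : v = u
  · subst h; simp
  · by_cases h2 : G.Adj v u <;> simp [h, h2, Ne.symm h]

lemma filter_adj_card (F : Finset V) (hF : F ⊆ S) (e : V) :
    F.card ≤ (F.filter (G.Adj e)).card + nonDeg G S e + 1 := by
  have hsub : F ⊆ F.filter (G.Adj e) ∪ insert e (S.filter (fun u => ¬ G.Adj e u ∧ u ≠ e)) := by
    intro u hu
    by_cases hadj : G.Adj e u
    · exact Finset.mem_union_left _ (Finset.mem_filter.mpr ⟨hu, hadj⟩)
    · refine Finset.mem_union_right _ ?_
      rcases eq_or_ne u e with rfl | hne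
      · exact Finset.mem_insert_self _ _
      · exact Finset.mem_insert_of_mem (Finset.mem_filter.mpr ⟨hF hu, hadj, hne⟩)
  have h1 := Finset.card_le_card hsub
  have h2 := Finset.card_union_le (F.filter (G.Adj e))
    (insert e (S.filter (fun u => ¬ G.Adj e u ∧ u ≠ e)))
  have h3 := Finset.card_insert_le e (S.filter (fun u => ¬ G.Adj e u ∧ u ≠ e))
  rw [nonDeg]
  omega

lemma countP_le_nonDeg (l : List V) (z : V) (hnd : l.Nodup) (hmem : ∀ v ∈ l, v ∈ S)
    (hz : z ∉ l) : l.countP (fun v => decide (¬ G.Adj z v)) ≤ nonDeg G S z := by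
  rw [List.countP_eq_length_filter]
  have hndf : (l.filter (fun v => decide (¬ G.Adj z v))).Nodup := hnd.filter _
  rw [← List.toFinset_card_of_nodup hndf]
  apply Finset.card_le_card
  intro u hu
  rw [List.mem_toFinset, List.mem_filter] at hu
  obtain ⟨hul, hu2⟩ := hu
  simp only [decide_eq_true_eq] at hu2
  refine Finset.mem_filter.mpr ⟨hmem u hul, hu2, ?_⟩
  rintro rfl; exact hz hul

lemma insert_all (n : ℕ) (hn : 100000 ≤ n) (hS : 49 * n ≤ 100 * S.card)
    (hE : 10 ^ 4 * ((S ×ˢ S).filter fun p => p.1 ≠ p.2 ∧ ¬ G.Adj p.1 p.2).card ≤ 2 * n ^ 2) :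
    ∀ (q : ℕ) (l : List V), (S \ l.toFinset).card = q → l.Chain' G.Adj → l.Nodup →
    l.toFinset ⊆ S → n ≤ 50 * l.length →
    (∀ z ∈ S \ l.toFinset, 5 * nonDeg G S z < n) →
    ∃ l' : List V, l'.Chain' G.Adj ∧ l'.Nodup ∧ l'.toFinset = S ∧
      l'.head? = l.head? ∧ l'.getLast? = l.getLast? := by
  intro q
  induction q with
  | zero =>
    intro l hq hc hnd hsub _ _
    refine ⟨l, hc, hnd, ?_, rfl, rfl⟩
    have hsub2 : S ⊆ l.toFinset :=
      Finset.sdiff_eq_empty_iff_subset.mp (Finset.card_eq_zero.mp hq)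
    exact Finset.Subset.antisymm hsub hsub2
  | succ q ih =>
    intro l hq hc hnd hsub hlen hgood
    set R := S \ l.toFinset with hR
    have hRne : R.Nonempty := by rw [← Finset.card_pos, hq]; omega
    obtain ⟨z, hzR, hzmin⟩ := Finset.exists_min_image R (nonDeg G S) hRne
    set c := nonDeg G S z with hcdef
    -- c * (q+1) ≤ E
    have hsum1 : R.card * c ≤ ∑ v ∈ R, nonDeg G S v := by
      have := Finset.card_nsmul_le_sum R (nonDeg G S) c hzmin
      simpa [smul_eq_mul] using this
    have hsum2 : ∑ v ∈ R, nonDeg G S v ≤ ∑ v ∈ S, nonDeg G S v :=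
      Finset.sum_le_sum_of_subset (Finset.sdiff_subset)
    have hRq : R.card = q + 1 := hq
    rw [hRq] at hsum1
    have hEc : (q + 1) * c ≤ ((S ×ˢ S).filter fun p => p.1 ≠ p.2 ∧ ¬ G.Adj p.1 p.2).card := by
      rw [← sum_nonDeg]
      exact hsum1.trans hsum2
    have hzbad : 5 * c < n := hgood z hzR
    have hzS : z ∈ S := (Finset.mem_sdiff.mp hzR).1
    have hznl : z ∉ l := fun h => (Finset.mem_sdiff.mp hzR).2 (List.mem_toFinset.mpr h)
    have hlcard : l.toFinset.card = l.length := List.toFinset_card_of_nodup hnd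
    have hql : q + 1 + l.length = S.card := by
      have h1 : R.card = S.card - l.toFinset.card := Finset.card_sdiff_of_subset hsub
      have h2 := Finset.card_le_card hsub
      omega
    -- key length bound
    have hkey : 2 * c + 2 ≤ l.length := by
      rcases le_or_gt (100 * (q + 1)) (8 * n) with hcase | hcase
      · have h41 : 41 * n ≤ 100 * l.length := by omega
        omega
      · have h8 : 8 * n ≤ 100 * (q + 1) := le_of_lt hcase
        have h1 : 8 * n * c ≤ 100 * ((q + 1) * c) := by
          calc 8 * n * c ≤ 100 * (q + 1) * c := Nat.mul_le_mul_right c h8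
          _ = 100 * ((q + 1) * c) := by ring
        have h2 : 100 * (8 * n * c) ≤ 100 * (100 * ((q+1) * c)) := Nat.mul_le_mul_left _ h1
        have h3 : 10 ^ 4 * ((q + 1) * c) ≤ 2 * n ^ 2 := le_trans (Nat.mul_le_mul_left _ hEc) hE
        have h4 : 800 * (n * c) ≤ 2 * n ^ 2 := by nlinarith
        have h5 : n * (800 * c) ≤ n * (2 * n) := by nlinarith [sq_nonneg n]
        have h6 : 800 * c ≤ 2 * n := Nat.le_of_mul_le_mul_left h5 (by omega)
        omega
    have hcount : 2 * l.countP (fun v => decide (¬ G.Adj z v)) + 2 ≤ l.length := by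
      have := countP_le_nonDeg G S l z hnd (fun v hv => hsub (List.mem_toFinset.mpr hv)) hznl
      omega
    obtain ⟨l₁, a, b, l₂, heq, h1, h2⟩ :=
      exists_adj_pair (G := G) z l.length l le_rfl hcount
    obtain ⟨l', hc', hnd', hlen', hhd', hlast', hfin'⟩ :=
      insert_mid l z hc hnd hznl ⟨l₁, a, b, l₂, heq, h1, h2⟩
    have hq' : (S \ l'.toFinset).card = q := by
      rw [hfin']
      have : S \ insert z l.toFinset = (S \ l.toFinset).erase z := by
        ext u
        simp only [Finset.mem_sdiff, Finset.mem_insert, Finset.mem_erase]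
        tauto
      rw [this, Finset.card_erase_of_mem hzR, hq]
      omega
    obtain ⟨l'', hc'', hnd'', hfin'', hhd'', hlast''⟩ := ih l' hq' hc' hnd'
      (by rw [hfin']; exact Finset.insert_subset hzS hsub)
      (by omega)
      (by intro z' hz'
          apply hgood
          rw [hfin'] at hz'
          have h1 : z' ∈ S := (Finset.mem_sdiff.mp hz').1
          have h2 := (Finset.mem_sdiff.mp hz').2
          exact Finset.mem_sdiff.mpr
            ⟨h1, fun hmem => h2 (Finset.mem_insert_of_mem hmem)⟩)
    exact ⟨l'', hc'', hnd'', hfin'', hhd''.trans hhd', hlast''.trans hlast'⟩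

/-- Bad vertices: at least `n/5` non-neighbours in `S`. -/
def badSet (n : ℕ) : Finset V := S.filter (fun v => n ≤ 5 * nonDeg G S v)

/-- Super-good vertices: fewer than `n/500` non-neighbours in `S`. -/
def sgSet (n : ℕ) : Finset V := S.filter (fun v => 500 * nonDeg G S v < n)

variable (n : ℕ)

lemma sg_not_bad {v : V} (hv : v ∈ sgSet G S n) : v ∉ badSet G S n := by
  simp only [sgSet, badSet, Finset.mem_filter] at hv ⊢
  intro h
  have h1 := hv.2
  have h2 := h.2
  omega

section cards
variable (hn : 100000 ≤ n) (hS : 49 * n ≤ 100 * S.card)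
  (hE : 10 ^ 4 * ((S ×ˢ S).filter fun p => p.1 ≠ p.2 ∧ ¬ G.Adj p.1 p.2).card ≤ 2 * n ^ 2)

include hn hE in
lemma bad_card : 1000 * (badSet G S n).card ≤ n := by
  have h1 : (badSet G S n).card • n ≤ ∑ v ∈ badSet G S n, 5 * nonDeg G S v :=
    Finset.card_nsmul_le_sum _ _ _ (fun v hv => (Finset.mem_filter.mp hv).2)
  rw [smul_eq_mul, ← Finset.mul_sum] at h1
  have h2 : ∑ v ∈ badSet G S n, nonDeg G S v ≤ ∑ v ∈ S, nonDeg G S v :=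
    Finset.sum_le_sum_of_subset (Finset.filter_subset _ _)
  rw [sum_nonDeg] at h2
  have h3 : 10 ^ 4 * ((badSet G S n).card * n) ≤ 10 * n ^ 2 := by nlinarith
  have h4 : n * (10 ^ 4 * (badSet G S n).card) ≤ n * (10 * n) := by nlinarith
  have h5 : 10 ^ 4 * (badSet G S n).card ≤ 10 * n :=
    Nat.le_of_mul_le_mul_left h4 (by omega)
  omega

include hn hE in
lemma nonsg_card : 10 * (S \ sgSet G S n).card ≤ n := by
  have hmem : ∀ v ∈ S \ sgSet G S n, n ≤ 500 * nonDeg G S v := by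
    intro v hv
    have h1 := (Finset.mem_sdiff.mp hv).1
    have h2 := (Finset.mem_sdiff.mp hv).2
    rw [sgSet, Finset.mem_filter] at h2
    by_contra hcon
    exact h2 ⟨h1, by omega⟩
  have h1 : (S \ sgSet G S n).card • n ≤ ∑ v ∈ S \ sgSet G S n, 500 * nonDeg G S v :=
    Finset.card_nsmul_le_sum _ _ _ hmem
  rw [smul_eq_mul, ← Finset.mul_sum] at h1
  have h2 : ∑ v ∈ S \ sgSet G S n, nonDeg G S v ≤ ∑ v ∈ S, nonDeg G S v :=
    Finset.sum_le_sum_of_subset (Finset.sdiff_subset)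
  rw [sum_nonDeg] at h2
  have h4 : n * (10 ^ 4 * (S \ sgSet G S n).card) ≤ n * (10 ^ 3 * n) := by nlinarith
  have h5 : 10 ^ 4 * (S \ sgSet G S n).card ≤ 10 ^ 3 * n :=
    Nat.le_of_mul_le_mul_left h4 (by omega)
  omega

include hn hS hE in
lemma sg_card : 39 * n ≤ 100 * (sgSet G S n).card := by
  have h1 := nonsg_card G S n hn hE
  have h2 : S.card ≤ (sgSet G S n).card + (S \ sgSet G S n).card := by
    have := Finset.card_le_card (s := S) (t := sgSet G S n ∪ (S \ sgSet G S n)) ?_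
    · have := Finset.card_union_le (sgSet G S n) (S \ sgSet G S n)
      omega
    · intro v hv
      by_cases h : v ∈ sgSet G S n
      · exact Finset.mem_union_left _ h
      · exact Finset.mem_union_right _ (Finset.mem_sdiff.mpr ⟨hv, h⟩)
  omega

end cards

lemma pick (F U : Finset V) (h : U.card < F.card) : ∃ v, v ∈ F ∧ v ∉ U := by
  have h2 : 0 < (F \ U).card :=
    lt_of_lt_of_le (Nat.sub_pos_of_lt h) (Finset.le_card_sdiff U F)
  obtain ⟨v, hv⟩ := Finset.card_pos.mp h2
  exact ⟨v, (Finset.mem_sdiff.mp hv).1, (Finset.mem_sdiff.mp hv).2⟩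


/-- Absorb all bad vertices into the path. -/
lemma absorb (n : ℕ) (hn : 100000 ≤ n) (hS : 49 * n ≤ 100 * S.card)
    (hdeg : ∀ v ∈ S, n ≤ 100 * (S.filter (G.Adj v)).card)
    (hE : 10 ^ 4 * ((S ×ˢ S).filter fun p => p.1 ≠ p.2 ∧ ¬ G.Adj p.1 p.2).card ≤ 2 * n ^ 2)
    (x : V) (Res : Finset V) (hRes : Res.card ≤ 2) :
    ∀ (k : ℕ) (l : List V) (e : V),
      l.Chain' G.Adj → l.Nodup → (∀ v ∈ l, v ∈ S) → l.head? = some x →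
      l.getLast? = some e → e ∈ sgSet G S n → (∀ v ∈ Res, v ∉ l) →
      ((badSet G S n \ l.toFinset) \ Res).card = k →
      1000 * (l.length + 4 * k) ≤ 6 * n →
      ∃ (l' : List V) (e' : V), l'.Chain' G.Adj ∧ l'.Nodup ∧ (∀ v ∈ l', v ∈ S) ∧
        l'.head? = some x ∧ l'.getLast? = some e' ∧ e' ∈ sgSet G S n ∧
        (∀ v ∈ Res, v ∉ l') ∧ ((badSet G S n \ l'.toFinset) \ Res) = ∅ ∧
        l'.length = l.length + 4 * k ∧ (∀ v ∈ l, v ∈ l') := by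
  intro k
  induction k with
  | zero =>
    intro l e h1 h2 h3 h4 h5 h6 h7 h8 h9
    exact ⟨l, e, h1, h2, h3, h4, h5, h6, h7, Finset.card_eq_zero.mp h8, by omega,
      fun v h => h⟩
  | succ k ih =>
    intro l e hc hnd hmem hhd hlast hesg hres hk hbudget
    have hkpos : 0 < ((badSet G S n \ l.toFinset) \ Res).card := by omega
    obtain ⟨d, hd⟩ := Finset.card_pos.mp hkpos
    have hdbad : d ∈ badSet G S n := (Finset.mem_sdiff.mp (Finset.mem_sdiff.mp hd).1).1
    have hdnl : d ∉ l.toFinset := (Finset.mem_sdiff.mp (Finset.mem_sdiff.mp hd).1).2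
    have hdres : d ∉ Res := (Finset.mem_sdiff.mp hd).2
    have hdS : d ∈ S := (Finset.mem_filter.mp hdbad).1
    have hddeg := hdeg d hdS
    have hbadcard := bad_card G S n hn hE
    have hsgcard := sg_card G S n hn hS hE
    have hlenF : l.toFinset.card ≤ l.length := List.toFinset_card_le l
    have hce : 500 * nonDeg G S e < n := (Finset.mem_filter.mp hesg).2
    -- pick u
    have hFu := filter_adj_card G S (S.filter (G.Adj d)) (Finset.filter_subset _ _) e
    obtain ⟨u, huF, huU⟩ := pick ((S.filter (G.Adj d)).filter (G.Adj e))
      (badSet G S n ∪ l.toFinset ∪ Res) (by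
        have c1 := Finset.card_union_le (badSet G S n ∪ l.toFinset) Res
        have c2 := Finset.card_union_le (badSet G S n) l.toFinset
        omega)
    have huS : u ∈ S := (Finset.mem_filter.mp (Finset.mem_filter.mp huF).1).1
    have hadj_du : G.Adj d u := (Finset.mem_filter.mp (Finset.mem_filter.mp huF).1).2
    have hadj_eu : G.Adj e u := (Finset.mem_filter.mp huF).2
    have hubad : u ∉ badSet G S n := fun h => huU (Finset.mem_union_left _
      (Finset.mem_union_left _ h))
    have hul : u ∉ l.toFinset := fun h => huU (Finset.mem_union_left _
      (Finset.mem_union_right _ h))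
    have hures : u ∉ Res := fun h => huU (Finset.mem_union_right _ h)
    -- pick w
    obtain ⟨w, hwF, hwU⟩ := pick (S.filter (G.Adj d))
      (badSet G S n ∪ l.toFinset ∪ Res ∪ {u}) (by
        have c1 := Finset.card_union_le (badSet G S n ∪ l.toFinset ∪ Res) ({u} : Finset V)
        have c2 := Finset.card_union_le (badSet G S n ∪ l.toFinset) Res
        have c3 := Finset.card_union_le (badSet G S n) l.toFinset
        have c4 : ({u} : Finset V).card = 1 := Finset.card_singleton u
        omega)
    have hwS : w ∈ S := (Finset.mem_filter.mp hwF).1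
    have hadj_dw : G.Adj d w := (Finset.mem_filter.mp hwF).2
    have hwbad : w ∉ badSet G S n := fun h => hwU (Finset.mem_union_left _
      (Finset.mem_union_left _ (Finset.mem_union_left _ h)))
    have hwl : w ∉ l.toFinset := fun h => hwU (Finset.mem_union_left _
      (Finset.mem_union_left _ (Finset.mem_union_right _ h)))
    have hwres : w ∉ Res := fun h => hwU (Finset.mem_union_left _
      (Finset.mem_union_right _ h))
    have hwu : w ≠ u := fun h => hwU (Finset.mem_union_right _ (by simp [h]))
    have hcw : 5 * nonDeg G S w < n := by
      by_contra hcon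
      exact hwbad (Finset.mem_filter.mpr ⟨hwS, by omega⟩)
    -- pick t
    have hFt := filter_adj_card G S (sgSet G S n) (Finset.filter_subset _ _) w
    obtain ⟨t, htF, htU⟩ := pick (sgSet G S n |>.filter (G.Adj w))
      (l.toFinset ∪ Res ∪ {u, d, w}) (by
        have c1 := Finset.card_union_le (l.toFinset ∪ Res) ({u, d, w} : Finset V)
        have c2 := Finset.card_union_le l.toFinset Res
        have c3 : ({u, d, w} : Finset V).card ≤ 3 := by
          apply le_trans (Finset.card_insert_le _ _)
          have := Finset.card_insert_le d ({w} : Finset V)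
          simp at this ⊢
          omega
        omega)
    have htsg : t ∈ sgSet G S n := (Finset.mem_filter.mp htF).1
    have htS : t ∈ S := (Finset.mem_filter.mp htsg).1
    have hadj_wt : G.Adj w t := (Finset.mem_filter.mp htF).2
    have htl : t ∉ l.toFinset := fun h => htU (Finset.mem_union_left _
      (Finset.mem_union_left _ h))
    have htres : t ∉ Res := fun h => htU (Finset.mem_union_left _
      (Finset.mem_union_right _ h))
    have htu : t ≠ u := fun h => htU (Finset.mem_union_right _ (by simp [h]))
    have htd : t ≠ d := fun h => htU (Finset.mem_union_right _ (by simp [h]))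
    have htw : t ≠ w := fun h => htU (Finset.mem_union_right _ (by simp [h]))
    -- distinctness
    have hud : u ≠ d := fun h => hubad (h ▸ hdbad)
    have hwd : w ≠ d := fun h => hwbad (h ▸ hdbad)
    have hdl : d ∉ l := fun h => hdnl (List.mem_toFinset.mpr h)
    have hul' : u ∉ l := fun h => hul (List.mem_toFinset.mpr h)
    have hwl' : w ∉ l := fun h => hwl (List.mem_toFinset.mpr h)
    have htl' : t ∉ l := fun h => htl (List.mem_toFinset.mpr h)
    set l' : List V := l ++ [u, d, w, t] with hl'def
    have hchain : l'.Chain' G.Adj := by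
      rw [hl'def]; unfold List.Chain'; rw [List.isChain_append]
      refine ⟨hc, ?_, ?_⟩
      · exact List.isChain_cons_cons.mpr ⟨hadj_du.symm,
          List.isChain_cons_cons.mpr ⟨hadj_dw,
          List.isChain_cons_cons.mpr ⟨hadj_wt, List.isChain_singleton t⟩⟩⟩
      · intro a ha b hb
        rw [hlast, Option.mem_some_iff] at ha
        simp only [List.head?_cons, Option.mem_some_iff] at hb
        rw [← ha, ← hb] at *
        exact hadj_eu
    have hnodup : l'.Nodup := by
      rw [hl'def, List.nodup_append']
      refine ⟨hnd, ?_, ?_⟩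
      · refine List.nodup_cons.mpr ⟨?_, List.nodup_cons.mpr ⟨?_,
          List.nodup_cons.mpr ⟨?_, List.nodup_singleton t⟩⟩⟩
        · simp only [List.mem_cons, List.mem_singleton, List.not_mem_nil, or_false, not_or]
          exact ⟨hud, fun h => hwu h.symm, fun h => htu h.symm⟩
        · simp only [List.mem_cons, List.mem_singleton, List.not_mem_nil, or_false, not_or]
          exact ⟨fun h => hwd h.symm, fun h => htd h.symm⟩
        · simp only [List.mem_singleton]
          exact fun h => htw h.symm
      · intro a hal ham
        simp only [List.mem_cons, List.mem_singleton, List.not_mem_nil, or_false] at ham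
        rcases ham with rfl | rfl | rfl | rfl
        · exact hul' hal
        · exact hdl hal
        · exact hwl' hal
        · exact htl' hal
    have hmem' : ∀ v ∈ l', v ∈ S := by
      intro v hv
      rw [hl'def, List.mem_append] at hv
      rcases hv with hv | hv
      · exact hmem v hv
      · simp only [List.mem_cons, List.mem_singleton, List.not_mem_nil, or_false] at hv
        rcases hv with rfl | rfl | rfl | rfl
        exacts [huS, hdS, hwS, htS]
    have hhd' : l'.head? = some x := by
      rw [hl'def, List.head?_append, hhd]; rfl
    have hlast' : l'.getLast? = some t := by
      rw [hl'def, List.getLast?_append_of_ne_nil _ (by simp)]; rfl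
    have hres' : ∀ v ∈ Res, v ∉ l' := by
      intro v hv hvl
      rw [hl'def, List.mem_append] at hvl
      rcases hvl with hvl | hvl
      · exact hres v hv hvl
      · simp only [List.mem_cons, List.mem_singleton, List.not_mem_nil, or_false] at hvl
        rcases hvl with rfl | rfl | rfl | rfl
        exacts [hures hv, hdres hv, hwres hv, htres hv]
    have hfin' : l'.toFinset = l.toFinset ∪ {u, d, w, t} := by
      rw [hl'def, List.toFinset_append]
      congr 1
      ext v
      simp [or_assoc]
    have hkset : (badSet G S n \ l'.toFinset) \ Res
        = ((badSet G S n \ l.toFinset) \ Res).erase d := by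
      ext v
      rw [hfin']
      simp only [Finset.mem_sdiff, Finset.mem_union, Finset.mem_erase, Finset.mem_insert,
        Finset.mem_singleton]
      constructor
      · rintro ⟨⟨hvb, hvn⟩, hvr⟩
        push_neg at hvn
        exact ⟨hvn.2.2.1, ⟨⟨hvb, hvn.1⟩, hvr⟩⟩
      · rintro ⟨hvd, ⟨⟨hvb, hvn⟩, hvr⟩⟩
        refine ⟨⟨hvb, ?_⟩, hvr⟩
        push_neg
        refine ⟨hvn, fun h => hubad (h ▸ hvb), hvd, fun h => hwbad (h ▸ hvb),
          fun h => (sg_not_bad G S n htsg) (h ▸ hvb)⟩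
    have hk' : ((badSet G S n \ l'.toFinset) \ Res).card = k := by
      rw [hkset, Finset.card_erase_of_mem hd, hk]
      omega
    have hlen' : l'.length = l.length + 4 := by
      rw [hl'def, List.length_append]; rfl
    obtain ⟨l'', e'', r1, r2, r3, r4, r5, r6, r7, r8, r9, r10⟩ :=
      ih l' t hchain hnodup hmem' hhd' hlast' htsg hres' hk' (by omega)
    refine ⟨l'', e'', r1, r2, r3, r4, r5, r6, r7, r8, by omega, ?_⟩
    intro v hv
    exact r10 v (by rw [hl'def, List.mem_append]; exact Or.inl hv)

/-- Pad the path with super-good vertices. -/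
lemma pad (n : ℕ) (hn : 100000 ≤ n) (hS : 49 * n ≤ 100 * S.card)
    (hE : 10 ^ 4 * ((S ×ˢ S).filter fun p => p.1 ≠ p.2 ∧ ¬ G.Adj p.1 p.2).card ≤ 2 * n ^ 2)
    (x : V) (Res : Finset V) (hRes : Res.card ≤ 2) :
    ∀ (p : ℕ) (l : List V) (e : V),
      l.Chain' G.Adj → l.Nodup → (∀ v ∈ l, v ∈ S) → l.head? = some x →
      l.getLast? = some e → e ∈ sgSet G S n → (∀ v ∈ Res, v ∉ l) →
      500 * (l.length + p) ≤ 20 * n →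
      ∃ (l' : List V) (e' : V), l'.Chain' G.Adj ∧ l'.Nodup ∧ (∀ v ∈ l', v ∈ S) ∧
        l'.head? = some x ∧ l'.getLast? = some e' ∧ e' ∈ sgSet G S n ∧
        (∀ v ∈ Res, v ∉ l') ∧ l'.length = l.length + p ∧ (∀ v ∈ l, v ∈ l') := by
  intro p
  induction p with
  | zero =>
    intro l e h1 h2 h3 h4 h5 h6 h7 h8
    exact ⟨l, e, h1, h2, h3, h4, h5, h6, h7, by omega, fun v h => h⟩
  | succ p ih =>
    intro l e hc hnd hmem hhd hlast hesg hres hbudget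
    have hsgcard := sg_card G S n hn hS hE
    have hlenF : l.toFinset.card ≤ l.length := List.toFinset_card_le l
    have hce : 500 * nonDeg G S e < n := (Finset.mem_filter.mp hesg).2
    have hFg := filter_adj_card G S (sgSet G S n) (Finset.filter_subset _ _) e
    obtain ⟨g, hgF, hgU⟩ := pick (sgSet G S n |>.filter (G.Adj e)) (l.toFinset ∪ Res) (by
      have c1 := Finset.card_union_le l.toFinset Res
      omega)
    have hgsg : g ∈ sgSet G S n := (Finset.mem_filter.mp hgF).1
    have hgS : g ∈ S := (Finset.mem_filter.mp hgsg).1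
    have hadj_eg : G.Adj e g := (Finset.mem_filter.mp hgF).2
    have hgl : g ∉ l := fun h => hgU (Finset.mem_union_left _ (List.mem_toFinset.mpr h))
    have hgres : g ∉ Res := fun h => hgU (Finset.mem_union_right _ h)
    set l' : List V := l ++ [g] with hl'def
    have hchain : l'.Chain' G.Adj := by
      rw [hl'def]; unfold List.Chain'; rw [List.isChain_append]
      refine ⟨hc, List.isChain_singleton g, ?_⟩
      intro a ha b hb
      rw [hlast, Option.mem_some_iff] at ha
      simp only [List.head?_cons, Option.mem_some_iff] at hb
      rw [← ha, ← hb] at *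
      exact hadj_eg
    have hnodup : l'.Nodup := by
      rw [hl'def, List.nodup_append']
      exact ⟨hnd, List.nodup_singleton g, by
        intro a hal ham
        simp only [List.mem_singleton] at ham
        subst ham
        exact hgl hal⟩
    have hmem' : ∀ v ∈ l', v ∈ S := by
      intro v hv
      rw [hl'def, List.mem_append] at hv
      rcases hv with hv | hv
      · exact hmem v hv
      · simp only [List.mem_singleton] at hv; subst hv; exact hgS
    have hhd' : l'.head? = some x := by
      rw [hl'def, List.head?_append, hhd]; rfl
    have hlast' : l'.getLast? = some g := by
      rw [hl'def, List.getLast?_append_of_ne_nil _ (by simp)]; rfl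
    have hres' : ∀ v ∈ Res, v ∉ l' := by
      intro v hv hvl
      rw [hl'def, List.mem_append] at hvl
      rcases hvl with hvl | hvl
      · exact hres v hv hvl
      · simp only [List.mem_singleton] at hvl; subst hvl; exact hgres hv
    obtain ⟨l'', e'', r1, r2, r3, r4, r5, r6, r7, r8, r9⟩ :=
      ih l' g hchain hnodup hmem' hhd' hlast' hgsg hres' (by
        have : l'.length = l.length + 1 := by rw [hl'def, List.length_append]; rfl
        omega)
    refine ⟨l'', e'', r1, r2, r3, r4, r5, r6, r7, by
      have : l'.length = l.length + 1 := by rw [hl'def, List.length_append]; rfl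
      omega, ?_⟩
    intro v hv
    exact r9 v (by rw [hl'def, List.mem_append]; exact Or.inl hv)

/-- Main lemma: a Hamiltonian path on `S` between any two prescribed vertices. -/
lemma ham_path (n : ℕ) (hn : 100000 ≤ n) (hS : 49 * n ≤ 100 * S.card)
    (hdeg : ∀ v ∈ S, n ≤ 100 * (S.filter (G.Adj v)).card)
    (hE : 10 ^ 4 * ((S ×ˢ S).filter fun p => p.1 ≠ p.2 ∧ ¬ G.Adj p.1 p.2).card ≤ 2 * n ^ 2)
    (x y : V) (hx : x ∈ S) (hy : y ∈ S) (hxy : x ≠ y) :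
    ∃ l : List V, l.Chain' G.Adj ∧ l.Nodup ∧ l.toFinset = S ∧
      l.head? = some x ∧ l.getLast? = some y := by
  have hbadcard := bad_card G S n hn hE
  have hsgcard := sg_card G S n hn hS hE
  -- choose uy
  obtain ⟨uy, huyF, huyU⟩ := pick (S.filter (G.Adj y)) (badSet G S n ∪ {x, y}) (by
    have c1 := Finset.card_union_le (badSet G S n) ({x, y} : Finset V)
    have c2 : ({x, y} : Finset V).card ≤ 2 := Finset.card_insert_le x {y}
    have := hdeg y hy
    omega)
  have huyS : uy ∈ S := (Finset.mem_filter.mp huyF).1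
  have hadj_yuy : G.Adj y uy := (Finset.mem_filter.mp huyF).2
  have huybad : uy ∉ badSet G S n := fun h => huyU (Finset.mem_union_left _ h)
  have huyx : uy ≠ x := fun h => huyU (Finset.mem_union_right _ (by simp [h]))
  have huyy : uy ≠ y := hadj_yuy.ne'
  have hcuy : 5 * nonDeg G S uy < n := by
    by_contra hcon
    exact huybad (Finset.mem_filter.mpr ⟨huyS, by omega⟩)
  -- choose ux
  obtain ⟨ux, huxF, huxU⟩ := pick (S.filter (G.Adj x)) (badSet G S n ∪ {y, uy}) (by
    have c1 := Finset.card_union_le (badSet G S n) ({y, uy} : Finset V)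
    have c2 : ({y, uy} : Finset V).card ≤ 2 := Finset.card_insert_le y {uy}
    have := hdeg x hx
    omega)
  have huxS : ux ∈ S := (Finset.mem_filter.mp huxF).1
  have hadj_xux : G.Adj x ux := (Finset.mem_filter.mp huxF).2
  have huxbad : ux ∉ badSet G S n := fun h => huxU (Finset.mem_union_left _ h)
  have huxy : ux ≠ y := fun h => huxU (Finset.mem_union_right _ (by simp [h]))
  have huxuy : ux ≠ uy := fun h => huxU (Finset.mem_union_right _ (by simp [h]))
  have huxx : ux ≠ x := hadj_xux.ne'
  have hcux : 5 * nonDeg G S ux < n := by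
    by_contra hcon
    exact huxbad (Finset.mem_filter.mpr ⟨huxS, by omega⟩)
  -- choose tx
  have hFt := filter_adj_card G S (sgSet G S n) (Finset.filter_subset _ _) ux
  obtain ⟨tx, htxF, htxU⟩ := pick (sgSet G S n |>.filter (G.Adj ux))
    ({x, y, ux, uy} : Finset V) (by
      have c3 : ({x, y, ux, uy} : Finset V).card ≤ 4 := by
        apply le_trans (Finset.card_insert_le _ _)
        have h1 := Finset.card_insert_le y ({ux, uy} : Finset V)
        have h2 := Finset.card_insert_le ux ({uy} : Finset V)
        simp only [Finset.card_singleton] at h2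
        omega
      omega)
  have htxsg : tx ∈ sgSet G S n := (Finset.mem_filter.mp htxF).1
  have htxS : tx ∈ S := (Finset.mem_filter.mp htxsg).1
  have hadj_uxtx : G.Adj ux tx := (Finset.mem_filter.mp htxF).2
  have htxx : tx ≠ x := fun h => htxU (by simp [h])
  have htxy : tx ≠ y := fun h => htxU (by simp [h])
  have htxux : tx ≠ ux := hadj_uxtx.ne'
  have htxuy : tx ≠ uy := fun h => htxU (by simp [h])
  -- the initial path
  set Res : Finset V := {y, uy} with hResdef
  have hRescard : Res.card ≤ 2 := Finset.card_insert_le y {uy}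
  set l₀ : List V := [x, ux, tx] with hl₀def
  have hc₀ : l₀.Chain' G.Adj :=
    List.isChain_cons_cons.mpr ⟨hadj_xux, List.isChain_cons_cons.mpr ⟨hadj_uxtx, List.isChain_singleton tx⟩⟩
  have hnd₀ : l₀.Nodup := by
    refine List.nodup_cons.mpr ⟨?_, List.nodup_cons.mpr ⟨?_, List.nodup_singleton tx⟩⟩
    · simp only [List.mem_cons, List.mem_singleton, List.not_mem_nil, or_false, not_or]
      exact ⟨hadj_xux.ne, fun h => htxx h.symm⟩
    · simp only [List.mem_singleton]
      exact fun h => htxux h.symm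
  have hmem₀ : ∀ v ∈ l₀, v ∈ S := by
    intro v hv
    simp only [hl₀def, List.mem_cons, List.mem_singleton, List.not_mem_nil, or_false] at hv
    rcases hv with rfl | rfl | rfl
    exacts [hx, huxS, htxS]
  have hres₀ : ∀ v ∈ Res, v ∉ l₀ := by
    intro v hv hvl
    simp only [hResdef, Finset.mem_insert, Finset.mem_singleton] at hv
    simp only [hl₀def, List.mem_cons, List.mem_singleton, List.not_mem_nil, or_false] at hvl
    rcases hv with rfl | rfl
    · rcases hvl with rfl | rfl | rfl
      exacts [hxy rfl, huxy rfl, htxy rfl]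
    · rcases hvl with rfl | rfl | rfl
      exacts [huyx rfl, huxuy rfl, htxuy rfl]
  set k₀ : ℕ := ((badSet G S n \ l₀.toFinset) \ Res).card with hk₀def
  have hk₀le : k₀ ≤ (badSet G S n).card := by
    apply Finset.card_le_card
    exact (Finset.sdiff_subset).trans (Finset.sdiff_subset)
  have hlen₀ : l₀.length = 3 := rfl
  obtain ⟨l₁, e₁, a1, a2, a3, a4, a5, a6, a7, a8, a9, a10⟩ :=
    absorb G S n hn hS hdeg hE x Res hRescard k₀ l₀ tx hc₀ hnd₀ hmem₀ rfl rfl htxsg hres₀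
      rfl (by omega)
  have hlen₁ : l₁.length = 3 + 4 * k₀ := by omega
  -- padding
  obtain ⟨l₂, e₂, b1, b2, b3, b4, b5, b6, b7, b8, b9⟩ :=
    pad G S n hn hS hE x Res hRescard (n / 50 + 1) l₁ e₁ a1 a2 a3 a4 a5 a6 a7 (by omega)
  have hlen₂ : l₂.length = 3 + 4 * k₀ + (n / 50 + 1) := by omega
  have hlenF₂ : l₂.toFinset.card ≤ l₂.length := List.toFinset_card_le l₂
  have hce₂ : 500 * nonDeg G S e₂ < n := (Finset.mem_filter.mp b6).2
  -- final link
  have hFg₁ := filter_adj_card G S (sgSet G S n) (Finset.filter_subset _ _) e₂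
  have hFg₂ := filter_adj_card G S (sgSet G S n |>.filter (G.Adj e₂))
    ((Finset.filter_subset _ _).trans (Finset.filter_subset _ _)) uy
  obtain ⟨g, hgF, hgU⟩ := pick ((sgSet G S n |>.filter (G.Adj e₂)).filter (G.Adj uy))
    (l₂.toFinset ∪ {y}) (by
      have c1 := Finset.card_union_le l₂.toFinset ({y} : Finset V)
      simp only [Finset.card_singleton] at c1
      omega)
  have hgsg : g ∈ sgSet G S n := (Finset.mem_filter.mp (Finset.mem_filter.mp hgF).1).1
  have hgS : g ∈ S := (Finset.mem_filter.mp hgsg).1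
  have hadj_e₂g : G.Adj e₂ g := (Finset.mem_filter.mp (Finset.mem_filter.mp hgF).1).2
  have hadj_uyg : G.Adj uy g := (Finset.mem_filter.mp hgF).2
  have hgl₂ : g ∉ l₂ := fun h => hgU (Finset.mem_union_left _ (List.mem_toFinset.mpr h))
  have hgy : g ≠ y := fun h => hgU (Finset.mem_union_right _ (by simp [h]))
  have hguy : g ≠ uy := hadj_uyg.ne'
  have hyl₂ : y ∉ l₂ := b7 y (by simp [hResdef])
  have huyl₂ : uy ∉ l₂ := b7 uy (by simp [hResdef])
  set l₃ : List V := l₂ ++ [g, uy, y] with hl₃def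
  have hc₃ : l₃.Chain' G.Adj := by
    rw [hl₃def]; unfold List.Chain'; rw [List.isChain_append]
    refine ⟨b1, List.isChain_cons_cons.mpr ⟨hadj_uyg.symm,
      List.isChain_cons_cons.mpr ⟨hadj_yuy.symm, List.isChain_singleton y⟩⟩, ?_⟩
    intro a ha c hc
    rw [b5, Option.mem_some_iff] at ha
    simp only [List.head?_cons, Option.mem_some_iff] at hc
    rw [← ha, ← hc] at *
    exact hadj_e₂g
  have hnd₃ : l₃.Nodup := by
    rw [hl₃def, List.nodup_append']
    refine ⟨b2, ?_, ?_⟩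
    · refine List.nodup_cons.mpr ⟨?_, List.nodup_cons.mpr ⟨?_, List.nodup_singleton y⟩⟩
      · simp only [List.mem_cons, List.mem_singleton, List.not_mem_nil, or_false, not_or]
        exact ⟨hguy, hgy⟩
      · simp only [List.mem_singleton]
        exact huyy
    · intro a hal ham
      simp only [List.mem_cons, List.mem_singleton, List.not_mem_nil, or_false] at ham
      rcases ham with rfl | rfl | rfl
      exacts [hgl₂ hal, huyl₂ hal, hyl₂ hal]
  have hmem₃ : ∀ v ∈ l₃, v ∈ S := by
    intro v hv
    rw [hl₃def, List.mem_append] at hv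
    rcases hv with hv | hv
    · exact b3 v hv
    · simp only [List.mem_cons, List.mem_singleton, List.not_mem_nil, or_false] at hv
      rcases hv with rfl | rfl | rfl
      exacts [hgS, huyS, hy]
  have hhd₃ : l₃.head? = some x := by
    rw [hl₃def, List.head?_append, b4]; rfl
  have hlast₃ : l₃.getLast? = some y := by
    rw [hl₃def, List.getLast?_append_of_ne_nil _ (by simp)]; rfl
  have hlen₃ : l₃.length = l₂.length + 3 := by
    rw [hl₃def, List.length_append]; rfl
  have hsub₃ : l₃.toFinset ⊆ S := fun v hv => hmem₃ v (List.mem_toFinset.mp hv)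
  -- all bad vertices are on the path
  have hgood₃ : ∀ z ∈ S \ l₃.toFinset, 5 * nonDeg G S z < n := by
    intro z hz
    by_contra hcon
    have hzS : z ∈ S := (Finset.mem_sdiff.mp hz).1
    have hzbad : z ∈ badSet G S n := Finset.mem_filter.mpr ⟨hzS, by omega⟩
    have hznl : z ∉ l₃.toFinset := (Finset.mem_sdiff.mp hz).2
    have hzl₃ : z ∈ l₃ := by
      by_cases hzl₁ : z ∈ l₁.toFinset
      · have : z ∈ l₂ := b9 z (List.mem_toFinset.mp hzl₁)
        rw [hl₃def, List.mem_append]; exact Or.inl this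
      · by_cases hzres : z ∈ Res
        · simp only [hResdef, Finset.mem_insert, Finset.mem_singleton] at hzres
          rw [hl₃def, List.mem_append]
          rcases hzres with rfl | rfl
          · exact Or.inr (by simp)
          · exact Or.inr (by simp)
        · exfalso
          have hzin : z ∈ (badSet G S n \ l₁.toFinset) \ Res :=
            Finset.mem_sdiff.mpr ⟨Finset.mem_sdiff.mpr ⟨hzbad, hzl₁⟩, hzres⟩
          rw [a8] at hzin
          exact Finset.notMem_empty z hzin
    exact hznl (List.mem_toFinset.mpr hzl₃)
  obtain ⟨l₄, d1, d2, d3, d4, d5⟩ := insert_all G S n hn hS hE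
    ((S \ l₃.toFinset).card) l₃ rfl hc₃ hnd₃ hsub₃ (by omega) hgood₃
  exact ⟨l₄, d1, d2, d3, by rw [d4, hhd₃], by rw [d5, hlast₃]⟩

end
end TwoCliques

open TwoCliques in
/-- **Hamiltonicity of "almost two cliques" graphs.**
For `n` sufficiently large: if `G` has `n` vertices, `(A, Aᶜ)` is a cut with both parts of
size at least `0.49 n`, the bipartite graph between `A` and `Aᶜ` has two vertex-disjoint
edges, and both induced subgraphs have minimum degree at least `n/100` and at most
`10⁻⁴ n²` non-edges (counted here as ordered pairs, hence `2 · 10⁻⁴ n²`),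
then `G` is Hamiltonian. -/
theorem two_cliques_hamiltonian :
    ∃ n₀ : ℕ, ∀ (V : Type) [Fintype V] [DecidableEq V] (G : SimpleGraph V)
      [DecidableRel G.Adj] (A : Finset V),
      n₀ ≤ Fintype.card V →
      (0.49 * (Fintype.card V : ℝ) ≤ A.card) →
      (0.49 * (Fintype.card V : ℝ) ≤ Aᶜ.card) →
      (∃ a₁ ∈ A, ∃ a₂ ∈ A, ∃ b₁ ∈ Aᶜ, ∃ b₂ ∈ Aᶜ, a₁ ≠ a₂ ∧ b₁ ≠ b₂ ∧
        G.Adj a₁ b₁ ∧ G.Adj a₂ b₂) →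
      (∀ v ∈ A, (Fintype.card V : ℝ) / 100 ≤ (A.filter (G.Adj v)).card) →
      (∀ v ∈ Aᶜ, (Fintype.card V : ℝ) / 100 ≤ (Aᶜ.filter (G.Adj v)).card) →
      (((A ×ˢ A).filter (fun p => p.1 ≠ p.2 ∧ ¬ G.Adj p.1 p.2)).card
          ≤ 2 * (Fintype.card V : ℝ) ^ 2 / 10 ^ 4) →
      (((Aᶜ ×ˢ Aᶜ).filter (fun p => p.1 ≠ p.2 ∧ ¬ G.Adj p.1 p.2)).card
          ≤ 2 * (Fintype.card V : ℝ) ^ 2 / 10 ^ 4) →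
      G.IsHamiltonian := by
  refine ⟨100000, ?_⟩
  intro V _ _ G _ A hn hA hAc hcross hdegA hdegB hEA hEB
  set n : ℕ := Fintype.card V with hndef
  obtain ⟨a₁, ha₁, a₂, ha₂, b₁, hb₁, b₂, hb₂, ha12, hb12, hadj1, hadj2⟩ := hcross
  -- convert the real hypotheses into natural-number inequalities
  have hnA : 49 * n ≤ 100 * A.card := by
    have h : (49 * n : ℝ) ≤ 100 * A.card := by nlinarith [hA]
    exact_mod_cast h
  have hnB : 49 * n ≤ 100 * Aᶜ.card := by
    have h : (49 * n : ℝ) ≤ 100 * Aᶜ.card := by nlinarith [hAc]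
    exact_mod_cast h
  have hdegA' : ∀ v ∈ A, n ≤ 100 * (A.filter (G.Adj v)).card := by
    intro v hv
    have h := hdegA v hv
    have h2 : (n : ℝ) ≤ 100 * (A.filter (G.Adj v)).card := by linarith
    exact_mod_cast h2
  have hdegB' : ∀ v ∈ Aᶜ, n ≤ 100 * (Aᶜ.filter (G.Adj v)).card := by
    intro v hv
    have h := hdegB v hv
    have h2 : (n : ℝ) ≤ 100 * (Aᶜ.filter (G.Adj v)).card := by linarith
    exact_mod_cast h2
  have hEA' : 10 ^ 4 * ((A ×ˢ A).filter fun p => p.1 ≠ p.2 ∧ ¬ G.Adj p.1 p.2).card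
      ≤ 2 * n ^ 2 := by
    have h2 : (10 ^ 4 * ((A ×ˢ A).filter fun p => p.1 ≠ p.2 ∧ ¬ G.Adj p.1 p.2).card : ℝ)
        ≤ 2 * (n : ℝ) ^ 2 := by linarith
    exact_mod_cast h2
  have hEB' : 10 ^ 4 * ((Aᶜ ×ˢ Aᶜ).filter fun p => p.1 ≠ p.2 ∧ ¬ G.Adj p.1 p.2).card
      ≤ 2 * n ^ 2 := by
    have h2 : (10 ^ 4 * ((Aᶜ ×ˢ Aᶜ).filter fun p => p.1 ≠ p.2 ∧ ¬ G.Adj p.1 p.2).card : ℝ)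
        ≤ 2 * (n : ℝ) ^ 2 := by linarith
    exact_mod_cast h2
  obtain ⟨lA, cA1, cA2, cA3, cA4, cA5⟩ :=
    ham_path G A n hn hnA hdegA' hEA' a₁ a₂ ha₁ ha₂ ha12
  obtain ⟨lB, cB1, cB2, cB3, cB4, cB5⟩ :=
    ham_path G Aᶜ n hn hnB hdegB' hEB' b₂ b₁ hb₂ hb₁ (Ne.symm hb12)
  have hBne : lB ≠ [] := by
    intro h; rw [h] at cB4; simp at cB4
  have hAne : lA ≠ [] := by
    intro h; rw [h] at cA4; simp at cA4
  set L : List V := lA ++ lB with hLdef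
  have hlenA : lA.length = A.card := by
    rw [← cA3, List.toFinset_card_of_nodup cA2]
  have hlenB : lB.length = Aᶜ.card := by
    rw [← cB3, List.toFinset_card_of_nodup cB2]
  have hcards : A.card + Aᶜ.card = n := Finset.card_add_card_compl A
  have h3 : 3 ≤ L.length := by
    rw [hLdef, List.length_append]
    omega
  have hchain : L.Chain' G.Adj := by
    rw [hLdef]; unfold List.Chain'; rw [List.isChain_append]
    refine ⟨cA1, cB1, ?_⟩
    intro a ha b hb
    rw [cA5, Option.mem_some_iff] at ha
    rw [cB4, Option.mem_some_iff] at hb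
    rw [← ha, ← hb] at *
    exact hadj2
  have hmemA : ∀ v ∈ lA, v ∈ A := by
    intro v hv
    rw [← List.mem_toFinset, cA3] at hv; exact hv
  have hmemB : ∀ v ∈ lB, v ∈ Aᶜ := by
    intro v hv
    rw [← List.mem_toFinset, cB3] at hv; exact hv
  have hnodup : L.Nodup := by
    rw [hLdef, List.nodup_append']
    refine ⟨cA2, cB2, ?_⟩
    intro a haA haB
    have h1 := hmemA a haA
    have h2 := hmemB a haB
    rw [Finset.mem_compl] at h2
    exact h2 h1
  have hall : ∀ v : V, v ∈ L := by
    intro v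
    rw [hLdef, List.mem_append]
    by_cases h : v ∈ A
    · left; rw [← List.mem_toFinset, cA3]; exact h
    · right; rw [← List.mem_toFinset, cB3]; exact Finset.mem_compl.mpr h
  have hLne : L ≠ [] := by
    intro h
    have := h3
    rw [h] at this
    simp at this
  have hLlast : L.getLast? = some b₁ := by
    rw [hLdef, List.getLast?_append_of_ne_nil _ hBne, cB5]
  have hLhead : L.head? = some a₁ := by
    rw [hLdef, List.head?_append, cA4]; rfl
  have hlast_eq : L.getLast hLne = b₁ := by
    have := List.getLast?_eq_getLast hLne
    rw [hLlast] at this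
    exact (Option.some.injEq _ _ ▸ this.symm :)
  have hhead_eq : L.head hLne = a₁ := by
    have := List.head?_eq_head hLne
    rw [hLhead] at this
    exact (Option.some.injEq _ _ ▸ this.symm :)
  apply isHamiltonian_of_list L h3 hchain hnodup hall
  rw [show L.getLast _ = b₁ from hlast_eq, show L.head _ = a₁ from hhead_eq]
  exact hadj1.symm
end

section
/- Let G be an (n+1)-regular graph on 2n vertices and let (A, B) be a partition of V(G) with |A|, |B| > sqrt(n)/100. Then the bipartite graph G[A,B] contains a matching of size at least sqrt(n)/100. -/
set_option maxHeartbeats 1000000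

/-- **Crossing matchings in regular graphs.**
If `G` is `(n+1)`-regular on `2n` vertices and `(A, Aᶜ)` is a cut with both parts of size
greater than `√n / 100`, then the bipartite graph between `A` and `Aᶜ` contains a matching
of size at least `√n / 100`. -/
theorem crossing_matching
    {V : Type*} [Fintype V] [DecidableEq V] (G : SimpleGraph V) [DecidableRel G.Adj]
    (n : ℕ) (hcard : Fintype.card V = 2 * n)
    (hreg : ∀ v, G.degree v = n + 1)
    (A : Finset V)
    (hA : Real.sqrt n / 100 < A.card) (hB : Real.sqrt n / 100 < Aᶜ.card) :
    ∃ M : Finset (V × V),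
      (∀ p ∈ M, p.1 ∈ A ∧ p.2 ∈ Aᶜ ∧ G.Adj p.1 p.2) ∧
      (∀ p ∈ M, ∀ q ∈ M, p ≠ q → p.1 ≠ q.1 ∧ p.2 ≠ q.2) ∧
      Real.sqrt n / 100 ≤ M.card := by
  classical
  set good : Finset (V × V) → Prop := fun M =>
    (∀ p ∈ M, p.1 ∈ A ∧ p.2 ∈ Aᶜ ∧ G.Adj p.1 p.2) ∧
    (∀ p ∈ M, ∀ q ∈ M, p ≠ q → p.1 ≠ q.1 ∧ p.2 ≠ q.2) with hgood
  have hgood_empty : good ∅ := ⟨by simp, by simp⟩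
  obtain ⟨M, hMmem, hMmax⟩ := Finset.exists_max_image
      (Finset.univ.filter fun M => good M) Finset.card
      ⟨∅, by simpa using hgood_empty⟩
  have hMgood : good M := (Finset.mem_filter.mp hMmem).2
  have hMmax' : ∀ M', good M' → M'.card ≤ M.card := fun M' hM' =>
    hMmax M' (Finset.mem_filter.mpr ⟨Finset.mem_univ _, hM'⟩)
  refine ⟨M, hMgood.1, hMgood.2, ?_⟩
  by_contra hcon
  push_neg at hcon
  -- notation
  set m := M.card with hm
  set X : Finset V := M.image Prod.fst with hX
  set Y : Finset V := M.image Prod.snd with hY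
  set A' : Finset V := A \ X with hA'
  set B' : Finset V := Aᶜ \ Y with hB'
  set W : Finset V := X ∪ Y with hW
  have hXA : X ⊆ A := by
    intro x hx
    obtain ⟨p, hp, rfl⟩ := Finset.mem_image.mp hx
    exact (hMgood.1 p hp).1
  have hYB : Y ⊆ Aᶜ := by
    intro y hy
    obtain ⟨p, hp, rfl⟩ := Finset.mem_image.mp hy
    exact (hMgood.1 p hp).2.1
  have hXcard : X.card = m := by
    rw [hX]
    apply Finset.card_image_of_injOn
    intro p hp q hq hpq
    by_contra hne
    exact (hMgood.2 p hp q hq hne).1 hpq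
  have hYcard : Y.card = m := by
    rw [hY]
    apply Finset.card_image_of_injOn
    intro p hp q hq hpq
    by_contra hne
    exact (hMgood.2 p hp q hq hne).2 hpq
  have hXYdisj : Disjoint X Y := by
    apply Finset.disjoint_left.mpr
    intro x hx hx'
    exact absurd (hXA hx) (Finset.mem_compl.mp (hYB hx'))
  have hWcard : W.card = 2 * m := by
    rw [hW, Finset.card_union_of_disjoint hXYdisj, hXcard, hYcard]; ring
  -- maximality: no edges between A' and B'
  have hno : ∀ u ∈ A', ∀ v ∈ B', ¬ G.Adj u v := by
    intro u hu v hv hadj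
    have huA : u ∈ A := (Finset.mem_sdiff.mp hu).1
    have huX : u ∉ X := (Finset.mem_sdiff.mp hu).2
    have hvB : v ∈ Aᶜ := (Finset.mem_sdiff.mp hv).1
    have hvY : v ∉ Y := (Finset.mem_sdiff.mp hv).2
    have hnotmem : (u, v) ∉ M := fun hmem =>
      huX (Finset.mem_image_of_mem Prod.fst hmem)
    have hgood' : good (insert (u, v) M) := by
      constructor
      · intro p hp
        rcases Finset.mem_insert.mp hp with rfl | hp
        · exact ⟨huA, hvB, hadj⟩
        · exact hMgood.1 p hp
      · intro p hp q hq hne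
        rcases Finset.mem_insert.mp hp with rfl | hp <;>
          rcases Finset.mem_insert.mp hq with rfl | hq
        · exact absurd rfl hne
        · constructor
          · intro h1; exact huX (by rw [show u = q.1 from h1]; exact Finset.mem_image_of_mem Prod.fst hq)
          · intro h2; exact hvY (by rw [show v = q.2 from h2]; exact Finset.mem_image_of_mem Prod.snd hq)
        · constructor
          · intro h1; exact huX (by rw [show u = p.1 from h1.symm]; exact Finset.mem_image_of_mem Prod.fst hp)
          · intro h2; exact hvY (by rw [show v = p.2 from h2.symm]; exact Finset.mem_image_of_mem Prod.snd hp)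
        · exact hMgood.2 p hp q hq hne
    have := hMmax' _ hgood'
    rw [Finset.card_insert_of_notMem hnotmem] at this
    omega
  -- m < |A| and m < |Aᶜ|
  have hmA : m < A.card := by
    by_contra hle
    push_neg at hle
    have : (A.card : ℝ) ≤ m := by exact_mod_cast hle
    linarith
  have hmB : m < Aᶜ.card := by
    by_contra hle
    push_neg at hle
    have : (Aᶜ.card : ℝ) ≤ m := by exact_mod_cast hle
    linarith
  have hA'card : A'.card + m = A.card := by
    rw [hA', ← hXcard]; exact Finset.card_sdiff_add_card_eq_card hXA
  have hB'card : B'.card + m = Aᶜ.card := by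
    rw [hB', ← hYcard]; exact Finset.card_sdiff_add_card_eq_card hYB
  have hA'pos : 1 ≤ A'.card := by omega
  have hB'pos : 1 ≤ B'.card := by omega
  -- per-vertex counting for A'
  have hkeyA : ∀ u ∈ A', n + 2 ≤ A'.card + (G.neighborFinset u ∩ W).card := by
    intro u hu
    have huA : u ∈ A := (Finset.mem_sdiff.mp hu).1
    have hsub : G.neighborFinset u ⊆ (A'.erase u) ∪ (G.neighborFinset u ∩ W) := by
      intro w hw
      have hadj : G.Adj u w := (SimpleGraph.mem_neighborFinset _ _ _).mp hw
      by_cases hwA : w ∈ A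
      · by_cases hwX : w ∈ X
        · exact Finset.mem_union_right _
            (Finset.mem_inter.mpr ⟨hw, Finset.mem_union_left _ hwX⟩)
        · refine Finset.mem_union_left _ (Finset.mem_erase.mpr ⟨?_, ?_⟩)
          · rintro rfl; exact G.irrefl hadj
          · exact Finset.mem_sdiff.mpr ⟨hwA, hwX⟩
      · have hwB : w ∈ Aᶜ := Finset.mem_compl.mpr hwA
        have hwY : w ∈ Y := by
          by_contra hwY
          exact hno u hu w (Finset.mem_sdiff.mpr ⟨hwB, hwY⟩) hadj
        exact Finset.mem_union_right _
          (Finset.mem_inter.mpr ⟨hw, Finset.mem_union_right _ hwY⟩)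
    have hcard1 := Finset.card_le_card hsub
    have hcard2 := Finset.card_union_le (A'.erase u) (G.neighborFinset u ∩ W)
    have hdeg : (G.neighborFinset u).card = n + 1 := by
      rw [SimpleGraph.card_neighborFinset_eq_degree, hreg]
    have herase : (A'.erase u).card = A'.card - 1 := Finset.card_erase_of_mem hu
    omega
  -- per-vertex counting for B'
  have hkeyB : ∀ v ∈ B', n + 2 ≤ B'.card + (G.neighborFinset v ∩ W).card := by
    intro v hv
    have hvB : v ∈ Aᶜ := (Finset.mem_sdiff.mp hv).1
    have hsub : G.neighborFinset v ⊆ (B'.erase v) ∪ (G.neighborFinset v ∩ W) := by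
      intro w hw
      have hadj : G.Adj v w := (SimpleGraph.mem_neighborFinset _ _ _).mp hw
      by_cases hwA : w ∈ A
      · have hwX : w ∈ X := by
          by_contra hwX
          exact hno w (Finset.mem_sdiff.mpr ⟨hwA, hwX⟩) v hv hadj.symm
        exact Finset.mem_union_right _
          (Finset.mem_inter.mpr ⟨hw, Finset.mem_union_left _ hwX⟩)
      · have hwB : w ∈ Aᶜ := Finset.mem_compl.mpr hwA
        by_cases hwY : w ∈ Y
        · exact Finset.mem_union_right _
            (Finset.mem_inter.mpr ⟨hw, Finset.mem_union_right _ hwY⟩)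
        · refine Finset.mem_union_left _ (Finset.mem_erase.mpr ⟨?_, ?_⟩)
          · rintro rfl; exact G.irrefl hadj
          · exact Finset.mem_sdiff.mpr ⟨hwB, hwY⟩
    have hcard1 := Finset.card_le_card hsub
    have hcard2 := Finset.card_union_le (B'.erase v) (G.neighborFinset v ∩ W)
    have hdeg : (G.neighborFinset v).card = n + 1 := by
      rw [SimpleGraph.card_neighborFinset_eq_degree, hreg]
    have herase : (B'.erase v).card = B'.card - 1 := Finset.card_erase_of_mem hv
    omega
  -- double counting
  have hA'B'disj : Disjoint A' B' := by
    apply Finset.disjoint_left.mpr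
    intro x hx hx'
    exact absurd (Finset.mem_sdiff.mp hx).1 (Finset.mem_compl.mp (Finset.mem_sdiff.mp hx').1)
  have hdc : ∑ u ∈ A' ∪ B', (G.neighborFinset u ∩ W).card ≤ 2 * m * (n + 1) := by
    have step1 : ∀ u : V, (G.neighborFinset u ∩ W).card
        = ∑ w ∈ W, if G.Adj u w then 1 else 0 := by
      intro u
      rw [← Finset.card_filter]
      congr 1
      ext w
      simp [Finset.mem_inter, SimpleGraph.mem_neighborFinset, and_comm]
    calc ∑ u ∈ A' ∪ B', (G.neighborFinset u ∩ W).card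
        = ∑ u ∈ A' ∪ B', ∑ w ∈ W, (if G.Adj u w then 1 else 0) := by
          exact Finset.sum_congr rfl fun u _ => step1 u
      _ = ∑ w ∈ W, ∑ u ∈ A' ∪ B', (if G.Adj u w then 1 else 0) := Finset.sum_comm
      _ ≤ ∑ w ∈ W, (n + 1) := by
          apply Finset.sum_le_sum
          intro w _
          have : ∑ u ∈ A' ∪ B', (if G.Adj u w then 1 else 0)
              = ((A' ∪ B').filter fun u => G.Adj u w).card := (Finset.card_filter _ _).symm
          rw [this]
          have hsub2 : ((A' ∪ B').filter fun u => G.Adj u w) ⊆ G.neighborFinset w := by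
            intro u hu
            exact (SimpleGraph.mem_neighborFinset _ _ _).mpr ((Finset.mem_filter.mp hu).2).symm
          have := Finset.card_le_card hsub2
          have hdeg : (G.neighborFinset w).card = n + 1 := by
            rw [SimpleGraph.card_neighborFinset_eq_degree, hreg]
          omega
      _ = W.card * (n + 1) := by rw [Finset.sum_const, smul_eq_mul]
      _ = 2 * m * (n + 1) := by rw [hWcard]
  -- sum the per-vertex bounds
  have hsumA : A'.card * (n + 2) ≤ A'.card * A'.card
      + ∑ u ∈ A', (G.neighborFinset u ∩ W).card := by
    calc A'.card * (n + 2) = ∑ _u ∈ A', (n + 2) := by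
          rw [Finset.sum_const, smul_eq_mul]
      _ ≤ ∑ u ∈ A', (A'.card + (G.neighborFinset u ∩ W).card) :=
          Finset.sum_le_sum hkeyA
      _ = A'.card * A'.card + ∑ u ∈ A', (G.neighborFinset u ∩ W).card := by
          rw [Finset.sum_add_distrib, Finset.sum_const, smul_eq_mul]
  have hsumB : B'.card * (n + 2) ≤ B'.card * B'.card
      + ∑ v ∈ B', (G.neighborFinset v ∩ W).card := by
    calc B'.card * (n + 2) = ∑ _v ∈ B', (n + 2) := by
          rw [Finset.sum_const, smul_eq_mul]
      _ ≤ ∑ v ∈ B', (B'.card + (G.neighborFinset v ∩ W).card) :=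
          Finset.sum_le_sum hkeyB
      _ = B'.card * B'.card + ∑ v ∈ B', (G.neighborFinset v ∩ W).card := by
          rw [Finset.sum_add_distrib, Finset.sum_const, smul_eq_mul]
  have hsplit : ∑ u ∈ A' ∪ B', (G.neighborFinset u ∩ W).card
      = (∑ u ∈ A', (G.neighborFinset u ∩ W).card)
        + ∑ v ∈ B', (G.neighborFinset v ∩ W).card :=
    Finset.sum_union hA'B'disj
  -- Fact 1 : n + 2 ≤ a + m and n + 2 ≤ b + m
  have hWbound : ∀ u : V, (G.neighborFinset u ∩ W).card ≤ 2 * m := by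
    intro u
    calc (G.neighborFinset u ∩ W).card ≤ W.card :=
          Finset.card_le_card (Finset.inter_subset_right)
      _ = 2 * m := hWcard
  obtain ⟨u0, hu0⟩ := Finset.card_pos.mp (by omega : 0 < A'.card)
  obtain ⟨v0, hv0⟩ := Finset.card_pos.mp (by omega : 0 < B'.card)
  have hfactA : n + 2 ≤ A.card + m := by
    have h1 := hkeyA u0 hu0
    have h2 := hWbound u0
    omega
  have hfactB : n + 2 ≤ Aᶜ.card + m := by
    have h1 := hkeyB v0 hv0
    have h2 := hWbound v0
    omega
  have habn : A.card + Aᶜ.card = 2 * n := by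
    rw [Finset.card_add_card_compl, hcard]
  -- numeric endgame
  have hsq : 10000 * m ^ 2 < n := by
    have h0 : (0:ℝ) ≤ Real.sqrt n := Real.sqrt_nonneg _
    have h1 : 100 * (m:ℝ) < Real.sqrt n := by linarith
    have h2 : (100 * (m:ℝ)) ^ 2 < (Real.sqrt n) ^ 2 := by
      nlinarith
    rw [Real.sq_sqrt (by positivity : (0:ℝ) ≤ (n:ℕ))] at h2
    have : (10000:ℝ) * (m:ℝ) ^ 2 < n := by nlinarith
    exact_mod_cast this
  -- put everything in ℤ
  set α := A'.card
  set β := B'.card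
  set S1 := ∑ u ∈ A', (G.neighborFinset u ∩ W).card
  set S2 := ∑ v ∈ B', (G.neighborFinset v ∩ W).card
  have key : S1 + S2 ≤ 2 * m * (n + 1) := by rw [← hsplit]; exact hdc
  have zα : (α:ℤ) + m = A.card := by exact_mod_cast hA'card
  have zβ : (β:ℤ) + m = Aᶜ.card := by exact_mod_cast hB'card
  have zab : (A.card:ℤ) + Aᶜ.card = 2 * n := by exact_mod_cast habn
  have zfA : (n:ℤ) + 2 ≤ A.card + m := by exact_mod_cast hfactA
  have zfB : (n:ℤ) + 2 ≤ Aᶜ.card + m := by exact_mod_cast hfactB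
  have zs1 : (α:ℤ) * (n + 2) ≤ α * α + S1 := by exact_mod_cast hsumA
  have zs2 : (β:ℤ) * (n + 2) ≤ β * β + S2 := by exact_mod_cast hsumB
  have zkey : (S1:ℤ) + S2 ≤ 2 * m * (n + 1) := by exact_mod_cast key
  have zsq : 10000 * (m:ℤ) ^ 2 < n := by exact_mod_cast hsq
  have hαβ : (α:ℤ) + β = 2 * n - 2 * m := by linarith
  have hp : (0:ℤ) ≤ (α:ℤ) + 2 * m - (n + 2) := by linarith
  have hq : (0:ℤ) ≤ (β:ℤ) + 2 * m - (n + 2) := by linarith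
  have hm2 : (2:ℤ) ≤ m := by linarith
  have hstep : (2:ℤ) * n ≤ 2 * m ^ 2 - m + 4 := by
    nlinarith [mul_nonneg hp hq, zs1, zs2, zkey, hαβ]
  nlinarith [zsq, hstep, hm2, mul_le_mul_of_nonneg_left hm2 (by linarith : (0:ℤ) ≤ (m:ℤ))]
end

section
/- Let n be a positive integer, t an integer with |t| <= sqrt(n)/100, and let f_n(t) denote the probability that a binomial B(2n, 1/2) random variable is at least n + t. Then f_n(t) = 1/2 - (t - 1/2)/sqrt(n*pi) + E where |E| <= (2|t|^3 + 1)/n^{3/2}, for n sufficiently large. -/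
open Finset Real

/-- `P[B(2n, 1/2) ≥ n + t]`, the upper tail of the binomial distribution `B(2n, 1/2)`. -/
noncomputable def binomTail (n : ℕ) (t : ℤ) : ℝ :=
  ∑ k ∈ Finset.range (2 * n + 1),
    if (n : ℤ) + t ≤ (k : ℤ) then ((2 * n).choose k : ℝ) / 2 ^ (2 * n) else 0

section Aux
open Filter Topology Nat

noncomputable def aSeq (n : ℕ) : ℝ := (Nat.centralBinom n : ℝ) / 4 ^ n

lemma aSeq_pos (n : ℕ) : 0 < aSeq n :=
  div_pos (by exact_mod_cast n.centralBinom_pos) (by positivity)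

lemma wallis_identity (n : ℕ) : Real.Wallis.W n = 1 / ((2 * n + 1) * aSeq n ^ 2) := by
  rw [Real.Wallis.W_eq_factorial_ratio, aSeq]
  have h0 : Nat.centralBinom n * (n)! * (n)! = ((2 * n))! := by
    rw [Nat.centralBinom]
    have := Nat.choose_mul_factorial_mul_factorial (by omega : n ≤ 2 * n)
    rw [show 2 * n - n = n by omega] at this; exact this
  have h : (Nat.centralBinom n : ℝ) * (n)! * (n)! = ((2 * n))! := by exact_mod_cast h0
  have hf : (0:ℝ) < ((n)! : ℝ) := by exact_mod_cast n.factorial_pos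
  have hf2 : (0:ℝ) < (((2*n))! : ℝ) := by exact_mod_cast (2*n).factorial_pos
  have hc : (0:ℝ) < (Nat.centralBinom n : ℝ) := by exact_mod_cast n.centralBinom_pos
  have h4 : ((2:ℝ) ^ (4 * n)) = (4 ^ n)^2 := by
    rw [← pow_mul, show (4:ℝ) = 2^2 by norm_num, ← pow_mul]; ring_nf
  have h41 : (0:ℝ) < (4:ℝ)^n := by positivity
  rw [div_pow, h4, div_eq_div_iff (by positivity) (by positivity)]
  field_simp
  have hsq : ((Nat.centralBinom n : ℝ) * (n)! * (n)!)^2 = (((2 * n))! : ℝ)^2 := by rw [h]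
  linear_combination hsq

lemma aSeq_sq_le (n : ℕ) : (n : ℝ) * aSeq n ^ 2 ≤ 1 / π := by
  have hW := Real.Wallis.le_W n
  have hWpos := Real.Wallis.W_pos n
  have hid := wallis_identity n
  have hπ := Real.pi_pos
  have ha := aSeq_pos n
  -- a² = 1/((2n+1) W n)
  have ha2 : aSeq n ^ 2 = 1 / ((2 * n + 1) * Real.Wallis.W n) := by
    have h1 : (2 * (n:ℝ) + 1) * aSeq n ^ 2 > 0 := by positivity
    field_simp at hid ⊢
    nlinarith [hid]
  rw [ha2, mul_one_div, div_le_div_iff₀ (by positivity) hπ]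
  -- π ≤ (2n+1) W n ... need n·π ≤ (2n+1) W n; W n ≥ (2n+1)/(2n+2)·π/2
  have key : (n:ℝ) * π ≤ (2 * n + 1) * Real.Wallis.W n := by
    have h2 : (2 * (n:ℝ) + 1) * ((2 * n + 1) / (2 * n + 2) * (π / 2)) ≤ (2 * n + 1) * Real.Wallis.W n := by
      apply mul_le_mul_of_nonneg_left hW (by positivity)
    refine le_trans ?_ h2
    have he : (2*(n:ℝ)+1) * ((2*(n:ℝ)+1)/(2*(n:ℝ)+2)*(π/2)) = ((2*(n:ℝ)+1)^2*π/2)/(2*(n:ℝ)+2) := by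
      field_simp
    rw [he, le_div_iff₀ (by positivity)]
    nlinarith [sq_nonneg (2*(n:ℝ)+1), hπ]
  linarith [key]

lemma le_aSeq_sq (n : ℕ) : 1 / π ≤ ((n : ℝ) + 1/2) * aSeq n ^ 2 := by
  have hW := Real.Wallis.W_le n
  have hWpos := Real.Wallis.W_pos n
  have hid := wallis_identity n
  have hπ := Real.pi_pos
  have ha := aSeq_pos n
  have ha2 : ((n:ℝ) + 1/2) * aSeq n ^ 2 = 1 / (2 * Real.Wallis.W n) := by
    have h1 : (2 * (n:ℝ) + 1) * aSeq n ^ 2 > 0 := by positivity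
    field_simp at hid ⊢
    nlinarith [hid]
  rw [ha2, div_le_div_iff₀ hπ (by positivity)]
  nlinarith [hW]

lemma aSeq_est (n : ℕ) (hn : 1 ≤ n) :
    |aSeq n - 1 / Real.sqrt (n * π)| ≤ 1 / (4 * (n * Real.sqrt n)) := by
  have hπ := Real.pi_pos
  have hπ1 : (1:ℝ) ≤ π := by nlinarith [Real.pi_gt_three]
  have hn1 : (1:ℝ) ≤ (n:ℝ) := by exact_mod_cast hn
  have hnpos : (0:ℝ) < n := by linarith
  set u := Real.sqrt ((n:ℝ) * π) with hu_def
  set v := Real.sqrt (π * ((n:ℝ) + 1/2)) with hv_def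
  have hu : 0 < u := Real.sqrt_pos.2 (by positivity)
  have hv : 0 < v := Real.sqrt_pos.2 (by positivity)
  have hu2 : u ^ 2 = n * π := Real.sq_sqrt (by positivity)
  have hv2 : v ^ 2 = π * (n + 1/2) := Real.sq_sqrt (by positivity)
  have huv : u ≤ v := by
    rw [hu_def, hv_def]; apply Real.sqrt_le_sqrt; nlinarith
  have ha := aSeq_pos n
  have hA_le : aSeq n ≤ 1 / u := by
    rw [← pow_le_pow_iff_left₀ ha.le (by positivity) (two_ne_zero)]
    rw [div_pow, one_pow, hu2, le_div_iff₀ (by positivity)]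
    have h := aSeq_sq_le n
    have h2 := mul_le_mul_of_nonneg_right h hπ.le
    rw [one_div, inv_mul_cancel₀ hπ.ne'] at h2
    have h3 : aSeq n^2 * ((n:ℝ)*π) = (n:ℝ) * aSeq n ^2 * π := by ring
    rw [h3]; linarith
  have hA_ge : 1 / v ≤ aSeq n := by
    rw [← pow_le_pow_iff_left₀ (by positivity) ha.le (two_ne_zero)]
    rw [div_pow, one_pow, hv2, div_le_iff₀ (by positivity)]
    have h := le_aSeq_sq n
    have h2 := mul_le_mul_of_nonneg_right h hπ.le
    rw [one_div, inv_mul_cancel₀ hπ.ne'] at h2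
    have h3 : ((n:ℝ) + 1/2) * aSeq n ^2 * π = aSeq n ^2 * (π * ((n:ℝ) + 1/2)) := by ring
    rw [h3] at h2; linarith
  have hsn : Real.sqrt n ≤ u := by
    rw [hu_def]; apply Real.sqrt_le_sqrt; nlinarith
  have hsn0 : (0:ℝ) < Real.sqrt n := Real.sqrt_pos.2 hnpos
  have hsn2 : Real.sqrt n ^ 2 = n := Real.sq_sqrt hnpos.le
  have hgap : 1/u - 1/v ≤ 1 / (4 * (n * Real.sqrt n)) := by
    have h1 : v - u ≤ π / (4 * u) := by
      have hvu : v - u = (π/2) / (v + u) := by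
        rw [eq_div_iff (by positivity)]
        nlinarith [hu2, hv2]
      rw [hvu, div_le_div_iff₀ (by positivity) (by positivity)]
      nlinarith [mul_le_mul_of_nonneg_left huv hπ.le]
    have h2 : 1/u - 1/v = (v - u) / (u * v) := by
      field_simp
    rw [h2]
    have h3 : (v - u) / (u * v) ≤ (π / (4*u)) / (u * u) := by
      apply div_le_div₀ (by positivity) h1 (by positivity)
      exact mul_le_mul_of_nonneg_left huv hu.le
    refine h3.trans ?_
    have h4 : π / (4*u) / (u * u) = π / (4 * ((n * π) * u)) := by
      rw [div_div, ← hu2]; ring_nf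
    rw [h4, div_le_div_iff₀ (by positivity) (by positivity)]
    have h5 : (n:ℝ) * Real.sqrt n ≤ n * u := by
      exact mul_le_mul_of_nonneg_left hsn hnpos.le
    have h6 := mul_le_mul_of_nonneg_left h5 hπ.le
    nlinarith [h6]
  have habs : |aSeq n - 1/u| = 1/u - aSeq n := by
    rw [abs_of_nonpos (by linarith)]; ring
  rw [habs]
  have : 1/v ≤ aSeq n := hA_ge
  linarith

noncomputable def pp (n k : ℕ) : ℝ := ((2 * n).choose k : ℝ) / 2 ^ (2 * n)

lemma pp_nonneg (n k : ℕ) : 0 ≤ pp n k := by unfold pp; positivity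

lemma pp_center (n : ℕ) : pp n n = aSeq n := by
  unfold pp aSeq
  rw [Nat.centralBinom, show (2:ℝ)^(2*n) = 4^n by rw [show (4:ℝ) = 2^2 by norm_num, ← pow_mul]]

lemma pp_symm (n j : ℕ) (hj : j ≤ n) : pp n (n - j) = pp n (n + j) := by
  unfold pp
  congr 2
  have h := Nat.choose_symm (show n + j ≤ 2 * n by omega)
  rw [show 2 * n - (n + j) = n - j by omega] at h
  exact_mod_cast congrArg (Nat.cast (R := ℝ)) h

lemma pp_succ (n j : ℕ) (hj : j < n) :
    pp n (n + j + 1) * ((n:ℝ) + j + 1) = pp n (n + j) * ((n:ℝ) - j) := by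
  unfold pp
  have h := Nat.choose_succ_right_eq (2 * n) (n + j)
  rw [show 2 * n - (n + j) = n - j by omega] at h
  have hc : (((2*n).choose (n+j+1) : ℝ)) * ((n:ℝ)+j+1) = ((2*n).choose (n+j) : ℝ) * ((n:ℝ) - j) := by
    have := congrArg (Nat.cast (R := ℝ)) h
    push_cast [Nat.cast_sub hj.le] at this
    convert this using 2 <;> push_cast <;> ring
  field_simp
  linarith [hc]

lemma pp_le (n j : ℕ) (hj : j ≤ n) : pp n (n + j) ≤ aSeq n := by
  induction j with
  | zero => simp [pp_center]
  | succ j ih =>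
    have hj' : j < n := by omega
    have h := pp_succ n j hj'
    have hd : (0:ℝ) < (n:ℝ) + j + 1 := by positivity
    have hnj : (0:ℝ) ≤ (n:ℝ) - j := by
      have : (j:ℝ) ≤ n := by exact_mod_cast hj'.le
      linarith
    have h1 : pp n (n + j + 1) ≤ pp n (n + j) := by
      rw [← mul_le_mul_iff_of_pos_right hd, h]
      have := pp_nonneg n (n + j)
      nlinarith
    calc pp n (n + (j+1)) = pp n (n + j + 1) := by ring_nf
      _ ≤ pp n (n + j) := h1
      _ ≤ aSeq n := ih (by omega)

lemma pp_ge (n j : ℕ) (hn : 1 ≤ n) (hj : j ≤ n) :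
    aSeq n * (1 - (j:ℝ) * ((j:ℝ) + 1) / n) ≤ pp n (n + j) := by
  have hnpos : (0:ℝ) < n := by exact_mod_cast hn
  induction j with
  | zero => simp [pp_center]
  | succ j ih =>
    have hj' : j < n := by omega
    have ihh := ih (by omega)
    have h := pp_succ n j hj'
    have hd : (0:ℝ) < (n:ℝ) + j + 1 := by positivity
    have hjn : (j:ℝ) + 1 ≤ (n:ℝ) := by exact_mod_cast hj
    have hj0 : (0:ℝ) ≤ (j:ℝ) := j.cast_nonneg
    have hA := aSeq_pos n
    have hP := pp_nonneg n (n + j)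
    have hP1 := pp_nonneg n (n + j + 1)
    have heq : pp n (n + (j + 1)) = pp n (n + j) * ((n:ℝ) - j) / ((n:ℝ) + j + 1) := by
      rw [show n + (j+1) = n + j + 1 by ring, eq_div_iff hd.ne', h]
    have hcast : ((j:ℕ)+1 : ℕ) = j + 1 := rfl
    push_cast
    rw [heq]
    by_cases hc : 1 - (j:ℝ) * ((j:ℝ)+1) / n ≤ 0
    · have hnum : (n:ℝ) ≤ (j:ℝ) * ((j:ℝ)+1) := by
        rw [sub_nonpos, le_div_iff₀ hnpos] at hc
        linarith
      have hLHS : aSeq n * (1 - ((j:ℝ)+1) * (((j:ℝ)+1) + 1) / n) ≤ 0 := by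
        apply mul_nonpos_of_nonneg_of_nonpos hA.le
        rw [sub_nonpos, le_div_iff₀ hnpos]
        nlinarith
      have hRHS : (0:ℝ) ≤ pp n (n + j) * ((n:ℝ) - j) / ((n:ℝ) + j + 1) := by
        apply div_nonneg _ hd.le
        apply mul_nonneg hP
        linarith
      linarith
    · push_neg at hc
      have step : aSeq n * (1 - ((j:ℝ)+1) * (((j:ℝ)+1) + 1) / n)
          ≤ (aSeq n * (1 - (j:ℝ) * ((j:ℝ)+1) / n)) * (((n:ℝ) - j) / ((n:ℝ) + j + 1)) := by
        rw [mul_assoc]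
        apply mul_le_mul_of_nonneg_left _ hA.le
        have hgoal : ((n:ℝ) - ((j:ℝ)+1)*(((j:ℝ)+1)+1)) * ((n:ℝ)+j+1) ≤ ((n:ℝ) - (j:ℝ)*((j:ℝ)+1)) * ((n:ℝ)-j) := by
          nlinarith [mul_nonneg hj0 (mul_nonneg hj0 hj0), mul_nonneg hj0 hj0, hnpos, hj0]
        rw [mul_div_assoc', le_div_iff₀ hd]
        have e1 : 1 - ((j:ℝ)+1)*(((j:ℝ)+1)+1)/(n:ℝ) = ((n:ℝ) - ((j:ℝ)+1)*(((j:ℝ)+1)+1))/(n:ℝ) := by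
          field_simp
        have e2 : 1 - (j:ℝ)*((j:ℝ)+1)/(n:ℝ) = ((n:ℝ) - (j:ℝ)*((j:ℝ)+1))/(n:ℝ) := by
          field_simp
        rw [e1, e2, div_mul_eq_mul_div, div_mul_eq_mul_div, div_le_div_iff₀ hnpos hnpos]
        have := mul_le_mul_of_nonneg_right hgoal hnpos.le
        nlinarith [this]
      refine step.trans ?_
      rw [mul_div_assoc (pp n (n + j)) ((n:ℝ) - (j:ℝ))]
      apply mul_le_mul_of_nonneg_right ihh
      apply div_nonneg (by linarith) hd.le

lemma sum_pp_total (n : ℕ) : ∑ k ∈ Finset.range (2 * n + 1), pp n k = 1 := by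
  unfold pp
  rw [← Finset.sum_div]
  rw [show ∑ k ∈ Finset.range (2*n+1), ((2*n).choose k : ℝ) = ((∑ k ∈ Finset.range (2*n+1), (2*n).choose k : ℕ) : ℝ) by push_cast; ring]
  rw [Nat.sum_range_choose]
  push_cast
  rw [div_self (by positivity)]

lemma pp_symm' (n k : ℕ) (hk : k ≤ 2 * n) : pp n (2 * n - k) = pp n k := by
  unfold pp
  congr 2
  exact_mod_cast congrArg (Nat.cast (R := ℝ)) (Nat.choose_symm hk)

lemma binomTail_symm (n : ℕ) (t : ℤ) : binomTail n t + binomTail n (1 - t) = 1 := by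
  unfold binomTail
  have hrefl := Finset.sum_range_reflect
    (fun k => if (n : ℤ) + (1 - t) ≤ (k : ℤ) then ((2 * n).choose k : ℝ) / 2 ^ (2 * n) else 0)
    (2 * n + 1)
  rw [← hrefl, ← Finset.sum_add_distrib]
  rw [← sum_pp_total n]
  apply Finset.sum_congr rfl
  intro k hk
  rw [Finset.mem_range] at hk
  have hk' : k ≤ 2 * n := by omega
  have hsub : 2 * n + 1 - 1 - k = 2 * n - k := by omega
  rw [hsub]
  have hcast : ((2 * n - k : ℕ) : ℤ) = 2 * (n : ℤ) - k := by omega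
  have hchoose : ((2 * n).choose (2 * n - k) : ℝ) = ((2 * n).choose k : ℝ) := by
    exact_mod_cast congrArg (Nat.cast (R := ℝ)) (Nat.choose_symm hk')
  rw [hchoose]
  unfold pp
  by_cases hc : (n : ℤ) + t ≤ (k : ℤ)
  · rw [if_pos hc, if_neg (by omega), add_zero]
  · rw [if_neg hc, if_pos (by omega), zero_add]

lemma sum_jj (s : ℕ) : ∑ j ∈ Finset.range (s + 1), (j:ℝ) * ((j:ℝ) + 1)
    = (s:ℝ) * ((s:ℝ) + 1) * ((s:ℝ) + 2) / 3 := by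
  induction s with
  | zero => simp
  | succ s ih =>
    rw [Finset.sum_range_succ, ih]
    push_cast
    ring

lemma sum_upper (n : ℕ) : ∑ k ∈ Finset.Ioc n (2 * n), pp n k = (1 - aSeq n) / 2 := by
  have htot : ∑ k ∈ Finset.range (2 * n + 1), pp n k = 1 := sum_pp_total n
  have hsplit : Finset.range (2 * n + 1) = Finset.Ico 0 n ∪ Finset.Icc n (2 * n) := by
    ext k
    simp only [Finset.mem_range, Finset.mem_union, Finset.mem_Ico, Finset.mem_Icc]
    omega
  have hdisj : Disjoint (Finset.Ico 0 n) (Finset.Icc n (2 * n)) := by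
    rw [Finset.disjoint_left]
    intro k h1 h2
    simp only [Finset.mem_Ico, Finset.mem_Icc] at h1 h2
    omega
  rw [hsplit, Finset.sum_union hdisj] at htot
  have hIcc : ∑ k ∈ Finset.Icc n (2 * n), pp n k = pp n n + ∑ k ∈ Finset.Ioc n (2 * n), pp n k := by
    rw [Finset.Icc_eq_cons_Ioc (by omega), Finset.sum_cons]
  have hrefl : ∑ k ∈ Finset.Ico 0 n, pp n k = ∑ k ∈ Finset.Ioc n (2 * n), pp n k := by
    apply Finset.sum_nbij' (i := fun k => 2 * n - k) (j := fun k => 2 * n - k)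
    · intro a ha; simp only [Finset.mem_Ico] at ha; simp only [Finset.mem_Ioc]; omega
    · intro a ha; simp only [Finset.mem_Ioc] at ha; simp only [Finset.mem_Ico]; omega
    · intro a ha; simp only [Finset.mem_Ico] at ha; omega
    · intro a ha; simp only [Finset.mem_Ioc] at ha; omega
    · intro a ha; simp only [Finset.mem_Ico] at ha
      exact (pp_symm' n a (by omega)).symm
  rw [hrefl, hIcc, pp_center] at htot
  linarith

set_option maxHeartbeats 1000000 in
lemma main_case (n : ℕ) (hn : 1 ≤ n) (s : ℕ) (hs : (s:ℝ) ≤ Real.sqrt n / 100) :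
    |binomTail n (-(s:ℤ)) - (1/2 - ((-(s:ℝ)) - 1/2) / Real.sqrt ((n:ℝ) * π))|
      ≤ (2 * (s:ℝ)^3 + 1) / ((n:ℝ) * Real.sqrt n) := by
  have hπ := Real.pi_pos
  have hn1 : (1:ℝ) ≤ (n:ℝ) := by exact_mod_cast hn
  have hnpos : (0:ℝ) < n := by linarith
  have hsqn_pos : (0:ℝ) < Real.sqrt n := Real.sqrt_pos.2 hnpos
  have hsqn1 : (1:ℝ) ≤ Real.sqrt n := by
    rw [show (1:ℝ) = Real.sqrt 1 by simp]
    exact Real.sqrt_le_sqrt hn1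
  have hsqn_le : Real.sqrt n ≤ n := by
    nlinarith [Real.sq_sqrt hnpos.le, hsqn1]
  have hsn : s ≤ n := by
    have : (s:ℝ) ≤ (n:ℝ) := le_trans hs (by linarith)
    exact_mod_cast this
  set A := aSeq n with hA_def
  set c := 1 / Real.sqrt ((n:ℝ) * π) with hc_def
  have hcsqrt : (0:ℝ) < Real.sqrt ((n:ℝ) * π) := Real.sqrt_pos.2 (by positivity)
  have hc_pos : 0 < c := by rw [hc_def]; positivity
  have hA_pos : 0 < A := aSeq_pos n
  -- decomposition of binomTail
  have h1 : binomTail n (-(s:ℤ)) = ∑ k ∈ (Finset.range (2*n+1)).filter (fun k => n - s ≤ k), pp n k := by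
    unfold binomTail pp
    rw [Finset.sum_filter]
    apply Finset.sum_congr rfl
    intro k hk
    simp only [Finset.mem_range] at hk
    by_cases hcnd : (n:ℤ) + -(s:ℤ) ≤ (k:ℤ)
    · rw [if_pos hcnd, if_pos (by omega)]
    · rw [if_neg hcnd, if_neg (by omega)]
  have h2 : (Finset.range (2*n+1)).filter (fun k => n - s ≤ k) = Finset.Icc (n - s) (2*n) := by
    ext k
    simp only [Finset.mem_filter, Finset.mem_range, Finset.mem_Icc]
    omega
  have h3 : Finset.Icc (n - s) (2*n) = Finset.Icc (n - s) n ∪ Finset.Ioc n (2*n) := by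
    ext k
    simp only [Finset.mem_Icc, Finset.mem_Ioc, Finset.mem_union]
    omega
  have hdisj : Disjoint (Finset.Icc (n-s) n) (Finset.Ioc n (2*n)) := by
    rw [Finset.disjoint_left]
    intro k hk1 hk2
    simp only [Finset.mem_Icc] at hk1
    simp only [Finset.mem_Ioc] at hk2
    omega
  have h4 : ∑ k ∈ Finset.Icc (n - s) n, pp n k = ∑ j ∈ Finset.range (s+1), pp n (n + j) := by
    symm
    apply Finset.sum_nbij' (i := fun j => n - j) (j := fun k => n - k)
    · intro a ha; simp only [Finset.mem_range] at ha; simp only [Finset.mem_Icc]; omega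
    · intro a ha; simp only [Finset.mem_Icc] at ha; simp only [Finset.mem_range]; omega
    · intro a ha; simp only [Finset.mem_range] at ha; omega
    · intro a ha; simp only [Finset.mem_Icc] at ha; omega
    · intro a ha; simp only [Finset.mem_range] at ha
      exact (pp_symm n a (by omega)).symm
  have hB : binomTail n (-(s:ℤ)) = (1 - A)/2 + ∑ j ∈ Finset.range (s+1), pp n (n + j) := by
    rw [h1, h2, h3, Finset.sum_union hdisj, h4, sum_upper n]
    ring
  -- identity for the difference
  have hiden : binomTail n (-(s:ℤ)) - (1/2 - ((-(s:ℝ)) - 1/2) / Real.sqrt ((n:ℝ) * π))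
      = (∑ j ∈ Finset.range (s+1), (pp n (n + j) - c)) + (c - A)/2 := by
    rw [hB, Finset.sum_sub_distrib, Finset.sum_const, Finset.card_range]
    have hdivc : ((-(s:ℝ)) - 1/2) / Real.sqrt ((n:ℝ) * π) = ((-(s:ℝ)) - 1/2) * c := by
      rw [hc_def, mul_one_div]
    rw [hdivc]
    push_cast
    ring
  rw [hiden]
  -- bounds
  have hE := aSeq_est n hn
  rw [← hc_def, ← hA_def] at hE
  have hterm : ∀ j ∈ Finset.range (s+1),
      |pp n (n + j) - c| ≤ A / n * ((j:ℝ) * ((j:ℝ)+1)) + 1/(4*((n:ℝ)*Real.sqrt n)) := by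
    intro j hj
    simp only [Finset.mem_range] at hj
    have hjn : j ≤ n := by omega
    have hub := pp_le n j hjn
    have hlb := pp_ge n j hn hjn
    have habs1 : |pp n (n + j) - A| ≤ A / n * ((j:ℝ) * ((j:ℝ)+1)) := by
      rw [abs_le]
      constructor
      · have : A * (1 - (j:ℝ) * ((j:ℝ)+1) / n) = A - A / n * ((j:ℝ)*((j:ℝ)+1)) := by
          field_simp
        rw [this] at hlb
        linarith
      · have hnn : 0 ≤ A / n * ((j:ℝ)*((j:ℝ)+1)) := by positivity
        linarith
    calc |pp n (n + j) - c| ≤ |pp n (n + j) - A| + |A - c| := abs_sub_le _ _ _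
      _ ≤ A / n * ((j:ℝ) * ((j:ℝ)+1)) + 1/(4*((n:ℝ)*Real.sqrt n)) := by
          exact add_le_add habs1 hE
  have hsum1 : |∑ j ∈ Finset.range (s+1), (pp n (n + j) - c)|
      ≤ A / n * ((s:ℝ) * ((s:ℝ)+1) * ((s:ℝ)+2) / 3) + ((s:ℝ)+1) * (1/(4*((n:ℝ)*Real.sqrt n))) := by
    calc |∑ j ∈ Finset.range (s+1), (pp n (n + j) - c)|
        ≤ ∑ j ∈ Finset.range (s+1), |pp n (n + j) - c| := Finset.abs_sum_le_sum_abs _ _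
      _ ≤ ∑ j ∈ Finset.range (s+1), (A / n * ((j:ℝ) * ((j:ℝ)+1)) + 1/(4*((n:ℝ)*Real.sqrt n))) :=
          Finset.sum_le_sum hterm
      _ = A / n * ((s:ℝ) * ((s:ℝ)+1) * ((s:ℝ)+2) / 3) + ((s:ℝ)+1) * (1/(4*((n:ℝ)*Real.sqrt n))) := by
          rw [Finset.sum_add_distrib, ← Finset.mul_sum, sum_jj, Finset.sum_const, Finset.card_range]
          push_cast
          ring
  -- bound on A/n
  have hA_le_c : A ≤ c := by
    have h := aSeq_sq_le n
    have hc2 : c^2 = 1/((n:ℝ)*π) := by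
      rw [hc_def, div_pow, one_pow, Real.sq_sqrt (by positivity)]
    rw [← pow_le_pow_iff_left₀ hA_pos.le hc_pos.le (two_ne_zero), hc2]
    rw [le_div_iff₀ (by positivity)]
    calc A^2 * ((n:ℝ)*π) = ((n:ℝ) * A^2) * π := by ring
      _ ≤ (1/π) * π := by
          apply mul_le_mul_of_nonneg_right _ hπ.le
          exact h
      _ = 1 := by field_simp
  have hsqrtpi : (5:ℝ)/3 ≤ Real.sqrt π := by
    rw [show (5:ℝ)/3 = Real.sqrt ((5/3)^2) by rw [Real.sqrt_sq (by norm_num)]]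
    apply Real.sqrt_le_sqrt
    nlinarith [Real.pi_gt_three]
  have hc_le : c ≤ 3/5 * (1/Real.sqrt n) := by
    rw [hc_def, Real.sqrt_mul hnpos.le]
    rw [div_le_iff₀ (by positivity)]
    have hkey : 3 / 5 * (1 / Real.sqrt (n:ℝ)) * (Real.sqrt (n:ℝ) * Real.sqrt π) = 3/5 * Real.sqrt π := by
      field_simp
    rw [hkey]
    linarith [hsqrtpi]
  have hA_div : A / n ≤ 3/5 * (1/((n:ℝ) * Real.sqrt n)) := by
    rw [div_le_iff₀ hnpos]
    have : 3/5 * (1/((n:ℝ) * Real.sqrt n)) * n = 3/5 * (1/Real.sqrt n) := by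
      field_simp
    rw [this]
    exact hA_le_c.trans hc_le
  -- put together
  set σ := (s:ℝ) with hσ_def
  have hσ0 : 0 ≤ σ := s.cast_nonneg
  have hD : (0:ℝ) < (n:ℝ) * Real.sqrt n := by positivity
  have htotal : |(∑ j ∈ Finset.range (s+1), (pp n (n + j) - c)) + (c - A)/2|
      ≤ (σ * (σ+1) * (σ+2) / 5 + (σ+1)/4 + 1/8) / ((n:ℝ) * Real.sqrt n) := by
    have habs2 : |(c - A)/2| ≤ 1/(8*((n:ℝ)*Real.sqrt n)) := by
      rw [abs_div, abs_sub_comm]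
      rw [abs_of_pos (by norm_num : (0:ℝ) < 2)]
      rw [div_le_iff₀ (by norm_num : (0:ℝ) < 2)]
      calc |A - c| ≤ 1/(4*((n:ℝ)*Real.sqrt n)) := hE
        _ = 1/(8*((n:ℝ)*Real.sqrt n)) * 2 := by ring
    have h5 : A / n * (σ * (σ+1) * (σ+2) / 3) ≤ σ * (σ+1) * (σ+2) / 5 / ((n:ℝ)*Real.sqrt n) := by
      have hprod : 0 ≤ σ * (σ+1) * (σ+2) / 3 := by positivity
      calc A / n * (σ * (σ+1) * (σ+2) / 3)
          ≤ 3/5 * (1/((n:ℝ) * Real.sqrt n)) * (σ * (σ+1) * (σ+2) / 3) :=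
            mul_le_mul_of_nonneg_right hA_div hprod
        _ = σ * (σ+1) * (σ+2) / 5 / ((n:ℝ)*Real.sqrt n) := by
            field_simp
    calc |(∑ j ∈ Finset.range (s+1), (pp n (n + j) - c)) + (c - A)/2|
        ≤ |∑ j ∈ Finset.range (s+1), (pp n (n + j) - c)| + |(c - A)/2| := abs_add_le _ _
      _ ≤ (A / n * (σ * (σ+1) * (σ+2) / 3) + (σ+1) * (1/(4*((n:ℝ)*Real.sqrt n))))
            + 1/(8*((n:ℝ)*Real.sqrt n)) := add_le_add hsum1 habs2
      _ ≤ (σ * (σ+1) * (σ+2) / 5 + (σ+1)/4 + 1/8) / ((n:ℝ) * Real.sqrt n) := by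
          rw [_root_.add_div, _root_.add_div]
          have e1 : (σ+1)/4 / ((n:ℝ)*Real.sqrt n) = (σ+1) * (1/(4*((n:ℝ)*Real.sqrt n))) := by
            field_simp
          have e2 : (1:ℝ)/8 / ((n:ℝ)*Real.sqrt n) = 1/(8*((n:ℝ)*Real.sqrt n)) := by
            field_simp
          rw [e1, e2]
          linarith [h5]
  refine htotal.trans ?_
  rw [div_le_div_iff_of_pos_right hD]
  nlinarith [mul_nonneg hσ0 (sq_nonneg (σ-1)), sq_nonneg (σ - 49/120), hσ0, sq_nonneg σ,
    mul_nonneg hσ0 hσ0]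

end Aux

/-- **Local estimate for binomial tails.**
For `n` large and `|t| ≤ √n / 100`, we have
`P[B(2n,1/2) ≥ n+t] = 1/2 - (t - 1/2)/√(nπ) + E` with `|E| ≤ (2|t|³ + 1)/n^{3/2}`. -/
theorem binomTail_estimate :
    ∃ n₀ : ℕ, ∀ n : ℕ, n₀ ≤ n → ∀ t : ℤ,
      (|t| : ℝ) ≤ Real.sqrt n / 100 →
      |binomTail n t - (1 / 2 - ((t : ℝ) - 1 / 2) / Real.sqrt (n * Real.pi))|
        ≤ (2 * |(t : ℝ)| ^ 3 + 1) / (n : ℝ) ^ ((3 : ℝ) / 2) := by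
  use 1
  intro n hn t ht
  have hn1 : (1:ℝ) ≤ (n:ℝ) := by exact_mod_cast hn
  have hnpos : (0:ℝ) < n := by linarith
  have hD : (0:ℝ) < (n:ℝ) * Real.sqrt n := by positivity
  have hrpow : (n:ℝ) ^ ((3:ℝ)/2) = (n:ℝ) * Real.sqrt n := by
    rw [show (3:ℝ)/2 = 1 + 1/2 by norm_num, Real.rpow_add hnpos, Real.rpow_one,
      ← Real.sqrt_eq_rpow]
  rw [hrpow]
  have key : ∀ u : ℤ, u ≤ 0 → |(u : ℝ)| ≤ Real.sqrt n / 100 →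
      |binomTail n u - (1 / 2 - ((u : ℝ) - 1 / 2) / Real.sqrt (n * Real.pi))|
        ≤ (2 * |(u : ℝ)| ^ 3 + 1) / ((n:ℝ) * Real.sqrt n) := by
    intro u hu hu2
    set s := (-u).toNat with hs_def
    have hst : (s:ℤ) = -u := Int.toNat_of_nonneg (by omega)
    have hcast : (u:ℝ) = -(s:ℝ) := by
      have h := congrArg (Int.cast : ℤ → ℝ) hst
      push_cast at h
      linarith
    have habs : |(u:ℝ)| = (s:ℝ) := by
      rw [hcast, abs_neg, abs_of_nonneg s.cast_nonneg]
    have hs : (s:ℝ) ≤ Real.sqrt n / 100 := by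
      rw [← habs]; exact hu2
    have hmc := main_case n hn s hs
    rw [show (-(s:ℤ)) = u by omega] at hmc
    rw [hcast, show |(-(s:ℝ))| = (s:ℝ) from by rw [abs_neg, abs_of_nonneg s.cast_nonneg]]
    exact hmc
  by_cases hts : t ≤ 0
  · exact key t hts ht
  · push_neg at hts
    set t' : ℤ := 1 - t with ht'_def
    have ht'le : t' ≤ 0 := by omega
    have habsle : |t'| ≤ |t| := by
      rw [abs_of_nonpos ht'le, abs_of_pos hts]; omega
    have hcast3 : |(t':ℝ)| ≤ |(t:ℝ)| := by exact_mod_cast habsle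
    have ht'2 : |(t' : ℝ)| ≤ Real.sqrt n / 100 := hcast3.trans ht
    have hb := key t' ht'le ht'2
    have hsymm := binomTail_symm n t'
    rw [show (1 - t') = t by omega] at hsymm
    have hexp : binomTail n t - (1 / 2 - ((t : ℝ) - 1 / 2) / Real.sqrt (n * Real.pi))
        = -(binomTail n t' - (1 / 2 - ((t' : ℝ) - 1 / 2) / Real.sqrt (n * Real.pi))) := by
      have hbt : binomTail n t = 1 - binomTail n t' := by linarith
      have ht'cast : ((t':ℤ):ℝ) = 1 - (t:ℝ) := by rw [ht'_def]; push_cast; ring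
      rw [hbt, ht'cast]
      ring
    rw [hexp, abs_neg]
    refine hb.trans ?_
    rw [div_le_div_iff_of_pos_right hD]
    have h3 := pow_le_pow_left₀ (abs_nonneg ((t':ℤ):ℝ)) hcast3 3
    linarith
end

section
/- Define f(alpha) = integral from -alpha*sqrt(2)/4 to sqrt(2)/alpha of (1/sqrt(2*pi)) * exp(-t^2/2) dt, for alpha > 0. Then f(alpha) > 1/2 for all alpha > 0. -/
open Real

open Real MeasureTheory Set

/- ### Auxiliary lemmas -/

private lemma nonneg_of_deriv' (g g' : ℝ → ℝ) (hd : ∀ x, HasDerivAt g (g' x) x) (h0 : g 0 = 0)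
    (hd' : ∀ x, 0 ≤ x → 0 ≤ g' x) : ∀ x, 0 ≤ x → 0 ≤ g x := by
  intro x hx
  have hmono : MonotoneOn g (Ici 0) := by
    apply monotoneOn_of_deriv_nonneg (convex_Ici 0)
      (Continuous.continuousOn (by
        have : Differentiable ℝ g := fun y => (hd y).differentiableAt
        exact this.continuous))
      (fun y hy => ((hd y).differentiableAt).differentiableWithinAt)
    intro y hy
    rw [(hd y).deriv]
    exact hd' y (le_of_lt (by simpa using hy))
  calc (0:ℝ) = g 0 := h0.symm
    _ ≤ g x := hmono (by simp) (by simpa using hx) hx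

private lemma exp_neg_le_quad' (x : ℝ) (hx : 0 ≤ x) : exp (-x) ≤ 1 - x + x^2/2 := by
  have h := nonneg_of_deriv' (fun x => 1 - x + x^2/2 - exp (-x)) (fun x => -1 + x + exp (-x))
    (fun y => by
      have h1 : HasDerivAt (fun x : ℝ => exp (-x)) (-exp (-y)) y := by
        have := (hasDerivAt_neg y).exp
        convert this using 1; ring
      have h2 : HasDerivAt (fun x : ℝ => 1 - x + x^2/2) (-1 + y) y := by
        have := ((hasDerivAt_pow 2 y).div_const 2)
        have := ((hasDerivAt_const y (1:ℝ)).sub (hasDerivAt_id y)).add this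
        exact this.congr_deriv (by push_cast; ring)
      exact (h2.sub h1).congr_deriv (by ring))
    (by norm_num)
    (fun y hy => by
      have := Real.add_one_le_exp (-y)
      linarith)
  linarith [h x hx]

private lemma cubic_le_exp_neg' (x : ℝ) (hx : 0 ≤ x) : 1 - x + x^2/2 - x^3/6 ≤ exp (-x) := by
  have h := nonneg_of_deriv' (fun x => exp (-x) - (1 - x + x^2/2 - x^3/6))
    (fun x => -exp (-x) + (1 - x + x^2/2))
    (fun y => by
      have h1 : HasDerivAt (fun x : ℝ => exp (-x)) (-exp (-y)) y := by
        have := (hasDerivAt_neg y).exp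
        convert this using 1; ring
      have h2 : HasDerivAt (fun x : ℝ => 1 - x + x^2/2 - x^3/6) (-1 + y - y^2/2) y := by
        have p2 := (hasDerivAt_pow 2 y).div_const 2
        have p3 := (hasDerivAt_pow 3 y).div_const 6
        have := (((hasDerivAt_const y (1:ℝ)).sub (hasDerivAt_id y)).add p2).sub p3
        exact this.congr_deriv (by push_cast; ring)
      have := h1.sub h2
      exact this.congr_deriv (by ring))
    (by norm_num)
    (fun y hy => by
      have := exp_neg_le_quad' y hy
      linarith)
  linarith [h x hx]

private lemma cont_gauss' : Continuous (fun t : ℝ => exp (-t^2/2)) := by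
  continuity

private lemma integrable_gauss' : Integrable (fun t : ℝ => exp (-t^2/2)) := by
  have := integrable_exp_neg_mul_sq (by norm_num : (0:ℝ) < 1/2)
  refine this.congr ?_
  filter_upwards with x; ring_nf

private lemma poly_le_integral' (a : ℝ) (ha : 0 ≤ a) :
    a - a^3/6 + a^5/40 - a^7/336 ≤ ∫ t in (0:ℝ)..a, exp (-t^2/2) := by
  have hle : ∫ t in (0:ℝ)..a, (1 - t^2/2 + t^4/8 - t^6/48) ≤ ∫ t in (0:ℝ)..a, exp (-t^2/2) := by
    apply intervalIntegral.integral_mono_on ha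
    · apply Continuous.intervalIntegrable; continuity
    · exact cont_gauss'.intervalIntegrable _ _
    · intro t ht
      have h := cubic_le_exp_neg' (t^2/2) (by positivity)
      calc 1 - t^2/2 + t^4/8 - t^6/48 = 1 - t^2/2 + (t^2/2)^2/2 - (t^2/2)^3/6 := by ring
        _ ≤ exp (-(t^2/2)) := h
        _ = exp (-t^2/2) := by rw [neg_div]
  refine le_trans (le_of_eq ?_) hle
  have hD : ∀ t ∈ uIcc (0:ℝ) a,
      HasDerivAt (fun t : ℝ => t - t^3/6 + t^5/40 - t^7/336) (1 - t^2/2 + t^4/8 - t^6/48) t := by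
    intro t _
    have p3 := (hasDerivAt_pow 3 t).div_const 6
    have p5 := (hasDerivAt_pow 5 t).div_const 40
    have p7 := (hasDerivAt_pow 7 t).div_const 336
    have := (((hasDerivAt_id t).sub p3).add p5).sub p7
    exact this.congr_deriv (by push_cast; ring)
  rw [intervalIntegral.integral_eq_sub_of_hasDerivAt hD
    (by apply Continuous.intervalIntegrable; continuity)]
  norm_num

private lemma tail_integral' (b : ℝ) :
    ∫ t in Ioi b, t * exp (-t^2/2) = exp (-b^2/2) := by
  have key := integral_Ioi_of_hasDerivAt_of_tendsto (f := fun t : ℝ => -exp (-t^2/2))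
    (f' := fun t : ℝ => t * exp (-t^2/2)) (a := b) (m := 0)
    ?_ ?_ ?_ ?_
  · rw [key]; simp
  · exact (Continuous.continuousWithinAt (by continuity))
  · intro x hx
    have h1 : HasDerivAt (fun t : ℝ => -t^2/2) (-x) x := by
      have := ((hasDerivAt_pow 2 x).div_const 2).neg
      rw [show (fun t : ℝ => -t^2/2) = -fun t : ℝ => t^2/2 from by funext t; simp only [Pi.neg_apply]; ring]
      exact this.congr_deriv (by push_cast; ring)
    have := (h1.exp).neg
    exact this.congr_deriv (by ring)
  · apply Integrable.integrableOn
    have := integrable_mul_exp_neg_mul_sq (by norm_num : (0:ℝ) < 1/2)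
    refine this.congr ?_
    filter_upwards with x; ring_nf
  · rw [show (0:ℝ) = -0 from by norm_num]
    apply Filter.Tendsto.neg
    have h1 : Filter.Tendsto (fun t : ℝ => -t^2/2) Filter.atTop Filter.atBot := by
      have := (Filter.tendsto_pow_atTop (two_ne_zero) (α := ℝ)).const_mul_atTop_of_neg
        (neg_lt_zero.2 (by norm_num : (0:ℝ) < 1/2))
      refine this.congr (fun t => by ring)
    exact tendsto_exp_atBot.comp h1

private lemma tail_le' (b : ℝ) (hb : 0 < b) :
    ∫ t in Ioi b, exp (-t^2/2) ≤ exp (-b^2/2) / b := by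
  have h1 : ∫ t in Ioi b, exp (-t^2/2) ≤ ∫ t in Ioi b, (t/b) * exp (-t^2/2) := by
    apply setIntegral_mono_on integrable_gauss'.integrableOn
    · have : IntegrableOn (fun t : ℝ => t * exp (-t^2/2)) (Ioi b) := by
        apply Integrable.integrableOn
        have := integrable_mul_exp_neg_mul_sq (by norm_num : (0:ℝ) < 1/2)
        refine this.congr ?_
        filter_upwards with x; ring_nf
      rw [show (fun t : ℝ => (t/b) * exp (-t^2/2)) = fun t : ℝ => (1/b) * (t * exp (-t^2/2)) from
        by funext t; ring]
      exact this.const_mul _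
    · exact measurableSet_Ioi
    · intro t ht
      rw [mem_Ioi] at ht
      have h2 : 1 ≤ t/b := (one_le_div hb).mpr ht.le
      nlinarith [exp_pos (-t^2/2), mul_le_mul_of_nonneg_right h2 (exp_pos (-t^2/2)).le]
  have h2 : ∫ t in Ioi b, (t/b) * exp (-t^2/2) = exp (-b^2/2) / b := by
    rw [show (fun t : ℝ => (t/b) * exp (-t^2/2)) = fun t : ℝ => (1/b) * (t * exp (-t^2/2)) from
      by funext t; ring]
    rw [integral_const_mul, tail_integral' b]
    ring
  linarith

private lemma half_value' : ∫ t in Ioi (0:ℝ), exp (-t^2/2) = Real.sqrt (2*π) / 2 := by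
  have h := integral_gaussian_Ioi (1/2)
  rw [show (fun x : ℝ => exp (-x^2/2)) = fun x : ℝ => exp (-(1/2) * x^2) from
    by funext x; ring_nf]
  rw [h]
  norm_num
  ring

private lemma split' (b : ℝ) (hb : 0 < b) :
    ∫ t in Ioi (0:ℝ), exp (-t^2/2)
      = (∫ t in (0:ℝ)..b, exp (-t^2/2)) + ∫ t in Ioi b, exp (-t^2/2) := by
  rw [intervalIntegral.integral_of_le hb.le]
  rw [← setIntegral_union (Set.Ioc_disjoint_Ioi le_rfl) measurableSet_Ioi
    integrable_gauss'.integrableOn integrable_gauss'.integrableOn,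
    Set.Ioc_union_Ioi_eq_Ioi hb.le]

private lemma S_gt' (u : ℝ) (hu : 0 < u) (h2 : 2 ≤ u^2) (h3 : u ≤ 1.69) :
    1.2534 < 493/384*u - 23/96*u^3 + 17/480*u^5 - u^7/336 := by
  nlinarith [sq_nonneg (u^2 - 2), sq_nonneg (u - 1.5),
    mul_nonneg (sub_nonneg.2 h2) (sub_nonneg.2 h3),
    mul_nonneg (mul_nonneg (sub_nonneg.2 h2) (sub_nonneg.2 h2)) (sub_nonneg.2 h3),
    mul_nonneg (mul_nonneg (sub_nonneg.2 h2) (sub_nonneg.2 h3)) (sub_nonneg.2 h3),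
    mul_pos hu hu, sq_nonneg (u^2 - 2.5)]

private lemma middle_case' (a b : ℝ) (ha : 0 < a) (hb : 0 < b) (hab : a * b = 1/2)
    (ha' : a ≤ 1.3) (hb' : b ≤ 1.3) :
    1.2534 < (a - a^3/6 + a^5/40 - a^7/336) + (b - b^3/6 + b^5/40 - b^7/336) := by
  have hu : 0 < a + b := by linarith
  have h2 : 2 ≤ (a+b)^2 := by nlinarith [sq_nonneg (a-b)]
  have h3 : a + b ≤ 1.69 := by
    have hA : 1/2.6 ≤ a := by
      rw [div_le_iff₀ (by norm_num)]
      nlinarith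
    nlinarith [mul_nonneg (sub_nonneg.2 ha') (sub_nonneg.2 hA)]
  have hid : (a - a^3/6 + a^5/40 - a^7/336) + (b - b^3/6 + b^5/40 - b^7/336)
      = 493/384*(a+b) - 23/96*(a+b)^3 + 17/480*(a+b)^5 - (a+b)^7/336 := by
    have hbeq : b = 1/(2*a) := by
      field_simp
      linarith
    subst hbeq
    field_simp
    ring
  rw [hid]
  exact S_gt' _ hu h2 h3

private lemma tail_num' (b : ℝ) (hb : 1.3 ≤ b) : exp (-b^2/2) < 1/2 - 1/(48*b^2) := by
  have hb0 : (0:ℝ) < b := by linarith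
  have h1 : exp (-b^2/2) ≤ exp (-(169/200)) := by
    apply exp_le_exp.2; nlinarith
  have e3 : exp (169/200 : ℝ) = exp (169/600) * exp (169/600) * exp (169/600) := by
    rw [← Real.exp_add, ← Real.exp_add]; norm_num
  have h4 : (169/600:ℝ) + 1 ≤ exp (169/600) := Real.add_one_le_exp _
  have h5 : (2.105:ℝ) < exp (169/200) := by
    rw [e3]
    nlinarith [Real.exp_pos (169/600 : ℝ)]
  have h6 : exp (-(169/200 : ℝ)) < 1/2.105 := by
    rw [Real.exp_neg]
    rw [inv_lt_comm₀ (Real.exp_pos _) (by norm_num)]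
    calc ((1:ℝ)/2.105)⁻¹ = 2.105 := by norm_num
      _ < exp (169/200) := h5
  have h7 : 1/(48*b^2) ≤ 1/(48*1.69) := by
    apply div_le_div_of_nonneg_left (by norm_num) (by norm_num)
    nlinarith
  calc exp (-b^2/2) ≤ exp (-(169/200:ℝ)) := h1
    _ < 1/2.105 := h6
    _ ≤ 1/2 - 1/(48*1.69) := by norm_num
    _ ≤ 1/2 - 1/(48*b^2) := by linarith

/-- Key: with `a*b = 1/2` and `b ≥ 1.3`, the tail beyond `b` is smaller than `∫_0^a`. -/
private lemma key_tail' (a b : ℝ) (ha : 0 < a) (hb : 0 < b) (hab : a * b = 1/2)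
    (hb13 : 1.3 ≤ b) :
    ∫ t in Ioi b, exp (-t^2/2) < ∫ t in (0:ℝ)..a, exp (-t^2/2) := by
  have haeq : a = 1/(2*b) := by
    field_simp
    linarith
  have ha' : a ≤ 1/2.6 := by
    rw [haeq, div_le_div_iff₀ (by positivity) (by norm_num)]
    linarith
  have h1 : exp (-b^2/2) / b < a - a^3/6 := by
    have hnum := tail_num' b hb13
    have heq2 : a - a^3/6 = (1/2 - 1/(48*b^2))/b := by
      rw [haeq]; field_simp; ring
    rw [heq2]
    gcongr
  have h2 : a - a^3/6 ≤ a - a^3/6 + a^5/40 - a^7/336 := by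
    have haa : a^2 ≤ 1 := by nlinarith
    have h75 : a^7 ≤ a^5 := by
      nlinarith [mul_le_mul_of_nonneg_left haa (pow_pos ha 5).le]
    linarith [pow_pos ha 5]
  calc ∫ t in Ioi b, exp (-t^2/2) ≤ exp (-b^2/2) / b := tail_le' b hb
    _ < a - a^3/6 := h1
    _ ≤ a - a^3/6 + a^5/40 - a^7/336 := h2
    _ ≤ ∫ t in (0:ℝ)..a, exp (-t^2/2) := poly_le_integral' a ha.le

/-- Main inequality on raw integrals. -/
private lemma main_ineq' (a b : ℝ) (ha : 0 < a) (hb : 0 < b) (hab : a * b = 1/2) :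
    Real.sqrt (2*π) / 2 < (∫ t in (0:ℝ)..a, exp (-t^2/2)) + ∫ t in (0:ℝ)..b, exp (-t^2/2) := by
  have symm_case : ∀ a b : ℝ, 0 < a → 0 < b → a * b = 1/2 → 1.3 ≤ b →
      Real.sqrt (2*π) / 2 < (∫ t in (0:ℝ)..a, exp (-t^2/2)) + ∫ t in (0:ℝ)..b, exp (-t^2/2) := by
    intro a b ha hb hab hb13
    have hdecomp : Real.sqrt (2*π) / 2
        = (∫ t in (0:ℝ)..b, exp (-t^2/2)) + ∫ t in Ioi b, exp (-t^2/2) := by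
      rw [← half_value', split' b hb]
    rw [hdecomp]
    have := key_tail' a b ha hb hab hb13
    linarith
  rcases le_or_gt 1.3 b with hb13 | hb13
  · exact symm_case a b ha hb hab hb13
  rcases le_or_gt 1.3 a with ha13 | ha13
  · have := symm_case b a hb ha (by rw [mul_comm]; exact hab) ha13
    linarith
  · -- middle case
    have hP := middle_case' a b ha hb hab ha13.le hb13.le
    have hIa := poly_le_integral' a ha.le
    have hIb := poly_le_integral' b hb.le
    have hs : Real.sqrt (2*π) < 2.5068 := by
      rw [Real.sqrt_lt' (by norm_num : (0:ℝ) < 2.5068)]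
      nlinarith [Real.pi_lt_d6]
    linarith


/-- **The calculus lemma.** For all `α > 0`, the standard normal measure of
`[-α√2/4, √2/α]` exceeds `1/2`:
`∫_{-α√2/4}^{√2/α} (1/√(2π)) e^{-t²/2} dt > 1/2`. -/
theorem gaussian_interval_gt_half (α : ℝ) (hα : 0 < α) :
    (1 : ℝ) / 2 <
      ∫ t in (-(α * Real.sqrt 2 / 4))..(Real.sqrt 2 / α),
        (1 / Real.sqrt (2 * Real.pi)) * Real.exp (-t ^ 2 / 2) := by
  have hs2 : (0:ℝ) < Real.sqrt 2 := Real.sqrt_pos.2 (by norm_num)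
  have hmul : Real.sqrt 2 * Real.sqrt 2 = 2 := Real.mul_self_sqrt (by norm_num)
  set a := α * Real.sqrt 2 / 4 with ha_def
  set b := Real.sqrt 2 / α with hb_def
  have ha : 0 < a := by positivity
  have hb : 0 < b := by positivity
  have hab : a * b = 1/2 := by
    rw [ha_def, hb_def]
    field_simp
    nlinarith
  have h2π : (0:ℝ) < Real.sqrt (2*π) := Real.sqrt_pos.2 (by positivity)
  rw [intervalIntegral.integral_const_mul]
  have hsplit : (∫ t in (-a)..b, exp (-t^2/2))
      = (∫ t in (0:ℝ)..a, exp (-t^2/2)) + ∫ t in (0:ℝ)..b, exp (-t^2/2) := by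
    have hadj : (∫ t in (-a)..(0:ℝ), exp (-t^2/2)) + (∫ t in (0:ℝ)..b, exp (-t^2/2))
        = ∫ t in (-a)..b, exp (-t^2/2) :=
      intervalIntegral.integral_add_adjacent_intervals
        (integrable_gauss'.intervalIntegrable) (integrable_gauss'.intervalIntegrable)
    have heven : (∫ t in (-a)..(0:ℝ), exp (-t^2/2)) = ∫ t in (0:ℝ)..a, exp (-t^2/2) := by
      have := intervalIntegral.integral_comp_neg (a := (0:ℝ)) (b := a)
        (fun t => exp (-t^2/2))
      simp only [neg_zero] at this
      rw [← this]
      congr 1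
      funext t
      ring_nf
    rw [← hadj, heven]
  rw [hsplit]
  have hmain := main_ineq' a b ha hb hab
  have : (1:ℝ)/2 = (1 / Real.sqrt (2*π)) * (Real.sqrt (2*π) / 2) := by
    field_simp
  rw [this]
  apply mul_lt_mul_of_pos_left hmain
  positivity
end
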